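/- arXiv:1704.02961 — 8 statements merged into one kernel-verified Lean document; each statement's English description precedes it below -/
import Mathlib

section
/- Let T > 0 and let s, i : [0,T] → ℝ be smooth nonnegative functions. Let (Ŝ, Î) : J × [0,T] → ℝ² be a smooth solution of system (Ĉ): ∂Ŝ/∂t = Î(μ − β₀Ŝ) − D_S(Ŝ − (x/m)s(t)) and ∂Î/∂t = Î(−μ + β₀Ŝ) − D_I(Î − (x/m)i(t)) on J × [0,T], with Ŝ(x,0) = S₀(x) and Î(x,0) = I₀(x). Then Î(x,t) ≥ 0 and Ŝ(x,t) ≥ 0 for all (x,t) ∈ J × [0,T]. -/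
open Real Set

/-- If `f' = a·f + g` on `[0,T]` with `a` continuous, `g ≥ 0` and `f 0 ≥ 0`,
then `f ≥ 0` on `[0,T]`. -/
lemma nonneg_of_linear_ode (T : ℝ) (hT : (0:ℝ) ≤ T) (f a g : ℝ → ℝ)
    (ha : ContinuousOn a (Icc 0 T))
    (hf : ∀ t ∈ Icc (0:ℝ) T, HasDerivAt f (a t * f t + g t) t)
    (hg : ∀ t ∈ Icc (0:ℝ) T, 0 ≤ g t)
    (h0 : 0 ≤ f 0) : ∀ t ∈ Icc (0:ℝ) T, 0 ≤ f t := by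
  -- extend `a` continuously to all of `ℝ`
  set aE : ℝ → ℝ := Set.IccExtend hT (fun t : Icc (0:ℝ) T => a t) with haE
  have haEc : Continuous aE := by
    apply Continuous.Icc_extend'
    exact continuousOn_iff_continuous_restrict.1 ha
  have haEeq : ∀ t ∈ Icc (0:ℝ) T, aE t = a t := by
    intro t ht
    simp [haE, Set.IccExtend_of_mem hT _ ht]
  -- primitive of `aE`
  set A : ℝ → ℝ := fun t => ∫ u in (0:ℝ)..t, aE u with hA
  have hAderiv : ∀ t : ℝ, HasDerivAt A (aE t) t := by
    intro t
    exact intervalIntegral.integral_hasDerivAt_right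
      (haEc.intervalIntegrable _ _)
      (haEc.stronglyMeasurable.stronglyMeasurableAtFilter)
      haEc.continuousAt
  -- the auxiliary function
  set h : ℝ → ℝ := fun t => Real.exp (-A t) * f t with hh
  have hhderiv : ∀ t ∈ Icc (0:ℝ) T, HasDerivAt h (Real.exp (-A t) * g t) t := by
    intro t ht
    have h1 : HasDerivAt (fun t => Real.exp (-A t)) (Real.exp (-A t) * (-aE t)) t :=
      ((hAderiv t).neg).exp
    have h2 := (h1.mul (hf t ht))
    have : Real.exp (-A t) * (-aE t) * f t +
        Real.exp (-A t) * (a t * f t + g t) = Real.exp (-A t) * g t := by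
      rw [haEeq t ht]; ring
    rw [this] at h2
    exact h2
  have hmono : MonotoneOn h (Icc 0 T) := by
    apply monotoneOn_of_deriv_nonneg (convex_Icc 0 T)
    · intro t ht
      exact (hhderiv t ht).continuousAt.continuousWithinAt
    · intro t ht
      rw [interior_Icc] at ht
      exact ((hhderiv t (Ioo_subset_Icc_self ht)).differentiableAt).differentiableWithinAt
    · intro t ht
      rw [interior_Icc] at ht
      rw [(hhderiv t (Ioo_subset_Icc_self ht)).deriv]
      exact mul_nonneg (Real.exp_nonneg _) (hg t (Ioo_subset_Icc_self ht))
  intro t ht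
  have h00 : h 0 = f 0 := by
    simp [hh, hA]
  have hle : h 0 ≤ h t := hmono (left_mem_Icc.2 hT) ht ht.1
  have : 0 ≤ Real.exp (-A t) * f t := by
    calc (0:ℝ) ≤ f 0 := h0
    _ = h 0 := h00.symm
    _ ≤ h t := hle
  exact nonneg_of_mul_nonneg_right this (Real.exp_pos _)

/-- Lemma 1 (i),(ii): nonnegativity of the solution `(Ŝ, Î)` of system `(Ĉ)`. -/
theorem nonneg_of_solution_hatC
    (xmax m μ β₀ DS DI : ℝ)
    (hxmax : 0 < xmax) (hm : 0 < m) (hμ : 0 < μ) (hβ₀ : 0 < β₀)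
    (hDS : 0 < DS) (hDI : 0 < DI)
    (T : ℝ) (hT : 0 < T)
    (s i : ℝ → ℝ)
    (hs_smooth : ContDiffOn ℝ (⊤ : ℕ∞) s (Icc 0 T)) (hi_smooth : ContDiffOn ℝ (⊤ : ℕ∞) i (Icc 0 T))
    (hs_nonneg : ∀ t ∈ Icc (0:ℝ) T, 0 ≤ s t) (hi_nonneg : ∀ t ∈ Icc (0:ℝ) T, 0 ≤ i t)
    (S₀ I₀ : ℝ → ℝ)
    (hS₀ : ContDiff ℝ 1 S₀) (hI₀ : ContDiff ℝ 1 I₀)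
    (hS₀nonneg : ∀ x ∈ Icc (0:ℝ) xmax, 0 ≤ S₀ x)
    (hI₀nonneg : ∀ x ∈ Icc (0:ℝ) xmax, 0 ≤ I₀ x)
    (hS₀zero : S₀ 0 = 0) (hI₀zero : I₀ 0 = 0)
    (S I : ℝ → ℝ → ℝ)
    (hS_smooth : ContDiffOn ℝ (⊤ : ℕ∞) (Function.uncurry S) (Icc 0 xmax ×ˢ Icc 0 T))
    (hI_smooth : ContDiffOn ℝ (⊤ : ℕ∞) (Function.uncurry I) (Icc 0 xmax ×ˢ Icc 0 T))
    (hSeq : ∀ x ∈ Icc (0:ℝ) xmax, ∀ t ∈ Icc (0:ℝ) T,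
      HasDerivAt (S x) (I x t * (μ - β₀ * S x t) - DS * (S x t - x / m * s t)) t)
    (hIeq : ∀ x ∈ Icc (0:ℝ) xmax, ∀ t ∈ Icc (0:ℝ) T,
      HasDerivAt (I x) (I x t * (-μ + β₀ * S x t) - DI * (I x t - x / m * i t)) t)
    (hSinit : ∀ x ∈ Icc (0:ℝ) xmax, S x 0 = S₀ x)
    (hIinit : ∀ x ∈ Icc (0:ℝ) xmax, I x 0 = I₀ x) :
    ∀ x ∈ Icc (0:ℝ) xmax, ∀ t ∈ Icc (0:ℝ) T, 0 ≤ I x t ∧ 0 ≤ S x t := by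
  intro x hx
  have hxnn : 0 ≤ x / m := div_nonneg hx.1 hm.le
  have h0mem : (0:ℝ) ∈ Icc (0:ℝ) T := left_mem_Icc.2 hT.le
  -- continuity of t ↦ S x t and t ↦ I x t on [0,T]
  have hScont : ContinuousOn (S x) (Icc 0 T) := fun t ht =>
    (hSeq x hx t ht).continuousAt.continuousWithinAt
  have hIcont : ContinuousOn (I x) (Icc 0 T) := fun t ht =>
    (hIeq x hx t ht).continuousAt.continuousWithinAt
  -- Step 1: nonnegativity of I
  have hInn : ∀ t ∈ Icc (0:ℝ) T, 0 ≤ I x t := by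
    apply nonneg_of_linear_ode T hT.le (I x)
      (fun t => -μ + β₀ * S x t - DI) (fun t => DI * (x / m * i t))
    · exact ((continuousOn_const.add (continuousOn_const.mul hScont)).sub continuousOn_const)
    · intro t ht
      have := hIeq x hx t ht
      have heq : I x t * (-μ + β₀ * S x t) - DI * (I x t - x / m * i t)
          = (-μ + β₀ * S x t - DI) * I x t + DI * (x / m * i t) := by ring
      rwa [heq] at this
    · intro t ht
      exact mul_nonneg hDI.le (mul_nonneg hxnn (hi_nonneg t ht))
    · rw [hIinit x hx]
      exact hI₀nonneg x hx
  -- Step 2: nonnegativity of S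
  have hSnn : ∀ t ∈ Icc (0:ℝ) T, 0 ≤ S x t := by
    apply nonneg_of_linear_ode T hT.le (S x)
      (fun t => -(β₀ * I x t) - DS) (fun t => μ * I x t + DS * (x / m * s t))
    · exact ((continuousOn_const.mul hIcont).neg.sub continuousOn_const)
    · intro t ht
      have := hSeq x hx t ht
      have heq : I x t * (μ - β₀ * S x t) - DS * (S x t - x / m * s t)
          = (-(β₀ * I x t) - DS) * S x t + (μ * I x t + DS * (x / m * s t)) := by ring
      rwa [heq] at this
    · intro t ht
      exact add_nonneg (mul_nonneg hμ.le (hInn t ht))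
        (mul_nonneg hDS.le (mul_nonneg hxnn (hs_nonneg t ht)))
    · rw [hSinit x hx]
      exact hS₀nonneg x hx
  exact fun t ht => ⟨hInn t ht, hSnn t ht⟩
end

section
/- Assume D_I = D_S. Let T > 0 and let s, i : [0,T] → ℝ be smooth nonnegative functions satisfying s(t) + i(t) = n₀ for all t ∈ [0,T], where n₀ = ⟨S₀⟩ + ⟨I₀⟩. Let (Ŝ, Î) be the smooth solution of system (Ĉ): ∂Ŝ/∂t = Î(μ − β₀Ŝ) − D_S(Ŝ − (x/m)s(t)) and ∂Î/∂t = Î(−μ + β₀Ŝ) − D_I(Î − (x/m)i(t)) on J × [0,T] with initial data (S₀, I₀). Define n̂(t) = ⟨Ŝ(·,t)⟩ + ⟨Î(·,t)⟩. Then n̂(t) = n₀ for all t ∈ [0,T]. -/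
open Real Set

/-- Lemma 2 (`nochapeau`): if `D_I = D_S` and `s(t) + i(t) = n₀` on `[0,T]`,
then the mean total population `n̂(t) = ⟨Ŝ(·,t)⟩ + ⟨Î(·,t)⟩` of the solution of
system `(Ĉ)` stays equal to `n₀`. -/
theorem mean_total_population_constant
    (xmax m μ β₀ DS DI : ℝ) (p : ℝ → ℝ)
    (hxmax : 0 < xmax) (hm : 0 < m) (hμ : 0 < μ) (hβ₀ : 0 < β₀)
    (hDS : 0 < DS) (hDI : 0 < DI)
    (hD : DI = DS)
    (hp_nonneg : ∀ x ∈ Icc (0:ℝ) xmax, 0 ≤ p x) (hp0 : p 0 = 0)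
    (hp_int : ∫ x in (0:ℝ)..xmax, p x = 1)
    (hm_def : m = ∫ x in (0:ℝ)..xmax, x * p x)
    (T : ℝ) (hT : 0 < T)
    (S₀ I₀ : ℝ → ℝ)
    (hS₀ : ContDiff ℝ 1 S₀) (hI₀ : ContDiff ℝ 1 I₀)
    (hS₀nonneg : ∀ x ∈ Icc (0:ℝ) xmax, 0 ≤ S₀ x)
    (hI₀nonneg : ∀ x ∈ Icc (0:ℝ) xmax, 0 ≤ I₀ x)
    (hS₀zero : S₀ 0 = 0) (hI₀zero : I₀ 0 = 0)
    (n₀ : ℝ)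
    (hn₀ : n₀ = (∫ x in (0:ℝ)..xmax, S₀ x * p x) + ∫ x in (0:ℝ)..xmax, I₀ x * p x)
    (s i : ℝ → ℝ)
    (hs_smooth : ContDiffOn ℝ (⊤ : ℕ∞) s (Icc 0 T)) (hi_smooth : ContDiffOn ℝ (⊤ : ℕ∞) i (Icc 0 T))
    (hs_nonneg : ∀ t ∈ Icc (0:ℝ) T, 0 ≤ s t) (hi_nonneg : ∀ t ∈ Icc (0:ℝ) T, 0 ≤ i t)
    (hsum : ∀ t ∈ Icc (0:ℝ) T, s t + i t = n₀)
    (S I : ℝ → ℝ → ℝ)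
    (hS_smooth : ContDiffOn ℝ (⊤ : ℕ∞) (Function.uncurry S) (Icc 0 xmax ×ˢ Icc 0 T))
    (hI_smooth : ContDiffOn ℝ (⊤ : ℕ∞) (Function.uncurry I) (Icc 0 xmax ×ˢ Icc 0 T))
    (hSeq : ∀ x ∈ Icc (0:ℝ) xmax, ∀ t ∈ Icc (0:ℝ) T,
      HasDerivAt (S x) (I x t * (μ - β₀ * S x t) - DS * (S x t - x / m * s t)) t)
    (hIeq : ∀ x ∈ Icc (0:ℝ) xmax, ∀ t ∈ Icc (0:ℝ) T,
      HasDerivAt (I x) (I x t * (-μ + β₀ * S x t) - DI * (I x t - x / m * i t)) t)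
    (hSinit : ∀ x ∈ Icc (0:ℝ) xmax, S x 0 = S₀ x)
    (hIinit : ∀ x ∈ Icc (0:ℝ) xmax, I x 0 = I₀ x) :
    ∀ t ∈ Icc (0:ℝ) T,
      (∫ x in (0:ℝ)..xmax, S x t * p x) + (∫ x in (0:ℝ)..xmax, I x t * p x) = n₀ := by
  -- p and x*p are interval integrable
  have hp_ii : IntervalIntegrable p MeasureTheory.volume 0 xmax := by
    by_contra h
    rw [intervalIntegral.integral_undef h] at hp_int
    norm_num at hp_int
  have hxp_ii : IntervalIntegrable (fun x => x * p x) MeasureTheory.volume 0 xmax := by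
    by_contra h
    rw [intervalIntegral.integral_undef h] at hm_def
    exact absurd hm_def hm.ne'
  have huIcc : Set.uIcc (0:ℝ) xmax = Icc 0 xmax := uIcc_of_le hxmax.le
  intro t ht
  obtain ⟨ht0, htT⟩ := ht
  -- pointwise formula for S x t + I x t
  have key : ∀ x ∈ Icc (0:ℝ) xmax,
      S x t + I x t = Real.exp (-(DS * t)) * (S₀ x + I₀ x)
        + (n₀ * (1 - Real.exp (-(DS * t))) / m) * x := by
    intro x hx
    -- derivative of u(τ) = S+I - (x/m) n₀
    have hu : ∀ τ ∈ Icc (0:ℝ) T,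
        HasDerivAt (fun τ => S x τ + I x τ)
          (-DS * (S x τ + I x τ - x / m * n₀)) τ := by
      intro τ hτ
      have h := (hSeq x hx τ hτ).add (hIeq x hx τ hτ)
      refine h.congr_deriv ?_
      rw [hD]
      have h2 := hsum τ hτ
      linear_combination ((DS * x) / m) * h2
    -- φ(τ) = (S+I - (x/m)n₀) * exp (DS τ) has zero derivative
    set φ : ℝ → ℝ := fun τ => (S x τ + I x τ - x / m * n₀) * Real.exp (DS * τ) with hφdef
    have hφ : ∀ τ ∈ Icc (0:ℝ) T, HasDerivAt φ 0 τ := by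
      intro τ hτ
      have he : HasDerivAt (fun τ => Real.exp (DS * τ)) (DS * Real.exp (DS * τ)) τ := by
        have := ((hasDerivAt_id τ).const_mul DS).exp
        simpa [mul_comm] using this
      have := ((hu τ hτ).sub_const (x / m * n₀)).mul he
      refine this.congr_deriv ?_
      ring
    have hconst := constant_of_has_deriv_right_zero
      (f := φ) (a := 0) (b := t)
      (fun τ hτ => ((hφ τ ⟨hτ.1, hτ.2.trans htT⟩).continuousAt).continuousWithinAt)
      (fun τ hτ => ((hφ τ ⟨hτ.1, hτ.2.le.trans htT⟩).hasDerivWithinAt))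
    have h0 := hconst t ⟨ht0, le_refl t⟩
    have hφ0 : φ 0 = S₀ x + I₀ x - x / m * n₀ := by
      simp [hφdef, hSinit x hx, hIinit x hx]
    rw [hφ0] at h0
    have hE : Real.exp (DS * t) ≠ 0 := (Real.exp_pos _).ne'
    have h1 : S x t + I x t - x / m * n₀
        = (S₀ x + I₀ x - x / m * n₀) * Real.exp (-(DS * t)) := by
      rw [Real.exp_neg, eq_mul_inv_iff_mul_eq₀ hE]
      exact h0
    linear_combination h1
  -- continuity of x ↦ S x t and x ↦ I x t on Icc
  have hmapsTo : MapsTo (fun x => (x, t)) (Icc (0:ℝ) xmax) (Icc (0:ℝ) xmax ×ˢ Icc (0:ℝ) T) :=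
    fun x hx => ⟨hx, ht0, htT⟩
  have hScont : ContinuousOn (fun x => S x t) (Icc (0:ℝ) xmax) := by
    have := hS_smooth.continuousOn.comp
      (Continuous.continuousOn (continuous_id.prodMk continuous_const)) hmapsTo
    simpa [Function.uncurry, Function.comp_def] using this
  have hIcont : ContinuousOn (fun x => I x t) (Icc (0:ℝ) xmax) := by
    have := hI_smooth.continuousOn.comp
      (Continuous.continuousOn (continuous_id.prodMk continuous_const)) hmapsTo
    simpa [Function.uncurry, Function.comp_def] using this
  have hSp_ii : IntervalIntegrable (fun x => S x t * p x) MeasureTheory.volume 0 xmax :=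
    hp_ii.continuousOn_mul (hScont.mono huIcc.subset)
  have hIp_ii : IntervalIntegrable (fun x => I x t * p x) MeasureTheory.volume 0 xmax :=
    hp_ii.continuousOn_mul (hIcont.mono huIcc.subset)
  rw [← intervalIntegral.integral_add hSp_ii hIp_ii]
  have hcongr : ∫ x in (0:ℝ)..xmax, (S x t * p x + I x t * p x)
      = ∫ x in (0:ℝ)..xmax,
        (Real.exp (-(DS * t)) * (S₀ x * p x) + Real.exp (-(DS * t)) * (I₀ x * p x)
          + (n₀ * (1 - Real.exp (-(DS * t))) / m) * (x * p x)) := by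
    apply intervalIntegral.integral_congr
    intro x hx
    rw [huIcc] at hx
    have hk := key x hx
    simp only
    linear_combination (p x) * hk
  rw [hcongr]
  have hS₀p_ii : IntervalIntegrable (fun x => S₀ x * p x) MeasureTheory.volume 0 xmax :=
    hp_ii.continuousOn_mul (hS₀.continuous.continuousOn)
  have hI₀p_ii : IntervalIntegrable (fun x => I₀ x * p x) MeasureTheory.volume 0 xmax :=
    hp_ii.continuousOn_mul (hI₀.continuous.continuousOn)
  rw [intervalIntegral.integral_add (((hS₀p_ii.const_mul _).add (hI₀p_ii.const_mul _)))
      (hxp_ii.const_mul _),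
    intervalIntegral.integral_add (hS₀p_ii.const_mul _) (hI₀p_ii.const_mul _),
    intervalIntegral.integral_const_mul, intervalIntegral.integral_const_mul,
    intervalIntegral.integral_const_mul, ← hm_def,
    div_mul_cancel₀ _ hm.ne']
  linear_combination (-Real.exp (-(DS*t))) * hn₀
end

section
/- Assume D_I = D_S. Let T > 0, and for j = 1, 2 let i_j : [0,T] → ℝ be continuous functions with 0 ≤ i_j(t) ≤ n₀, and set s_j(t) = n₀ − i_j(t). Let (Ŝ_j, Î_j) solve system (Ĉ) with data (s_j, i_j): ∂Ŝ_j/∂t = Î_j(μ − β₀Ŝ_j) − D_S(Ŝ_j − (x/m)s_j(t)), ∂Î_j/∂t = Î_j(−μ + β₀Ŝ_j) − D_I(Î_j − (x/m)i_j(t)), with the same initial data (S₀, I₀), where additionally 0 ≤ Î_j ≤ N̂_j := Ŝ_j + Î_j on J × [0,T]. Let C(x) = β₀(N(x,0) + n₀x/m) + μ + D_I with N(x,0) = S₀(x) + I₀(x), let λ > max_{x ∈ J} C(x), and define ‖f‖_λ = sup_{t ∈ [0,T]} e^{−λt}|f(t)|. Then the function y = Î₂ − Î₁ satisfies, for all (x,t)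 ∈ J × [0,T], |y(x,t)| ≤ D_I (x/m) ‖i₂ − i₁‖_λ (e^{λt} − e^{C(x)t})/(λ − C(x)). -/
/-!
The total populations `N̂_j = Ŝ_j + Î_j` both solve the relaxation equation
`N' = -D (N - (x/m) n₀)` with the same initial value, so they coincide and stay below
`N(x,0) + n₀ x/m`. Substituting `Ŝ₁ = Ŝ₂ + y` into the `Î`-equations turns them into the linear
equation `y' = (β₀ (Ŝ₂ - Î₁) - μ - D) y + D (x/m) (i₂ - i₁)`, whose coefficient is bounded by
`C(x)` and whose forcing is bounded by `D (x/m) ‖i₂ - i₁‖_λ e^{λt}`. Comparing `|y|` with the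
solution `φ` of `φ' = C φ + e^{λt}`, `φ(0) = 0`, gives the estimate.
-/

open Real Set Filter Topology

lemma hasDerivAt_exp_const_mul (c t : ℝ) :
    HasDerivAt (fun u => exp (c * u)) (c * exp (c * t)) t := by
  simpa [mul_comm] using ((hasDerivAt_id t).const_mul c).exp

lemma hasDerivAt_exp_sub_exp_div {C lam : ℝ} (hClam : C ≠ lam) (t : ℝ) :
    HasDerivAt (fun u => (exp (lam * u) - exp (C * u)) / (lam - C))
      (C * ((exp (lam * t) - exp (C * t)) / (lam - C)) + exp (lam * t)) t := by
  refine (((hasDerivAt_exp_const_mul lam t).sub (hasDerivAt_exp_const_mul C t)).div_const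
    (lam - C)).congr_deriv ?_
  field_simp [sub_ne_zero.2 hClam.symm]
  ring

section Relaxation

variable {T D c : ℝ} {f : ℝ → ℝ}

lemma eq_add_mul_exp_of_hasDerivAt_relaxation
    (hf : ∀ t ∈ Icc 0 T, HasDerivAt f (-D * (f t - c)) t) :
    ∀ t ∈ Icc 0 T, f t = c + (f 0 - c) * exp (-(D * t)) := by
  let g : ℝ → ℝ := fun t => (f t - c) * exp (D * t)
  have hg : ∀ t ∈ Icc 0 T, HasDerivAt g 0 t := fun t ht =>
    (((hf t ht).sub_const c).mul (hasDerivAt_exp_const_mul D t)).congr_deriv (by ring)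
  have hg_const := constant_of_has_deriv_right_zero
    (fun t ht => (hg t ht).continuousAt.continuousWithinAt)
    (fun t ht => (hg t (Ico_subset_Icc_self ht)).hasDerivWithinAt)
  intro t ht
  have h := hg_const t ht
  simp only [g, mul_zero, exp_zero, mul_one] at h
  rw [exp_neg, ← h]
  field_simp
  ring

lemma le_add_of_hasDerivAt_relaxation (hD : 0 ≤ D) (hc : 0 ≤ c) (hf0 : 0 ≤ f 0)
    (hf : ∀ t ∈ Icc 0 T, HasDerivAt f (-D * (f t - c)) t) :
    ∀ t ∈ Icc 0 T, f t ≤ f 0 + c := by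
  intro t ht
  have he_pos : 0 < exp (-(D * t)) := exp_pos _
  have he_le : exp (-(D * t)) ≤ 1 := exp_le_one_iff.2 (neg_nonpos.2 (mul_nonneg hD ht.1))
  rw [eq_add_mul_exp_of_hasDerivAt_relaxation hf t ht]
  nlinarith

end Relaxation

/-- The norm `‖g‖_λ` of the contraction argument, taken over `K = [0, T]` there. -/
noncomputable def expWeightedSup (lam : ℝ) (K : Set ℝ) (g : ℝ → ℝ) : ℝ :=
  ⨆ τ : K, exp (-lam * τ) * |g τ|

lemma abs_le_expWeightedSup_mul_exp {lam : ℝ} {K : Set ℝ} {g : ℝ → ℝ} (hK : IsCompact K)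
    (hg : ContinuousOn g K) {s : ℝ} (hs : s ∈ K) :
    |g s| ≤ expWeightedSup lam K g * exp (lam * s) := by
  have hbdd : BddAbove (range fun τ : K => exp (-lam * τ) * |g τ|) := by
    refine (hK.bddAbove_image ((continuous_exp.comp (continuous_const_mul (-lam))).continuousOn.mul
      hg.abs)).mono ?_
    rintro _ ⟨τ, rfl⟩
    exact ⟨τ, τ.2, rfl⟩
  calc |g s| = exp (-lam * s) * |g s| * exp (lam * s) := by
        rw [mul_right_comm, ← exp_add, neg_mul, neg_add_cancel, exp_zero, one_mul]
    _ ≤ expWeightedSup lam K g * exp (lam * s) :=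
        mul_le_mul_of_nonneg_right (le_ciSup hbdd ⟨s, hs⟩) (exp_pos _).le

/-- Comparison with the solution of `φ' = C φ + e^{λt}`, `φ 0 = 0`. -/
theorem norm_le_of_norm_deriv_le_mul_add_exp {E : Type*} [NormedAddCommGroup E]
    [NormedSpace ℝ E] {f f' : ℝ → E} {C lam k T : ℝ} (hClam : C < lam)
    (hf : ∀ t ∈ Icc 0 T, HasDerivAt f (f' t) t) (hf0 : f 0 = 0)
    (hbound : ∀ t ∈ Icc 0 T, ‖f' t‖ ≤ C * ‖f t‖ + k * exp (lam * t)) :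
    ∀ t ∈ Icc 0 T, ‖f t‖ ≤ k * ((exp (lam * t) - exp (C * t)) / (lam - C)) := by
  intro t ht
  set φ : ℝ → ℝ := fun u => (exp (lam * u) - exp (C * u)) / (lam - C)
  -- The comparison principle needs strict inequality at contact points, hence `k + ε`.
  have hε : ∀ ε > 0, ‖f t‖ ≤ (k + ε) * φ t := by
    intro ε hε
    refine image_norm_le_of_norm_deriv_right_lt_deriv_boundary
      (fun s hs => (hf s hs).continuousAt.continuousWithinAt)
      (fun s hs => (hf s (Ico_subset_Icc_self hs)).hasDerivWithinAt)
      (B := fun u => (k + ε) * φ u) (by simp [hf0, φ])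
      (fun u => ((hasDerivAt_exp_sub_exp_div hClam.ne u).const_mul (k + ε)))
      (fun s hs hcontact => ?_) ht
    calc ‖f' s‖ ≤ C * ((k + ε) * φ s) + k * exp (lam * s) := by
          rw [← hcontact]; exact hbound s (Ico_subset_Icc_self hs)
      _ < (k + ε) * (C * φ s + exp (lam * s)) := by
          nlinarith [mul_pos hε (exp_pos (lam * s))]
  have hlim : Tendsto (fun ε => (k + ε) * φ t) (𝓝[>] 0) (𝓝 (k * φ t)) := by
    have : Tendsto (fun ε => (k + ε) * φ t) (𝓝 0) (𝓝 ((k + 0) * φ t)) :=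
      ((continuous_const.add continuous_id).mul continuous_const).tendsto 0
    simpa using this.mono_left nhdsWithin_le_nhds
  exact ge_of_tendsto hlim (eventually_nhdsWithin_of_forall hε)

theorem norm_le_of_hasDerivAt_linear {E : Type*} [NormedAddCommGroup E] [NormedSpace ℝ E]
    {f g : ℝ → E} {A : ℝ → ℝ} {C lam k T : ℝ} (hClam : C < lam)
    (hf : ∀ t ∈ Icc 0 T, HasDerivAt f (A t • f t + g t) t) (hf0 : f 0 = 0)
    (hA : ∀ t ∈ Icc 0 T, |A t| ≤ C) (hg : ∀ t ∈ Icc 0 T, ‖g t‖ ≤ k * exp (lam * t)) :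
    ∀ t ∈ Icc 0 T, ‖f t‖ ≤ k * ((exp (lam * t) - exp (C * t)) / (lam - C)) :=
  norm_le_of_norm_deriv_le_mul_add_exp hClam hf hf0 fun t ht =>
    calc ‖A t • f t + g t‖ ≤ |A t| * ‖f t‖ + ‖g t‖ := by
          grw [norm_add_le, norm_smul, Real.norm_eq_abs]
      _ ≤ C * ‖f t‖ + k * exp (lam * t) :=
          add_le_add (mul_le_mul_of_nonneg_right (hA t ht) (norm_nonneg _)) (hg t ht)

section SIModel

variable {μ β₀ D a n₀ T : ℝ} {i i₁ i₂ S I S₁ I₁ S₂ I₂ : ℝ → ℝ}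

lemma hasDerivAt_susceptible_add_infected
    (hS : ∀ t ∈ Icc 0 T, HasDerivAt S (I t * (μ - β₀ * S t) - D * (S t - a * (n₀ - i t))) t)
    (hI : ∀ t ∈ Icc 0 T, HasDerivAt I (I t * (-μ + β₀ * S t) - D * (I t - a * i t)) t) :
    ∀ t ∈ Icc 0 T, HasDerivAt (fun u => S u + I u) (-D * ((S t + I t) - a * n₀)) t :=
  fun t ht => ((hS t ht).add (hI t ht)).congr_deriv (by ring)

-- `Ŝ₁ Î₁ - Ŝ₂ Î₂ = (Î₁ - Ŝ₂) y` once `Ŝ₁ = Ŝ₂ + y`, which makes the difference equation linear.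
lemma hasDerivAt_infected_sub {t : ℝ}
    (hI₁ : HasDerivAt I₁ (I₁ t * (-μ + β₀ * S₁ t) - D * (I₁ t - a * i₁ t)) t)
    (hI₂ : HasDerivAt I₂ (I₂ t * (-μ + β₀ * S₂ t) - D * (I₂ t - a * i₂ t)) t)
    (hN : S₂ t + I₂ t = S₁ t + I₁ t) :
    HasDerivAt (fun u => I₂ u - I₁ u)
      ((-μ - D + β₀ * (S₂ t - I₁ t)) * (I₂ t - I₁ t) + D * a * (i₂ t - i₁ t)) t :=
  (hI₂.sub hI₁).congr_deriv (by linear_combination (β₀ * I₁ t) * hN)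

end SIModel

lemma abs_neg_sub_add_mul_sub_le {μ D β₀ M s u : ℝ} (hμ : 0 ≤ μ) (hD : 0 ≤ D) (hβ₀ : 0 ≤ β₀)
    (hs : s ∈ Icc 0 M) (hu : u ∈ Icc 0 M) :
    |-μ - D + β₀ * (s - u)| ≤ β₀ * M + μ + D := by
  have hsu : |s - u| ≤ M := abs_sub_le_of_nonneg_of_le hs.1 hs.2 hu.1 hu.2
  calc |-μ - D + β₀ * (s - u)| ≤ |-μ - D| + |β₀ * (s - u)| := abs_add_le _ _
    _ ≤ β₀ * M + μ + D := by
      rw [abs_mul, abs_of_nonneg hβ₀, abs_of_nonpos (by linarith)]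
      nlinarith

theorem pointwise_contraction_estimate_general
    (xmax m μ β₀ DS DI : ℝ)
    (hm : 0 < m) (hμ : 0 < μ) (hβ₀ : 0 < β₀)
    (hDI : 0 < DI)
    (hD : DI = DS)
    (T : ℝ)
    (S₀ I₀ : ℝ → ℝ)
    (hS₀nonneg : ∀ x ∈ Icc (0:ℝ) xmax, 0 ≤ S₀ x)
    (hI₀nonneg : ∀ x ∈ Icc (0:ℝ) xmax, 0 ≤ I₀ x)
    (n₀ : ℝ) (hn₀pos : 0 < n₀)
    (i₁ i₂ : ℝ → ℝ)
    (hi₁cont : ContinuousOn i₁ (Icc 0 T)) (hi₂cont : ContinuousOn i₂ (Icc 0 T))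
    (S₁ I₁ S₂ I₂ : ℝ → ℝ → ℝ)
    (hS₁eq : ∀ x ∈ Icc (0:ℝ) xmax, ∀ t ∈ Icc (0:ℝ) T,
      HasDerivAt (S₁ x) (I₁ x t * (μ - β₀ * S₁ x t) - DS * (S₁ x t - x / m * (n₀ - i₁ t))) t)
    (hI₁eq : ∀ x ∈ Icc (0:ℝ) xmax, ∀ t ∈ Icc (0:ℝ) T,
      HasDerivAt (I₁ x) (I₁ x t * (-μ + β₀ * S₁ x t) - DI * (I₁ x t - x / m * i₁ t)) t)
    (hS₂eq : ∀ x ∈ Icc (0:ℝ) xmax, ∀ t ∈ Icc (0:ℝ) T,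
      HasDerivAt (S₂ x) (I₂ x t * (μ - β₀ * S₂ x t) - DS * (S₂ x t - x / m * (n₀ - i₂ t))) t)
    (hI₂eq : ∀ x ∈ Icc (0:ℝ) xmax, ∀ t ∈ Icc (0:ℝ) T,
      HasDerivAt (I₂ x) (I₂ x t * (-μ + β₀ * S₂ x t) - DI * (I₂ x t - x / m * i₂ t)) t)
    (hS₁init : ∀ x ∈ Icc (0:ℝ) xmax, S₁ x 0 = S₀ x)
    (hI₁init : ∀ x ∈ Icc (0:ℝ) xmax, I₁ x 0 = I₀ x)
    (hS₂init : ∀ x ∈ Icc (0:ℝ) xmax, S₂ x 0 = S₀ x)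
    (hI₂init : ∀ x ∈ Icc (0:ℝ) xmax, I₂ x 0 = I₀ x)
    (hI₁bd : ∀ x ∈ Icc (0:ℝ) xmax, ∀ t ∈ Icc (0:ℝ) T,
      0 ≤ I₁ x t ∧ I₁ x t ≤ S₁ x t + I₁ x t)
    (hI₂bd : ∀ x ∈ Icc (0:ℝ) xmax, ∀ t ∈ Icc (0:ℝ) T,
      0 ≤ I₂ x t ∧ I₂ x t ≤ S₂ x t + I₂ x t)
    (Cfn : ℝ → ℝ)
    (hCfn : ∀ x, Cfn x = β₀ * (S₀ x + I₀ x + n₀ * x / m) + μ + DI)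
    (lam : ℝ) (hlam : ∀ x ∈ Icc (0:ℝ) xmax, Cfn x < lam) :
    ∀ x ∈ Icc (0:ℝ) xmax, ∀ t ∈ Icc (0:ℝ) T,
      |I₂ x t - I₁ x t| ≤
        DI * (x / m) * (⨆ τ : Icc (0:ℝ) T, Real.exp (-lam * τ) * |i₂ τ - i₁ τ|) *
          ((Real.exp (lam * t) - Real.exp (Cfn x * t)) / (lam - Cfn x)) := by
  subst hD
  intro x hx t ht
  have ha : 0 ≤ x / m := div_nonneg hx.1 hm.le
  have hN₁ := hasDerivAt_susceptible_add_infected (hS₁eq x hx) (hI₁eq x hx)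
  have hN₂ := hasDerivAt_susceptible_add_infected (hS₂eq x hx) (hI₂eq x hx)
  have hN_eq : ∀ s ∈ Icc 0 T, S₂ x s + I₂ x s = S₁ x s + I₁ x s := fun s hs => by
    rw [eq_add_mul_exp_of_hasDerivAt_relaxation hN₂ s hs,
      eq_add_mul_exp_of_hasDerivAt_relaxation hN₁ s hs,
      hS₁init x hx, hI₁init x hx, hS₂init x hx, hI₂init x hx]
  have hN_le : ∀ s ∈ Icc 0 T, S₂ x s + I₂ x s ≤ S₀ x + I₀ x + x / m * n₀ := by
    have hN₀ : 0 ≤ S₂ x 0 + I₂ x 0 := by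
      rw [hS₂init x hx, hI₂init x hx]; exact add_nonneg (hS₀nonneg x hx) (hI₀nonneg x hx)
    simpa only [hS₂init x hx, hI₂init x hx] using
      le_add_of_hasDerivAt_relaxation hDI.le (mul_nonneg ha hn₀pos.le) hN₀ hN₂
  have hDa : 0 ≤ DI * (x / m) := mul_nonneg hDI.le ha
  refine norm_le_of_hasDerivAt_linear (hlam x hx)
    (fun s hs => hasDerivAt_infected_sub (hI₁eq x hx s hs) (hI₂eq x hx s hs) (hN_eq s hs))
    (by simp [hI₁init x hx, hI₂init x hx]) (fun s hs => ?_) (fun s hs => ?_) t ht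
  · obtain ⟨hI₂nonneg, hI₂le⟩ := hI₂bd x hx s hs
    obtain ⟨hI₁nonneg, hI₁le⟩ := hI₁bd x hx s hs
    rw [hCfn, mul_div_assoc, mul_comm n₀]
    exact abs_neg_sub_add_mul_sub_le hμ.le hDI.le hβ₀.le
      ⟨by linarith, by linarith [hN_le s hs]⟩ ⟨hI₁nonneg, by linarith [hN_le s hs, hN_eq s hs]⟩
  · rw [norm_mul, Real.norm_of_nonneg hDa, Real.norm_eq_abs, mul_assoc (DI * (x / m))]
    exact mul_le_mul_of_nonneg_left
      (abs_le_expWeightedSup_mul_exp (lam := lam) isCompact_Icc (hi₂cont.sub hi₁cont) hs) hDa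

/-- Pointwise estimate on `y = Î₂ - Î₁` in the contraction argument (case `D_I = D_S`):
`|y(x,t)| ≤ D_I (x/m) ‖i₂ - i₁‖_λ (e^{λt} - e^{C(x)t})/(λ - C(x))`, where
`C(x) = β₀(N(x,0) + n₀ x/m) + μ + D_I` and `‖f‖_λ = sup_{t∈[0,T]} e^{-λt}|f(t)|`. -/
theorem pointwise_contraction_estimate
    (xmax m μ β₀ DS DI : ℝ) (p : ℝ → ℝ)
    (hxmax : 0 < xmax) (hm : 0 < m) (hμ : 0 < μ) (hβ₀ : 0 < β₀)
    (hDS : 0 < DS) (hDI : 0 < DI)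
    (hD : DI = DS)
    (hp_nonneg : ∀ x ∈ Icc (0:ℝ) xmax, 0 ≤ p x) (hp0 : p 0 = 0)
    (hp_int : ∫ x in (0:ℝ)..xmax, p x = 1)
    (hm_def : m = ∫ x in (0:ℝ)..xmax, x * p x)
    (T : ℝ) (hT : 0 < T)
    (S₀ I₀ : ℝ → ℝ)
    (hS₀ : ContDiff ℝ 1 S₀) (hI₀ : ContDiff ℝ 1 I₀)
    (hS₀nonneg : ∀ x ∈ Icc (0:ℝ) xmax, 0 ≤ S₀ x)
    (hI₀nonneg : ∀ x ∈ Icc (0:ℝ) xmax, 0 ≤ I₀ x)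
    (hS₀zero : S₀ 0 = 0) (hI₀zero : I₀ 0 = 0)
    (n₀ : ℝ) (hn₀pos : 0 < n₀)
    (hn₀ : n₀ = (∫ x in (0:ℝ)..xmax, S₀ x * p x) + ∫ x in (0:ℝ)..xmax, I₀ x * p x)
    (i₁ i₂ : ℝ → ℝ)
    (hi₁cont : ContinuousOn i₁ (Icc 0 T)) (hi₂cont : ContinuousOn i₂ (Icc 0 T))
    (hi₁bd : ∀ t ∈ Icc (0:ℝ) T, 0 ≤ i₁ t ∧ i₁ t ≤ n₀)
    (hi₂bd : ∀ t ∈ Icc (0:ℝ) T, 0 ≤ i₂ t ∧ i₂ t ≤ n₀)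
    (S₁ I₁ S₂ I₂ : ℝ → ℝ → ℝ)
    (hS₁eq : ∀ x ∈ Icc (0:ℝ) xmax, ∀ t ∈ Icc (0:ℝ) T,
      HasDerivAt (S₁ x) (I₁ x t * (μ - β₀ * S₁ x t) - DS * (S₁ x t - x / m * (n₀ - i₁ t))) t)
    (hI₁eq : ∀ x ∈ Icc (0:ℝ) xmax, ∀ t ∈ Icc (0:ℝ) T,
      HasDerivAt (I₁ x) (I₁ x t * (-μ + β₀ * S₁ x t) - DI * (I₁ x t - x / m * i₁ t)) t)
    (hS₂eq : ∀ x ∈ Icc (0:ℝ) xmax, ∀ t ∈ Icc (0:ℝ) T,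
      HasDerivAt (S₂ x) (I₂ x t * (μ - β₀ * S₂ x t) - DS * (S₂ x t - x / m * (n₀ - i₂ t))) t)
    (hI₂eq : ∀ x ∈ Icc (0:ℝ) xmax, ∀ t ∈ Icc (0:ℝ) T,
      HasDerivAt (I₂ x) (I₂ x t * (-μ + β₀ * S₂ x t) - DI * (I₂ x t - x / m * i₂ t)) t)
    (hS₁init : ∀ x ∈ Icc (0:ℝ) xmax, S₁ x 0 = S₀ x)
    (hI₁init : ∀ x ∈ Icc (0:ℝ) xmax, I₁ x 0 = I₀ x)
    (hS₂init : ∀ x ∈ Icc (0:ℝ) xmax, S₂ x 0 = S₀ x)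
    (hI₂init : ∀ x ∈ Icc (0:ℝ) xmax, I₂ x 0 = I₀ x)
    (hI₁bd : ∀ x ∈ Icc (0:ℝ) xmax, ∀ t ∈ Icc (0:ℝ) T,
      0 ≤ I₁ x t ∧ I₁ x t ≤ S₁ x t + I₁ x t)
    (hI₂bd : ∀ x ∈ Icc (0:ℝ) xmax, ∀ t ∈ Icc (0:ℝ) T,
      0 ≤ I₂ x t ∧ I₂ x t ≤ S₂ x t + I₂ x t)
    (Cfn : ℝ → ℝ)
    (hCfn : ∀ x, Cfn x = β₀ * (S₀ x + I₀ x + n₀ * x / m) + μ + DI)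
    (lam : ℝ) (hlam : ∀ x ∈ Icc (0:ℝ) xmax, Cfn x < lam) :
    ∀ x ∈ Icc (0:ℝ) xmax, ∀ t ∈ Icc (0:ℝ) T,
      |I₂ x t - I₁ x t| ≤
        DI * (x / m) * (⨆ τ : Icc (0:ℝ) T, Real.exp (-lam * τ) * |i₂ τ - i₁ τ|) *
          ((Real.exp (lam * t) - Real.exp (Cfn x * t)) / (lam - Cfn x)) :=
  pointwise_contraction_estimate_general xmax m μ β₀ DS DI hm hμ hβ₀ hDI hD T S₀ I₀ hS₀nonneg
    hI₀nonneg n₀ hn₀pos i₁ i₂ hi₁cont hi₂cont S₁ I₁ S₂ I₂ hS₁eq hI₁eq hS₂eq hI₂eq hS₁init hI₁init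
    hS₂init hI₂init hI₁bd hI₂bd Cfn hCfn lam hlam
end

section
/- Assume D_I = D_S. Let T > 0, and for j = 1, 2 let i_j : [0,T] → ℝ be continuous with 0 ≤ i_j(t) ≤ n₀, and set s_j(t) = n₀ − i_j(t). Let (Ŝ_j, Î_j) solve system (Ĉ) with data (s_j, i_j) and initial data (S₀, I₀), and suppose 0 ≤ Î_j ≤ N̂_j := Ŝ_j + Î_j on J × [0,T]. Define î_j(t) = ⟨Î_j(·,t)⟩, let C(x) = β₀(N(x,0) + n₀x/m) + μ + D_I, M = max_{x ∈ J} C(x), and let λ > M. Then ‖î₂ − î₁‖_λ ≤ (D_I/(λ − M)) ‖i₂ − i₁‖_λ, where ‖f‖_λ = sup_{t ∈ [0,T]} e^{−λt}|f(t)|. In particular, if λ > M + D_I then the map i ↦ î is a contraction for the norm ‖·‖_λ. -/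
/-!
Since `D_S = D_I`, the total `N̂ = Ŝ + Î` solves `N̂' = -D_I (N̂ - n₀ x / m)` whatever the data, so
`N̂₁ = N̂₂` and both solutions stay in the box `[0, N(x,0) + n₀ x / m]`. Substituting `Ŝ_j = N̂ - Î_j`
makes `u = Î₂ - Î₁` solve the linear equation `u' = a u + D_I (x / m) (i₂ - i₁)` with `|a| ≤ C(x) ≤ M`,
and a barrier argument gives `|u(x,t)| ≤ D_I (x / m) ‖i₂ - i₁‖_λ e^{λt} / (λ - M)`. Integrating
against `p` with `⟨x⟩ = m` gives the estimate. The averages are genuine integrals (not the junk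
value `0`) because `x ↦ Î_j(x,t)` is continuous, by Grönwall's inequality in the parameter `x`.
-/

open Real Set Filter Topology

section Gronwall

variable {E : Type*} [NormedAddCommGroup E] [NormedSpace ℝ E]

theorem norm_le_mul_exp_of_norm_deriv_le {u u' : ℝ → E} {T M lam B : ℝ}
    (hu : ∀ t ∈ Icc 0 T, HasDerivAt u (u' t) t) (hu0 : u 0 = 0) (hlam : M < lam) (hB : 0 ≤ B)
    (hbound : ∀ t ∈ Icc 0 T, ‖u' t‖ ≤ M * ‖u t‖ + (lam - M) * B * exp (lam * t)) :
    ∀ t ∈ Icc 0 T, ‖u t‖ ≤ B * exp (lam * t) := by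
  intro t ht
  refine le_of_forall_pos_le_add fun ε hε => ?_
  set η := ε / exp (lam * t)
  have hη : 0 < η := by positivity
  -- fence with the strictly larger barrier `(B + η) exp (lam s)`, then let `η → 0`
  have hbarrier : ∀ s, HasDerivAt (fun s => (B + η) * exp (lam * s))
      ((B + η) * (exp (lam * s) * lam)) s := fun s => by
    simpa using (((hasDerivAt_id s).const_mul lam).exp).const_mul (B + η)
  have hfence := image_norm_le_of_norm_deriv_right_lt_deriv_boundary
    (fun s hs => (hu s hs).continuousAt.continuousWithinAt)
    (fun s hs => (hu s (Ico_subset_Icc_self hs)).hasDerivWithinAt)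
    (by rw [hu0, norm_zero]; positivity) hbarrier
    (fun s hs hus => by
      have he := exp_pos (lam * s)
      calc ‖u' s‖ ≤ M * ‖u s‖ + (lam - M) * B * exp (lam * s) := hbound s (Ico_subset_Icc_self hs)
        _ < (B + η) * (exp (lam * s) * lam) := by
          rw [hus]; nlinarith [mul_pos (mul_pos hη he) (sub_pos.2 hlam)]) ht
  calc ‖u t‖ ≤ (B + η) * exp (lam * t) := hfence
    _ = B * exp (lam * t) + ε := by simp only [η]; field_simp

theorem eq_add_mul_exp_of_hasDerivAt_neg_mul_sub {N : ℝ → ℝ} {T D c : ℝ}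
    (hN : ∀ t ∈ Icc 0 T, HasDerivAt N (-D * (N t - c)) t) :
    ∀ t ∈ Icc 0 T, N t = c + (N 0 - c) * exp (-D * t) := by
  have hderiv : ∀ t ∈ Icc 0 T, HasDerivAt (fun t => exp (D * t) * (N t - c)) 0 t := fun t ht => by
    have h : HasDerivAt (fun t => exp (D * t) * (N t - c))
        (exp (D * t) * (D * 1) * (N t - c) + exp (D * t) * (-D * (N t - c))) t :=
      (((hasDerivAt_id t).const_mul D).exp).mul ((hN t ht).sub_const c)
    exact h.congr_deriv (by ring)
  have hconst := constant_of_has_deriv_right_zero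
    (fun t ht => (hderiv t ht).continuousAt.continuousWithinAt)
    (fun t ht => (hderiv t (Ico_subset_Icc_self ht)).hasDerivWithinAt)
  intro t ht
  have h := hconst t ht
  simp only [mul_zero, exp_zero, one_mul] at h
  have he : exp (-D * t) * exp (D * t) = 1 := by rw [← exp_add]; simp
  calc N t = c + exp (-D * t) * (exp (D * t) * (N t - c)) := by rw [← mul_assoc, he]; ring
    _ = c + (N 0 - c) * exp (-D * t) := by rw [h]; ring

theorem continuous_gronwallBound (K x : ℝ) :
    Continuous fun p : ℝ × ℝ => gronwallBound p.1 K p.2 x := by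
  by_cases hK : K = 0
  · simp only [gronwallBound_K0, hK]; fun_prop
  · simp only [gronwallBound_of_K_ne_0 hK]; fun_prop

theorem continuousOn_of_norm_deriv_sub_le {X : Type*} [PseudoMetricSpace X] {s : Set X}
    {T K L t : ℝ} {Y Y' : X → ℝ → E}
    (hY : ∀ x ∈ s, ∀ τ ∈ Icc 0 T, HasDerivAt (Y x) (Y' x τ) τ)
    (hY' : ∀ x ∈ s, ∀ y ∈ s, ∀ τ ∈ Icc 0 T,
      ‖Y' x τ - Y' y τ‖ ≤ K * ‖Y x τ - Y y τ‖ + L * dist x y)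
    (h0 : ContinuousOn (fun x => Y x 0) s) (ht : t ∈ Icc 0 T) :
    ContinuousOn (fun x => Y x t) s := by
  intro x hx
  have hdist : ∀ y ∈ s, dist (Y y t) (Y x t) ≤ gronwallBound (dist (Y y 0) (Y x 0)) K
      (L * dist y x) t := fun y hy => by
    simpa [dist_eq_norm] using norm_le_gronwallBound_of_norm_deriv_right_le
      (f := fun τ => Y y τ - Y x τ) (f' := fun τ => Y' y τ - Y' x τ)
      (fun τ hτ => ((hY y hy τ hτ).sub (hY x hx τ hτ)).continuousAt.continuousWithinAt)
      (fun τ hτ => ((hY y hy τ (Ico_subset_Icc_self hτ)).sub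
        (hY x hx τ (Ico_subset_Icc_self hτ))).hasDerivWithinAt)
      le_rfl
      (fun τ hτ => hY' y hy x hx τ (Ico_subset_Icc_self hτ)) t ht
  have hlim : Tendsto (fun y => gronwallBound (dist (Y y 0) (Y x 0)) K (L * dist y x) t)
      (𝓝[s] x) (𝓝 0) := by
    have h := ((continuous_gronwallBound K t).tendsto (0, 0)).comp
      ((tendsto_iff_dist_tendsto_zero.1 (h0 x hx)).prodMk_nhds
        (by simpa using (tendsto_iff_dist_tendsto_zero.1 (tendsto_nhdsWithin_of_tendsto_nhds
          tendsto_id)).const_mul L))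
    rw [gronwallBound_ε0_δ0] at h
    exact h
  exact tendsto_iff_dist_tendsto_zero.2
    (squeeze_zero' (Eventually.of_forall fun _ => dist_nonneg)
      (eventually_nhdsWithin_of_forall hdist) hlim)

end Gronwall

noncomputable def weightedSupNorm (lam T : ℝ) (f : ℝ → ℝ) : ℝ :=
  ⨆ τ : Icc (0:ℝ) T, exp (-lam * τ) * |f τ|

section WeightedSupNorm

variable {lam T : ℝ} {f : ℝ → ℝ}

theorem abs_le_weightedSupNorm_mul_exp (hf : ContinuousOn f (Icc 0 T)) {t : ℝ}
    (ht : t ∈ Icc 0 T) : |f t| ≤ weightedSupNorm lam T f * exp (lam * t) := by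
  have hbdd : BddAbove (range fun τ : Icc (0:ℝ) T => exp (-lam * τ) * |f τ|) := by
    have hc : ContinuousOn (fun τ => exp (-lam * τ) * |f τ|) (Icc 0 T) :=
      (by fun_prop : Continuous fun τ => exp (-lam * τ)).continuousOn.mul hf.abs
    refine (isCompact_Icc.image_of_continuousOn hc).bddAbove.mono ?_
    rintro _ ⟨τ, rfl⟩
    exact ⟨τ, τ.2, rfl⟩
  have hle : exp (-lam * t) * |f t| ≤ weightedSupNorm lam T f := le_ciSup hbdd ⟨t, ht⟩
  have he : exp (lam * t) * exp (-lam * t) = 1 := by rw [← exp_add]; simp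
  calc |f t| = exp (lam * t) * (exp (-lam * t) * |f t|) := by rw [← mul_assoc, he, one_mul]
    _ ≤ weightedSupNorm lam T f * exp (lam * t) := by
      rw [mul_comm _ (exp _)]; gcongr

theorem weightedSupNorm_nonneg : 0 ≤ weightedSupNorm lam T f :=
  Real.iSup_nonneg fun _ => by positivity

theorem weightedSupNorm_le {C : ℝ} (hC : 0 ≤ C)
    (hf : ∀ t ∈ Icc 0 T, |f t| ≤ C * exp (lam * t)) : weightedSupNorm lam T f ≤ C := by
  refine Real.iSup_le (fun ⟨t, ht⟩ => ?_) hC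
  have he : exp (-lam * t) * exp (lam * t) = 1 := by rw [← exp_add]; simp
  calc exp (-lam * t) * |f t| ≤ exp (-lam * t) * (C * exp (lam * t)) := by gcongr; exact hf t ht
    _ = C := by rw [mul_left_comm, he, mul_one]

end WeightedSupNorm

theorem abs_integral_mul_sub_integral_mul_le {f g p : ℝ → ℝ} {a b C : ℝ} (hab : a ≤ b)
    (hf : ContinuousOn f (Icc a b)) (hg : ContinuousOn g (Icc a b))
    (hp : IntervalIntegrable p MeasureTheory.volume a b) (hp0 : ∀ x ∈ Icc a b, 0 ≤ p x)
    (hxp : IntervalIntegrable (fun x => x * p x) MeasureTheory.volume a b)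
    (hfg : ∀ x ∈ Icc a b, |f x - g x| ≤ C * x) :
    |(∫ x in a..b, f x * p x) - ∫ x in a..b, g x * p x| ≤ C * ∫ x in a..b, x * p x := by
  have hfp := hp.continuousOn_mul (g := f) (by rwa [uIcc_of_le hab])
  have hgp := hp.continuousOn_mul (g := g) (by rwa [uIcc_of_le hab])
  rw [← intervalIntegral.integral_sub hfp hgp, ← intervalIntegral.integral_const_mul]
  refine (intervalIntegral.abs_integral_le_integral_abs hab).trans
    (intervalIntegral.integral_mono_on hab (hfp.sub hgp).abs (hxp.const_mul C) fun x hx => ?_)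
  rw [← sub_mul, abs_mul, abs_of_nonneg (hp0 x hx), ← mul_assoc]
  exact mul_le_mul_of_nonneg_right (hfg x hx) (hp0 x hx)

/-- The right-hand side of (Ĉ) at a fixed size `x`, for the state `y = (Ŝ, Î)` and the forcing
`f = (x / m) (s, i)`. -/
def siField (μ β₀ D : ℝ) (f y : ℝ × ℝ) : ℝ × ℝ :=
  (y.2 * (μ - β₀ * y.1) - D * (y.1 - f.1), y.2 * (-μ + β₀ * y.1) - D * (y.2 - f.2))

theorem abs_mul_sub_mul_le {a b a' b' B : ℝ} (ha : |a| ≤ B) (hb' : |b'| ≤ B) :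
    |a * b - a' * b'| ≤ B * (|a - a'| + |b - b'|) := by
  calc |a * b - a' * b'| = |a * (b - b') + b' * (a - a')| := by ring_nf
    _ ≤ |a| * |b - b'| + |b'| * |a - a'| := by
      rw [← abs_mul, ← abs_mul]; exact abs_add_le _ _
    _ ≤ B * (|a - a'| + |b - b'|) := by
      nlinarith [abs_nonneg (a - a'), abs_nonneg (b - b')]

theorem norm_siField_sub_le {μ β₀ D B : ℝ} (hμ : 0 ≤ μ) (hβ₀ : 0 ≤ β₀) (hD : 0 ≤ D)
    {f f' y y' : ℝ × ℝ} (hy : ‖y‖ ≤ B) (hy' : ‖y'‖ ≤ B) :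
    ‖siField μ β₀ D f y - siField μ β₀ D f' y'‖ ≤
      (μ + 2 * β₀ * B + D) * ‖y - y'‖ + D * ‖f - f'‖ := by
  obtain ⟨y₁, y₂⟩ := y
  obtain ⟨y₁', y₂'⟩ := y'
  obtain ⟨f₁, f₂⟩ := f
  obtain ⟨f₁', f₂'⟩ := f'
  simp only [siField, Prod.mk_sub_mk, Prod.norm_mk, Real.norm_eq_abs] at hy hy' ⊢
  set d := max |y₁ - y₁'| |y₂ - y₂'|
  set e := max |f₁ - f₁'| |f₂ - f₂'|
  have hd₁ : |y₁ - y₁'| ≤ d := le_max_left _ _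
  have hd₂ : |y₂ - y₂'| ≤ d := le_max_right _ _
  have he₁ : |f₁ - f₁'| ≤ e := le_max_left _ _
  have he₂ : |f₂ - f₂'| ≤ e := le_max_right _ _
  have hprod : |y₂ * y₁ - y₂' * y₁'| ≤ 2 * B * d := by
    have := abs_mul_sub_mul_le (b := y₁) (a' := y₂') ((le_max_right _ _).trans hy)
      ((le_max_left _ _).trans hy')
    nlinarith [abs_nonneg y₂, (le_max_right _ _).trans hy]
  obtain ⟨hd₁l, hd₁u⟩ := abs_le.1 hd₁
  obtain ⟨hd₂l, hd₂u⟩ := abs_le.1 hd₂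
  obtain ⟨he₁l, he₁u⟩ := abs_le.1 he₁
  obtain ⟨he₂l, he₂u⟩ := abs_le.1 he₂
  obtain ⟨hpl, hpu⟩ := abs_le.1 hprod
  refine max_le (abs_le.2 ⟨?_, ?_⟩) (abs_le.2 ⟨?_, ?_⟩) <;>
    linarith [mul_le_mul_of_nonneg_left hd₁u hD, mul_le_mul_of_nonneg_left hd₁l hD,
      mul_le_mul_of_nonneg_left hd₂u hD, mul_le_mul_of_nonneg_left hd₂l hD,
      mul_le_mul_of_nonneg_left hd₂u hμ, mul_le_mul_of_nonneg_left hd₂l hμ,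
      mul_le_mul_of_nonneg_left he₁u hD, mul_le_mul_of_nonneg_left he₁l hD,
      mul_le_mul_of_nonneg_left he₂u hD, mul_le_mul_of_nonneg_left he₂l hD,
      mul_le_mul_of_nonneg_left hpu hβ₀, mul_le_mul_of_nonneg_left hpl hβ₀]

section SIModel

-- A fixed size `x`, with `c = x / m`.
variable {μ β₀ D c n₀ T : ℝ}

theorem si_total_eq {S I i : ℝ → ℝ}
    (hS : ∀ t ∈ Icc 0 T, HasDerivAt S (I t * (μ - β₀ * S t) - D * (S t - c * (n₀ - i t))) t)
    (hI : ∀ t ∈ Icc 0 T, HasDerivAt I (I t * (-μ + β₀ * S t) - D * (I t - c * i t)) t) :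
    ∀ t ∈ Icc 0 T, S t + I t = c * n₀ + (S 0 + I 0 - c * n₀) * exp (-D * t) :=
  eq_add_mul_exp_of_hasDerivAt_neg_mul_sub fun t ht =>
    ((hS t ht).add (hI t ht)).congr_deriv (by ring)

theorem si_mem_Icc {S I i : ℝ → ℝ}
    (hS : ∀ t ∈ Icc 0 T, HasDerivAt S (I t * (μ - β₀ * S t) - D * (S t - c * (n₀ - i t))) t)
    (hI : ∀ t ∈ Icc 0 T, HasDerivAt I (I t * (-μ + β₀ * S t) - D * (I t - c * i t)) t)
    (hSI : ∀ t ∈ Icc 0 T, 0 ≤ I t ∧ I t ≤ S t + I t)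
    (hD : 0 ≤ D) (hcn : 0 ≤ c * n₀) (h0 : 0 ≤ S 0 + I 0) :
    ∀ t ∈ Icc 0 T, S t ∈ Icc 0 (S 0 + I 0 + c * n₀) ∧ I t ∈ Icc 0 (S 0 + I 0 + c * n₀) := by
  intro t ht
  have he : exp (-D * t) ≤ 1 := exp_le_one_iff.2 (by nlinarith [ht.1])
  have hN : S t + I t ≤ S 0 + I 0 + c * n₀ := by
    rw [si_total_eq hS hI t ht]
    nlinarith [exp_pos (-D * t)]
  obtain ⟨hI0, hIN⟩ := hSI t ht
  exact ⟨⟨by linarith, by linarith⟩, ⟨hI0, by linarith⟩⟩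

theorem si_abs_sub_le {S₁ I₁ S₂ I₂ i₁ i₂ : ℝ → ℝ} {R M lam K : ℝ}
    (hI₁ : ∀ t ∈ Icc 0 T, HasDerivAt I₁ (I₁ t * (-μ + β₀ * S₁ t) - D * (I₁ t - c * i₁ t)) t)
    (hI₂ : ∀ t ∈ Icc 0 T, HasDerivAt I₂ (I₂ t * (-μ + β₀ * S₂ t) - D * (I₂ t - c * i₂ t)) t)
    (hN : ∀ t ∈ Icc 0 T, S₁ t + I₁ t = S₂ t + I₂ t) (h0 : I₁ 0 = I₂ 0)
    (hS₂ : ∀ t ∈ Icc 0 T, S₂ t ∈ Icc 0 R) (hI₁R : ∀ t ∈ Icc 0 T, I₁ t ∈ Icc 0 R)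
    (hμ : 0 ≤ μ) (hβ₀ : 0 ≤ β₀) (hD : 0 ≤ D) (hc : 0 ≤ c) (hK : 0 ≤ K)
    (hRM : β₀ * R + μ + D ≤ M) (hlam : M < lam)
    (hi : ∀ t ∈ Icc 0 T, |i₂ t - i₁ t| ≤ K * exp (lam * t)) :
    ∀ t ∈ Icc 0 T, |I₂ t - I₁ t| ≤ D * c * K / (lam - M) * exp (lam * t) := by
  have hlamM : 0 < lam - M := sub_pos.2 hlam
  refine norm_le_mul_exp_of_norm_deriv_le (fun t ht => (hI₂ t ht).sub (hI₁ t ht))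
    (sub_eq_zero.2 h0.symm) hlam (by positivity) fun t ht => ?_
  -- `S₂ - S₁ = I₁ - I₂` makes the equation for `I₂ - I₁` linear
  have hlin : I₂ t * (-μ + β₀ * S₂ t) - D * (I₂ t - c * i₂ t) -
      (I₁ t * (-μ + β₀ * S₁ t) - D * (I₁ t - c * i₁ t)) =
      (-μ - D + β₀ * (S₂ t - I₁ t)) * (I₂ t - I₁ t) + D * c * (i₂ t - i₁ t) := by
    linear_combination (-(β₀ * I₁ t)) * hN t ht
  have hcoef : |-μ - D + β₀ * (S₂ t - I₁ t)| ≤ M := by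
    obtain ⟨hS0, hSR⟩ := hS₂ t ht
    obtain ⟨hI0, hIR⟩ := hI₁R t ht
    refine abs_le.2 ⟨?_, ?_⟩ <;>
      nlinarith [mul_le_mul_of_nonneg_left hSR hβ₀, mul_le_mul_of_nonneg_left hIR hβ₀,
        mul_nonneg hβ₀ hS0, mul_nonneg hβ₀ hI0]
  simp only [Real.norm_eq_abs]
  calc |_ - _| = |(-μ - D + β₀ * (S₂ t - I₁ t)) * (I₂ t - I₁ t) + D * c * (i₂ t - i₁ t)| := by
        rw [hlin]
    _ ≤ M * |I₂ t - I₁ t| + D * c * (K * exp (lam * t)) := by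
      refine (abs_add_le _ _).trans (add_le_add ?_ ?_) <;> rw [abs_mul]
      · gcongr
      · rw [abs_of_nonneg (by positivity)]; gcongr; exact hi t ht
    _ = M * |I₂ t - I₁ t| + (lam - M) * (D * c * K / (lam - M)) * exp (lam * t) := by
      field_simp

end SIModel

/-- `(S, I)` solves (Ĉ) with `D = D_S = D_I`, data `(n₀ - i, i)` and initial data `(S₀, I₀)`,
and satisfies `0 ≤ I ≤ S + I`. -/
structure IsSISolution (μ β₀ D m n₀ xmax T : ℝ) (S₀ I₀ i : ℝ → ℝ) (S I : ℝ → ℝ → ℝ) : Prop where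
  hasDerivAt_S : ∀ x ∈ Icc 0 xmax, ∀ t ∈ Icc 0 T,
    HasDerivAt (S x) (I x t * (μ - β₀ * S x t) - D * (S x t - x / m * (n₀ - i t))) t
  hasDerivAt_I : ∀ x ∈ Icc 0 xmax, ∀ t ∈ Icc 0 T,
    HasDerivAt (I x) (I x t * (-μ + β₀ * S x t) - D * (I x t - x / m * i t)) t
  S_zero : ∀ x ∈ Icc 0 xmax, S x 0 = S₀ x
  I_zero : ∀ x ∈ Icc 0 xmax, I x 0 = I₀ x
  I_mem : ∀ x ∈ Icc 0 xmax, ∀ t ∈ Icc 0 T, 0 ≤ I x t ∧ I x t ≤ S x t + I x t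

namespace IsSISolution

variable {μ β₀ D m n₀ xmax T : ℝ} {S₀ I₀ : ℝ → ℝ}

theorem total_eq {i : ℝ → ℝ} {S I : ℝ → ℝ → ℝ}
    (h : IsSISolution μ β₀ D m n₀ xmax T S₀ I₀ i S I) {x : ℝ} (hx : x ∈ Icc 0 xmax) :
    ∀ t ∈ Icc 0 T, S x t + I x t = x / m * n₀ + (S₀ x + I₀ x - x / m * n₀) * exp (-D * t) := by
  simpa only [h.S_zero x hx, h.I_zero x hx] using
    si_total_eq (h.hasDerivAt_S x hx) (h.hasDerivAt_I x hx)

theorem mem_Icc {i : ℝ → ℝ} {S I : ℝ → ℝ → ℝ}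
    (h : IsSISolution μ β₀ D m n₀ xmax T S₀ I₀ i S I) (hD : 0 ≤ D) (hm : 0 < m) (hn₀ : 0 ≤ n₀)
    (hS₀ : ∀ x ∈ Icc 0 xmax, 0 ≤ S₀ x) (hI₀ : ∀ x ∈ Icc 0 xmax, 0 ≤ I₀ x)
    {x : ℝ} (hx : x ∈ Icc 0 xmax) :
    ∀ t ∈ Icc 0 T, S x t ∈ Icc 0 (S₀ x + I₀ x + x / m * n₀) ∧
      I x t ∈ Icc 0 (S₀ x + I₀ x + x / m * n₀) := by
  have hx0 := hx.1
  have h0 : 0 ≤ S x 0 + I x 0 := by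
    rw [h.S_zero x hx, h.I_zero x hx]; exact add_nonneg (hS₀ x hx) (hI₀ x hx)
  simpa only [h.S_zero x hx, h.I_zero x hx] using si_mem_Icc (h.hasDerivAt_S x hx)
    (h.hasDerivAt_I x hx) (h.I_mem x hx) hD (by positivity) h0

theorem continuousOn_I {i : ℝ → ℝ} {S I : ℝ → ℝ → ℝ}
    (h : IsSISolution μ β₀ D m n₀ xmax T S₀ I₀ i S I)
    (hμ : 0 ≤ μ) (hβ₀ : 0 ≤ β₀) (hD : 0 ≤ D) (hm : 0 < m) (hn₀ : 0 ≤ n₀)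
    (hS₀ : Continuous S₀) (hI₀ : Continuous I₀)
    (hS₀nonneg : ∀ x ∈ Icc 0 xmax, 0 ≤ S₀ x) (hI₀nonneg : ∀ x ∈ Icc 0 xmax, 0 ≤ I₀ x)
    (hi : ∀ t ∈ Icc 0 T, 0 ≤ i t ∧ i t ≤ n₀) {t : ℝ} (ht : t ∈ Icc 0 T) :
    ContinuousOn (fun x => I x t) (Icc 0 xmax) := by
  obtain ⟨B, hRB⟩ := isCompact_Icc.exists_bound_of_continuousOn
    (f := fun x => S₀ x + I₀ x + x / m * n₀) (by fun_prop)
  have hB : ∀ x ∈ Icc 0 xmax, ∀ t ∈ Icc 0 T, ‖(S x t, I x t)‖ ≤ B := fun x hx t ht => by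
    obtain ⟨⟨hS0, hSR⟩, ⟨hI0, hIR⟩⟩ := h.mem_Icc hD hm hn₀ hS₀nonneg hI₀nonneg hx t ht
    have := (le_abs_self _).trans (hRB x hx)
    simp only [Prod.norm_mk, Real.norm_eq_abs, abs_of_nonneg hS0, abs_of_nonneg hI0]
    exact max_le (by linarith) (by linarith)
  have hforce : ∀ x y a, |a| ≤ n₀ → |x / m * a - y / m * a| ≤ n₀ / m * dist x y := by
    intro x y a ha
    rw [Real.dist_eq, ← sub_mul, ← sub_div, abs_mul, abs_div, abs_of_pos hm]
    calc |x - y| / m * |a| ≤ |x - y| / m * n₀ := by gcongr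
      _ = n₀ / m * |x - y| := by ring
  refine continuous_snd.comp_continuousOn (continuousOn_of_norm_deriv_sub_le
    (K := μ + 2 * β₀ * B + D) (L := D * (n₀ / m)) (Y := fun x τ => (S x τ, I x τ))
    (Y' := fun x τ => siField μ β₀ D (x / m * (n₀ - i τ), x / m * i τ) (S x τ, I x τ))
    (fun x hx τ hτ => (h.hasDerivAt_S x hx τ hτ).prodMk (h.hasDerivAt_I x hx τ hτ))
    (fun x hx y hy τ hτ => ?_)
    ((hS₀.continuousOn.congr h.S_zero).prodMk (hI₀.continuousOn.congr h.I_zero)) ht)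
  obtain ⟨hi0, hin⟩ := hi τ hτ
  have hf : ‖((x / m * (n₀ - i τ), x / m * i τ) : ℝ × ℝ) - (y / m * (n₀ - i τ), y / m * i τ)‖
      ≤ n₀ / m * dist x y := by
    simp only [Prod.mk_sub_mk, Prod.norm_mk, Real.norm_eq_abs]
    exact max_le (hforce x y _ (abs_le.2 ⟨by linarith, by linarith⟩))
      (hforce x y _ (abs_le.2 ⟨by linarith, by linarith⟩))
  calc _ ≤ _ := norm_siField_sub_le hμ hβ₀ hD (hB x hx τ hτ) (hB y hy τ hτ)
    _ ≤ _ := by rw [mul_assoc D]; gcongr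

theorem abs_sub_le {i₁ i₂ : ℝ → ℝ} {S₁ I₁ S₂ I₂ : ℝ → ℝ → ℝ} {M lam K : ℝ}
    (h₁ : IsSISolution μ β₀ D m n₀ xmax T S₀ I₀ i₁ S₁ I₁)
    (h₂ : IsSISolution μ β₀ D m n₀ xmax T S₀ I₀ i₂ S₂ I₂)
    (hμ : 0 ≤ μ) (hβ₀ : 0 ≤ β₀) (hD : 0 ≤ D) (hm : 0 < m) (hn₀ : 0 ≤ n₀)
    (hS₀ : ∀ x ∈ Icc 0 xmax, 0 ≤ S₀ x) (hI₀ : ∀ x ∈ Icc 0 xmax, 0 ≤ I₀ x)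
    (hK : 0 ≤ K) (hi : ∀ t ∈ Icc 0 T, |i₂ t - i₁ t| ≤ K * exp (lam * t)) (hlam : M < lam)
    {x : ℝ} (hx : x ∈ Icc 0 xmax) (hM : β₀ * (S₀ x + I₀ x + x / m * n₀) + μ + D ≤ M) :
    ∀ t ∈ Icc 0 T, |I₂ x t - I₁ x t| ≤ D * K / (lam - M) / m * exp (lam * t) * x := by
  have hx0 := hx.1
  intro t ht
  refine (si_abs_sub_le (h₁.hasDerivAt_I x hx) (h₂.hasDerivAt_I x hx)
    (fun t ht => (h₁.total_eq hx t ht).trans (h₂.total_eq hx t ht).symm)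
    (by rw [h₁.I_zero x hx, h₂.I_zero x hx])
    (fun t ht => (h₂.mem_Icc hD hm hn₀ hS₀ hI₀ hx t ht).1)
    (fun t ht => (h₁.mem_Icc hD hm hn₀ hS₀ hI₀ hx t ht).2)
    hμ hβ₀ hD (by positivity) hK hM hlam hi t ht).trans_eq (by ring)

end IsSISolution

theorem contraction_estimate_on_averages_general
    (xmax m μ β₀ DS DI : ℝ) (p : ℝ → ℝ)
    (hxmax : 0 < xmax) (hm : 0 < m) (hμ : 0 < μ) (hβ₀ : 0 < β₀)
    (hDI : 0 < DI)
    (hD : DI = DS)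
    (hp_nonneg : ∀ x ∈ Icc (0:ℝ) xmax, 0 ≤ p x)
    (hp_int : ∫ x in (0:ℝ)..xmax, p x = 1)
    (hm_def : m = ∫ x in (0:ℝ)..xmax, x * p x)
    (T : ℝ)
    (S₀ I₀ : ℝ → ℝ)
    (hS₀ : ContDiff ℝ 1 S₀) (hI₀ : ContDiff ℝ 1 I₀)
    (hS₀nonneg : ∀ x ∈ Icc (0:ℝ) xmax, 0 ≤ S₀ x)
    (hI₀nonneg : ∀ x ∈ Icc (0:ℝ) xmax, 0 ≤ I₀ x)
    (n₀ : ℝ) (hn₀pos : 0 < n₀)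
    (i₁ i₂ : ℝ → ℝ)
    (hi₁cont : ContinuousOn i₁ (Icc 0 T)) (hi₂cont : ContinuousOn i₂ (Icc 0 T))
    (hi₁bd : ∀ t ∈ Icc (0:ℝ) T, 0 ≤ i₁ t ∧ i₁ t ≤ n₀)
    (hi₂bd : ∀ t ∈ Icc (0:ℝ) T, 0 ≤ i₂ t ∧ i₂ t ≤ n₀)
    (S₁ I₁ S₂ I₂ : ℝ → ℝ → ℝ)
    (hS₁eq : ∀ x ∈ Icc (0:ℝ) xmax, ∀ t ∈ Icc (0:ℝ) T,
      HasDerivAt (S₁ x) (I₁ x t * (μ - β₀ * S₁ x t) - DS * (S₁ x t - x / m * (n₀ - i₁ t))) t)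
    (hI₁eq : ∀ x ∈ Icc (0:ℝ) xmax, ∀ t ∈ Icc (0:ℝ) T,
      HasDerivAt (I₁ x) (I₁ x t * (-μ + β₀ * S₁ x t) - DI * (I₁ x t - x / m * i₁ t)) t)
    (hS₂eq : ∀ x ∈ Icc (0:ℝ) xmax, ∀ t ∈ Icc (0:ℝ) T,
      HasDerivAt (S₂ x) (I₂ x t * (μ - β₀ * S₂ x t) - DS * (S₂ x t - x / m * (n₀ - i₂ t))) t)
    (hI₂eq : ∀ x ∈ Icc (0:ℝ) xmax, ∀ t ∈ Icc (0:ℝ) T,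
      HasDerivAt (I₂ x) (I₂ x t * (-μ + β₀ * S₂ x t) - DI * (I₂ x t - x / m * i₂ t)) t)
    (hS₁init : ∀ x ∈ Icc (0:ℝ) xmax, S₁ x 0 = S₀ x)
    (hI₁init : ∀ x ∈ Icc (0:ℝ) xmax, I₁ x 0 = I₀ x)
    (hS₂init : ∀ x ∈ Icc (0:ℝ) xmax, S₂ x 0 = S₀ x)
    (hI₂init : ∀ x ∈ Icc (0:ℝ) xmax, I₂ x 0 = I₀ x)
    (hI₁bd : ∀ x ∈ Icc (0:ℝ) xmax, ∀ t ∈ Icc (0:ℝ) T,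
      0 ≤ I₁ x t ∧ I₁ x t ≤ S₁ x t + I₁ x t)
    (hI₂bd : ∀ x ∈ Icc (0:ℝ) xmax, ∀ t ∈ Icc (0:ℝ) T,
      0 ≤ I₂ x t ∧ I₂ x t ≤ S₂ x t + I₂ x t)
    (Cfn : ℝ → ℝ)
    (hCfn : ∀ x, Cfn x = β₀ * (S₀ x + I₀ x + n₀ * x / m) + μ + DI)
    (M : ℝ) (hM : IsGreatest (Cfn '' Icc (0:ℝ) xmax) M)
    (lam : ℝ) (hlam : M < lam) :
    (⨆ τ : Icc (0:ℝ) T, Real.exp (-lam * τ) *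
        |(∫ x in (0:ℝ)..xmax, I₂ x τ * p x) - ∫ x in (0:ℝ)..xmax, I₁ x τ * p x|) ≤
      DI / (lam - M) * ⨆ τ : Icc (0:ℝ) T, Real.exp (-lam * τ) * |i₂ τ - i₁ τ| ∧
    (M + DI < lam → DI / (lam - M) < 1) := by
  subst hD
  have h₁ : IsSISolution μ β₀ DI m n₀ xmax T S₀ I₀ i₁ S₁ I₁ :=
    ⟨hS₁eq, hI₁eq, hS₁init, hI₁init, hI₁bd⟩
  have h₂ : IsSISolution μ β₀ DI m n₀ xmax T S₀ I₀ i₂ S₂ I₂ :=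
    ⟨hS₂eq, hI₂eq, hS₂init, hI₂init, hI₂bd⟩
  show weightedSupNorm lam T (fun τ => (∫ x in (0:ℝ)..xmax, I₂ x τ * p x) -
      ∫ x in (0:ℝ)..xmax, I₁ x τ * p x) ≤
    DI / (lam - M) * weightedSupNorm lam T (fun τ => i₂ τ - i₁ τ) ∧ _
  set K := weightedSupNorm lam T (fun τ => i₂ τ - i₁ τ)
  have hK : 0 ≤ K := weightedSupNorm_nonneg
  have hi : ∀ t ∈ Icc 0 T, |i₂ t - i₁ t| ≤ K * exp (lam * t) := fun t ht =>
    abs_le_weightedSupNorm_mul_exp (hi₂cont.sub hi₁cont) ht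
  have hCM : ∀ x ∈ Icc 0 xmax, β₀ * (S₀ x + I₀ x + x / m * n₀) + μ + DI ≤ M := fun x hx => by
    simpa [hCfn, mul_div_right_comm, mul_comm n₀] using hM.2 ⟨x, hx, rfl⟩
  have hp := intervalIntegral.intervalIntegrable_of_integral_ne_zero (hp_int ▸ one_ne_zero)
  have hxp := intervalIntegral.intervalIntegrable_of_integral_ne_zero (hm_def ▸ hm.ne')
  have hlamM : 0 < lam - M := sub_pos.2 hlam
  refine ⟨weightedSupNorm_le (by positivity) fun t ht => ?_,
    fun h => (div_lt_one hlamM).2 (by linarith)⟩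
  calc _ ≤ DI * K / (lam - M) / m * exp (lam * t) * ∫ x in (0:ℝ)..xmax, x * p x :=
        abs_integral_mul_sub_integral_mul_le hxmax.le
          (h₂.continuousOn_I hμ.le hβ₀.le hDI.le hm hn₀pos.le hS₀.continuous hI₀.continuous
            hS₀nonneg hI₀nonneg hi₂bd ht)
          (h₁.continuousOn_I hμ.le hβ₀.le hDI.le hm hn₀pos.le hS₀.continuous hI₀.continuous
            hS₀nonneg hI₀nonneg hi₁bd ht) hp hp_nonneg hxp
          (fun x hx => h₁.abs_sub_le h₂ hμ.le hβ₀.le hDI.le hm hn₀pos.le hS₀nonneg hI₀nonneg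
            hK hi hlam hx (hCM x hx) t ht)
    _ = DI / (lam - M) * K * exp (lam * t) := by rw [← hm_def]; field_simp

/-- Contraction estimate for the map `i ↦ î` (case `D_I = D_S`):
`‖î₂ - î₁‖_λ ≤ (D_I/(λ - M))‖i₂ - i₁‖_λ` with `M = max_{x∈J} C(x)`,
`C(x) = β₀(N(x,0) + n₀ x/m) + μ + D_I`; in particular if `λ > M + D_I`
the map is a contraction for `‖·‖_λ`. -/
theorem contraction_estimate_on_averages
    (xmax m μ β₀ DS DI : ℝ) (p : ℝ → ℝ)
    (hxmax : 0 < xmax) (hm : 0 < m) (hμ : 0 < μ) (hβ₀ : 0 < β₀)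
    (hDS : 0 < DS) (hDI : 0 < DI)
    (hD : DI = DS)
    (hp_nonneg : ∀ x ∈ Icc (0:ℝ) xmax, 0 ≤ p x) (hp0 : p 0 = 0)
    (hp_int : ∫ x in (0:ℝ)..xmax, p x = 1)
    (hm_def : m = ∫ x in (0:ℝ)..xmax, x * p x)
    (T : ℝ) (hT : 0 < T)
    (S₀ I₀ : ℝ → ℝ)
    (hS₀ : ContDiff ℝ 1 S₀) (hI₀ : ContDiff ℝ 1 I₀)
    (hS₀nonneg : ∀ x ∈ Icc (0:ℝ) xmax, 0 ≤ S₀ x)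
    (hI₀nonneg : ∀ x ∈ Icc (0:ℝ) xmax, 0 ≤ I₀ x)
    (hS₀zero : S₀ 0 = 0) (hI₀zero : I₀ 0 = 0)
    (n₀ : ℝ) (hn₀pos : 0 < n₀)
    (hn₀ : n₀ = (∫ x in (0:ℝ)..xmax, S₀ x * p x) + ∫ x in (0:ℝ)..xmax, I₀ x * p x)
    (i₁ i₂ : ℝ → ℝ)
    (hi₁cont : ContinuousOn i₁ (Icc 0 T)) (hi₂cont : ContinuousOn i₂ (Icc 0 T))
    (hi₁bd : ∀ t ∈ Icc (0:ℝ) T, 0 ≤ i₁ t ∧ i₁ t ≤ n₀)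
    (hi₂bd : ∀ t ∈ Icc (0:ℝ) T, 0 ≤ i₂ t ∧ i₂ t ≤ n₀)
    (S₁ I₁ S₂ I₂ : ℝ → ℝ → ℝ)
    (hS₁eq : ∀ x ∈ Icc (0:ℝ) xmax, ∀ t ∈ Icc (0:ℝ) T,
      HasDerivAt (S₁ x) (I₁ x t * (μ - β₀ * S₁ x t) - DS * (S₁ x t - x / m * (n₀ - i₁ t))) t)
    (hI₁eq : ∀ x ∈ Icc (0:ℝ) xmax, ∀ t ∈ Icc (0:ℝ) T,
      HasDerivAt (I₁ x) (I₁ x t * (-μ + β₀ * S₁ x t) - DI * (I₁ x t - x / m * i₁ t)) t)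
    (hS₂eq : ∀ x ∈ Icc (0:ℝ) xmax, ∀ t ∈ Icc (0:ℝ) T,
      HasDerivAt (S₂ x) (I₂ x t * (μ - β₀ * S₂ x t) - DS * (S₂ x t - x / m * (n₀ - i₂ t))) t)
    (hI₂eq : ∀ x ∈ Icc (0:ℝ) xmax, ∀ t ∈ Icc (0:ℝ) T,
      HasDerivAt (I₂ x) (I₂ x t * (-μ + β₀ * S₂ x t) - DI * (I₂ x t - x / m * i₂ t)) t)
    (hS₁init : ∀ x ∈ Icc (0:ℝ) xmax, S₁ x 0 = S₀ x)
    (hI₁init : ∀ x ∈ Icc (0:ℝ) xmax, I₁ x 0 = I₀ x)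
    (hS₂init : ∀ x ∈ Icc (0:ℝ) xmax, S₂ x 0 = S₀ x)
    (hI₂init : ∀ x ∈ Icc (0:ℝ) xmax, I₂ x 0 = I₀ x)
    (hI₁bd : ∀ x ∈ Icc (0:ℝ) xmax, ∀ t ∈ Icc (0:ℝ) T,
      0 ≤ I₁ x t ∧ I₁ x t ≤ S₁ x t + I₁ x t)
    (hI₂bd : ∀ x ∈ Icc (0:ℝ) xmax, ∀ t ∈ Icc (0:ℝ) T,
      0 ≤ I₂ x t ∧ I₂ x t ≤ S₂ x t + I₂ x t)
    (Cfn : ℝ → ℝ)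
    (hCfn : ∀ x, Cfn x = β₀ * (S₀ x + I₀ x + n₀ * x / m) + μ + DI)
    (M : ℝ) (hM : IsGreatest (Cfn '' Icc (0:ℝ) xmax) M)
    (lam : ℝ) (hlam : M < lam) :
    (⨆ τ : Icc (0:ℝ) T, Real.exp (-lam * τ) *
        |(∫ x in (0:ℝ)..xmax, I₂ x τ * p x) - ∫ x in (0:ℝ)..xmax, I₁ x τ * p x|) ≤
      DI / (lam - M) * ⨆ τ : Icc (0:ℝ) T, Real.exp (-lam * τ) * |i₂ τ - i₁ τ| ∧
    (M + DI < lam → DI / (lam - M) < 1) :=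
  contraction_estimate_on_averages_general xmax m μ β₀ DS DI p hxmax hm hμ hβ₀ hDI hD hp_nonneg
    hp_int hm_def T S₀ I₀ hS₀ hI₀ hS₀nonneg hI₀nonneg n₀ hn₀pos i₁ i₂ hi₁cont hi₂cont hi₁bd hi₂bd S₁
    I₁ S₂ I₂ hS₁eq hI₁eq hS₂eq hI₂eq hS₁init hI₁init hS₂init hI₂init hI₁bd hI₂bd Cfn hCfn M hM lam
    hlam
end

section
/- Let R ≥ 1 and n₀ = s₀ + i₀. Then there exists T > 0 such that for every pair of continuous nonnegative functions (s, i) on [0,T] with s(0) = s₀, i(0) = i₀ and sup_{t ∈ [0,T]}(|s(t) − s₀| + |i(t) − i₀|) ≤ R, the solution (Ŝ, Î) of system (Ĉ) with data (s,i) and initial data (S₀, I₀) (which satisfies Ŝ, Î ≥ 0) has averages ŝ(t) = ⟨Ŝ(·,t)⟩ and î(t) = ⟨Î(·,t)⟩ satisfying ŝ(t) ≥ 0, î(t) ≥ 0, ŝ(0) = s₀, î(0) = i₀ and sup_{t ∈ [0,T]}(|ŝ(t) − s₀| + |î(t) − i₀|) ≤ R. -/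
/-!
Fix the data `(s, i)` and a point `x`. The reaction terms cancel in `Ŝ + Î`, and the remaining
terms `-D_S Ŝ - D_I Î + (x/m)(D_S s + D_I i)` are bounded above by a constant `K` that does not
depend on `(s, i)`; hence on `[0, 1]` the nonnegative functions `Ŝ(x,·)`, `Î(x,·)` stay below
`M = sup (S₀ + I₀) + K`. This bounds both time derivatives by constants `B_S`, `B_I`, so that
`|Ŝ(x,t) - S₀(x)| ≤ B_S t` and `|Î(x,t) - I₀(x)| ≤ B_I t`. Averaging against the probability
density `p` gives `|ŝ(t) - s₀| + |î(t) - i₀| ≤ (B_S + B_I) t ≤ R` once `T ≤ R / (B_S + B_I)`.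
-/

open Real Set MeasureTheory

lemma sub_le_mul_of_hasDerivAt_le {f f' : ℝ → ℝ} {T C : ℝ}
    (hf : ∀ t ∈ Icc 0 T, HasDerivAt f (f' t) t) (hf' : ∀ t ∈ Icc 0 T, f' t ≤ C) :
    ∀ t ∈ Icc 0 T, f t - f 0 ≤ C * t := fun t ht => by
  simpa using (convex_Icc 0 T).image_sub_le_mul_sub_of_deriv_le
    (fun u hu => (hf u hu).continuousAt.continuousWithinAt)
    (fun u hu => (hf u (interior_subset hu)).differentiableAt.differentiableWithinAt)
    (fun u hu => (hf u (interior_subset hu)).deriv ▸ hf' u (interior_subset hu))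
    0 (left_mem_Icc.2 (ht.1.trans ht.2)) t ht ht.1

lemma abs_sub_le_mul_of_hasDerivAt_abs_le {f f' : ℝ → ℝ} {T C : ℝ}
    (hf : ∀ t ∈ Icc 0 T, HasDerivAt f (f' t) t) (hf' : ∀ t ∈ Icc 0 T, |f' t| ≤ C) :
    ∀ t ∈ Icc 0 T, |f t - f 0| ≤ C * t := fun t ht => by
  simpa [abs_of_nonneg ht.1] using (convex_Icc 0 T).norm_image_sub_le_of_norm_hasDerivWithin_le
    (fun u hu => (hf u hu).hasDerivWithinAt) hf' (left_mem_Icc.2 (ht.1.trans ht.2)) ht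

lemma exists_pos_le_one_forall_mul_le (B : ℝ) {R : ℝ} (hR : 0 < R) :
    ∃ T > 0, T ≤ 1 ∧ ∀ t ∈ Icc 0 T, B * t ≤ R := by
  refine ⟨min 1 (R / (|B| + 1)), by positivity, min_le_left _ _, fun t ht => ?_⟩
  calc B * t ≤ (|B| + 1) * t := mul_le_mul_of_nonneg_right (by linarith [le_abs_self B]) ht.1
    _ ≤ (|B| + 1) * (R / (|B| + 1)) := by gcongr; exact ht.2.trans (min_le_right _ _)
    _ = R := mul_div_cancel₀ R (by positivity)

lemma abs_mul_sub_mul_sub_le {v κ D w a M K A : ℝ} (hv : |v| ≤ M) (hκ : |κ| ≤ K)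
    (hw : |w| ≤ M) (ha : |a| ≤ A) : |v * κ - D * (w - a)| ≤ M * K + |D| * (M + A) :=
  calc |v * κ - D * (w - a)| ≤ |v| * |κ| + |D| * |w - a| := by
        simpa only [abs_mul] using abs_sub (v * κ) (D * (w - a))
    _ ≤ M * K + |D| * (M + A) := by
        gcongr
        · exact (abs_nonneg v).trans hv
        · exact (abs_sub w a).trans (add_le_add hw ha)

lemma abs_div_mul_le_of_abs_sub_le {x b m y y₀ r : ℝ} (hx : x ∈ Icc 0 b) (hy : |y - y₀| ≤ r) :
    |x / m * y| ≤ |b / m| * (|y₀| + r) := by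
  rw [abs_mul, abs_div, abs_div]
  gcongr
  · exact hx.1
  · exact hx.2
  · linarith [abs_sub_abs_le_abs_sub y y₀]

lemma abs_intervalIntegral_mul_sub_le {a b ε : ℝ} {f g p : ℝ → ℝ} (hab : a ≤ b)
    (hp : IntervalIntegrable p volume a b) (hp0 : ∀ x ∈ Icc a b, 0 ≤ p x)
    (hf : ContinuousOn f (Icc a b)) (hg : ContinuousOn g (Icc a b))
    (hfg : ∀ x ∈ Icc a b, |f x - g x| ≤ ε) :
    |(∫ x in a..b, f x * p x) - ∫ x in a..b, g x * p x| ≤ ε * ∫ x in a..b, p x := by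
  have hfp := hp.continuousOn_mul (uIcc_of_le hab ▸ hf)
  have hgp := hp.continuousOn_mul (uIcc_of_le hab ▸ hg)
  rw [← intervalIntegral.integral_sub hfp hgp, ← intervalIntegral.integral_const_mul]
  refine (intervalIntegral.abs_integral_le_integral_abs hab).trans
    (intervalIntegral.integral_mono_on hab (hfp.sub hgp).abs (hp.const_mul ε) fun x hx => ?_)
  rw [← sub_mul, abs_mul, abs_of_nonneg (hp0 x hx)]
  exact mul_le_mul_of_nonneg_right (hfg x hx) (hp0 x hx)

section ForcedSystem

variable {μ β₀ DS DI T A B M : ℝ} {u v a b : ℝ → ℝ}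

lemma add_sub_add_le_of_hasDerivAt (hDS : 0 ≤ DS) (hDI : 0 ≤ DI)
    (hu : ∀ t ∈ Icc 0 T, HasDerivAt u (v t * (μ - β₀ * u t) - DS * (u t - a t)) t)
    (hv : ∀ t ∈ Icc 0 T, HasDerivAt v (v t * (-μ + β₀ * u t) - DI * (v t - b t)) t)
    (hnn : ∀ t ∈ Icc 0 T, 0 ≤ u t ∧ 0 ≤ v t)
    (ha : ∀ t ∈ Icc 0 T, |a t| ≤ A) (hb : ∀ t ∈ Icc 0 T, |b t| ≤ B) :
    ∀ t ∈ Icc 0 T, u t + v t - (u 0 + v 0) ≤ (DS * A + DI * B) * t :=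
  sub_le_mul_of_hasDerivAt_le (fun t ht => (hu t ht).add (hv t ht)) fun t ht => by
    obtain ⟨hut, hvt⟩ := hnn t ht
    have := mul_le_mul_of_nonneg_left ((le_abs_self (a t)).trans (ha t ht)) hDS
    have := mul_le_mul_of_nonneg_left ((le_abs_self (b t)).trans (hb t ht)) hDI
    linarith [mul_nonneg hDS hut, mul_nonneg hDI hvt]

lemma abs_sub_le_of_hasDerivAt_of_add_le
    (hu : ∀ t ∈ Icc 0 T, HasDerivAt u (v t * (μ - β₀ * u t) - DS * (u t - a t)) t)
    (hv : ∀ t ∈ Icc 0 T, HasDerivAt v (v t * (-μ + β₀ * u t) - DI * (v t - b t)) t)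
    (hnn : ∀ t ∈ Icc 0 T, 0 ≤ u t ∧ 0 ≤ v t)
    (ha : ∀ t ∈ Icc 0 T, |a t| ≤ A) (hb : ∀ t ∈ Icc 0 T, |b t| ≤ B)
    (hM : ∀ t ∈ Icc 0 T, u t + v t ≤ M) :
    ∀ t ∈ Icc 0 T, |u t - u 0| ≤ (M * (|μ| + |β₀| * M) + |DS| * (M + A)) * t ∧
      |v t - v 0| ≤ (M * (|μ| + |β₀| * M) + |DI| * (M + B)) * t := by
  have hbound : ∀ t ∈ Icc 0 T, |u t| ≤ M ∧ |v t| ≤ M ∧ |β₀ * u t| ≤ |β₀| * M := fun t ht => by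
    obtain ⟨hut, hvt⟩ := hnn t ht
    have hut' : |u t| ≤ M := by rw [abs_of_nonneg hut]; linarith [hM t ht]
    refine ⟨hut', by rw [abs_of_nonneg hvt]; linarith [hM t ht], ?_⟩
    rw [abs_mul]
    exact mul_le_mul_of_nonneg_left hut' (abs_nonneg β₀)
  intro t ht
  refine ⟨abs_sub_le_mul_of_hasDerivAt_abs_le hu (fun s hs => ?_) t ht,
    abs_sub_le_mul_of_hasDerivAt_abs_le hv (fun s hs => ?_) t ht⟩ <;>
  obtain ⟨hus, hvs, hβs⟩ := hbound s hs
  · exact abs_mul_sub_mul_sub_le hvs ((abs_sub _ _).trans (by gcongr)) hus (ha s hs)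
  · exact abs_mul_sub_mul_sub_le hvs ((abs_add_le _ _).trans (by rw [abs_neg]; gcongr)) hvs
      (hb s hs)

lemma abs_sub_le_of_hasDerivAt (hT : T ≤ 1) (hDS : 0 ≤ DS) (hDI : 0 ≤ DI)
    (hu : ∀ t ∈ Icc 0 T, HasDerivAt u (v t * (μ - β₀ * u t) - DS * (u t - a t)) t)
    (hv : ∀ t ∈ Icc 0 T, HasDerivAt v (v t * (-μ + β₀ * u t) - DI * (v t - b t)) t)
    (hnn : ∀ t ∈ Icc 0 T, 0 ≤ u t ∧ 0 ≤ v t)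
    (ha : ∀ t ∈ Icc 0 T, |a t| ≤ A) (hb : ∀ t ∈ Icc 0 T, |b t| ≤ B)
    (hM : u 0 + v 0 + DS * A + DI * B ≤ M) :
    ∀ t ∈ Icc 0 T, |u t - u 0| ≤ (M * (|μ| + |β₀| * M) + |DS| * (M + A)) * t ∧
      |v t - v 0| ≤ (M * (|μ| + |β₀| * M) + |DI| * (M + B)) * t := by
  refine abs_sub_le_of_hasDerivAt_of_add_le hu hv hnn ha hb fun t ht => ?_
  have hA := (abs_nonneg _).trans (ha t ht)
  have hB := (abs_nonneg _).trans (hb t ht)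
  have := mul_le_of_le_one_right (by positivity : 0 ≤ DS * A + DI * B) (ht.2.trans hT)
  linarith [add_sub_add_le_of_hasDerivAt hDS hDI hu hv hnn ha hb t ht]

end ForcedSystem

theorem phi_maps_E_into_E_general
    (xmax m μ β₀ DS DI : ℝ) (p : ℝ → ℝ)
    (hxmax : 0 < xmax)
    (hDS : 0 < DS) (hDI : 0 < DI)
    (hp_nonneg : ∀ x ∈ Icc (0:ℝ) xmax, 0 ≤ p x)
    (hp_int : ∫ x in (0:ℝ)..xmax, p x = 1)
    (S₀ I₀ : ℝ → ℝ)
    (hS₀ : ContDiff ℝ 1 S₀) (hI₀ : ContDiff ℝ 1 I₀)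
    (s₀ i₀ : ℝ)
    (hs₀ : s₀ = ∫ x in (0:ℝ)..xmax, S₀ x * p x)
    (hi₀ : i₀ = ∫ x in (0:ℝ)..xmax, I₀ x * p x)
    (R : ℝ) (hR : 1 ≤ R) :
    ∃ T > (0:ℝ), ∀ s i : ℝ → ℝ,
      ContinuousOn s (Icc 0 T) → ContinuousOn i (Icc 0 T) →
      (∀ t ∈ Icc (0:ℝ) T, 0 ≤ s t) → (∀ t ∈ Icc (0:ℝ) T, 0 ≤ i t) →
      s 0 = s₀ → i 0 = i₀ →
      (∀ t ∈ Icc (0:ℝ) T, |s t - s₀| + |i t - i₀| ≤ R) →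
      ∀ S I : ℝ → ℝ → ℝ,
        ContDiffOn ℝ 1 (Function.uncurry S) (Icc 0 xmax ×ˢ Icc 0 T) →
        ContDiffOn ℝ 1 (Function.uncurry I) (Icc 0 xmax ×ˢ Icc 0 T) →
        (∀ x ∈ Icc (0:ℝ) xmax, ∀ t ∈ Icc (0:ℝ) T,
          HasDerivAt (S x) (I x t * (μ - β₀ * S x t) - DS * (S x t - x / m * s t)) t) →
        (∀ x ∈ Icc (0:ℝ) xmax, ∀ t ∈ Icc (0:ℝ) T,
          HasDerivAt (I x) (I x t * (-μ + β₀ * S x t) - DI * (I x t - x / m * i t)) t) →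
        (∀ x ∈ Icc (0:ℝ) xmax, S x 0 = S₀ x) →
        (∀ x ∈ Icc (0:ℝ) xmax, I x 0 = I₀ x) →
        (∀ x ∈ Icc (0:ℝ) xmax, ∀ t ∈ Icc (0:ℝ) T, 0 ≤ S x t ∧ 0 ≤ I x t) →
        (∀ t ∈ Icc (0:ℝ) T,
          0 ≤ ∫ x in (0:ℝ)..xmax, S x t * p x ∧
          0 ≤ ∫ x in (0:ℝ)..xmax, I x t * p x) ∧
        (∫ x in (0:ℝ)..xmax, S x 0 * p x) = s₀ ∧
        (∫ x in (0:ℝ)..xmax, I x 0 * p x) = i₀ ∧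
        ∀ t ∈ Icc (0:ℝ) T,
          |(∫ x in (0:ℝ)..xmax, S x t * p x) - s₀| +
            |(∫ x in (0:ℝ)..xmax, I x t * p x) - i₀| ≤ R := by
  obtain ⟨M₀, hM₀⟩ := isCompact_Icc.bddAbove_image (f := fun x => S₀ x + I₀ x) (K := Icc 0 xmax)
    (hS₀.continuous.add hI₀.continuous).continuousOn
  set A := |xmax / m| * (|s₀| + R)
  set B := |xmax / m| * (|i₀| + R)
  set M := M₀ + DS * A + DI * B
  set BS := M * (|μ| + |β₀| * M) + |DS| * (M + A)
  set BI := M * (|μ| + |β₀| * M) + |DI| * (M + B)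
  have hR₀ : 0 < R := by linarith
  obtain ⟨T, hT, hT1, hTR⟩ := exists_pos_le_one_forall_mul_le (BS + BI) hR₀
  refine ⟨T, hT, fun s i _ _ _ _ _ _ hsi S I hSc hIc hSd hId hS0 hI0 hSI => ?_⟩
  have hlip : ∀ x ∈ Icc 0 xmax, ∀ t ∈ Icc 0 T,
      |S x t - S₀ x| ≤ BS * t ∧ |I x t - I₀ x| ≤ BI * t := by
    intro x hx
    simpa only [hS0 x hx, hI0 x hx] using abs_sub_le_of_hasDerivAt (M := M) hT1 hDS.le hDI.le
      (hSd x hx) (hId x hx) (hSI x hx)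
      (fun t ht => abs_div_mul_le_of_abs_sub_le hx (by linarith [hsi t ht, abs_nonneg (i t - i₀)]))
      (fun t ht => abs_div_mul_le_of_abs_sub_le hx (by linarith [hsi t ht, abs_nonneg (s t - s₀)]))
      (by linarith [hM₀ ⟨x, hx, rfl⟩, hS0 x hx, hI0 x hx])
  have hpint : IntervalIntegrable p volume 0 xmax :=
    intervalIntegral.intervalIntegrable_of_integral_ne_zero (by rw [hp_int]; exact one_ne_zero)
  rw [← uIcc_of_le hxmax.le] at hS0 hI0
  refine ⟨fun t ht => ⟨?_, ?_⟩,
    hs₀ ▸ intervalIntegral.integral_congr fun x hx => by simp only [hS0 x hx],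
    hi₀ ▸ intervalIntegral.integral_congr fun x hx => by simp only [hI0 x hx], fun t ht => ?_⟩
  · exact intervalIntegral.integral_nonneg hxmax.le fun x hx =>
      mul_nonneg (hSI x hx t ht).1 (hp_nonneg x hx)
  · exact intervalIntegral.integral_nonneg hxmax.le fun x hx =>
      mul_nonneg (hSI x hx t ht).2 (hp_nonneg x hx)
  have hS := abs_intervalIntegral_mul_sub_le hxmax.le hpint hp_nonneg
    (hSc.continuousOn.uncurry_right t ht) hS₀.continuous.continuousOn fun x hx => (hlip x hx t ht).1
  have hI := abs_intervalIntegral_mul_sub_le hxmax.le hpint hp_nonneg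
    (hIc.continuousOn.uncurry_right t ht) hI₀.continuous.continuousOn fun x hx => (hlip x hx t ht).2
  simp only [← hs₀, ← hi₀, hp_int, mul_one] at hS hI
  linarith [hTR t ht]

/-- First part of Proposition 3 (`H_2`): for `T > 0` small enough, the map
`(s,i) ↦ (ŝ,î)` sends the set `E` (continuous nonnegative functions staying at
distance at most `R` from `(s₀,i₀)`) into itself. -/
theorem phi_maps_E_into_E
    (xmax m μ β₀ DS DI : ℝ) (p : ℝ → ℝ)
    (hxmax : 0 < xmax) (hm : 0 < m) (hμ : 0 < μ) (hβ₀ : 0 < β₀)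
    (hDS : 0 < DS) (hDI : 0 < DI)
    (hp_nonneg : ∀ x ∈ Icc (0:ℝ) xmax, 0 ≤ p x) (hp0 : p 0 = 0)
    (hp_int : ∫ x in (0:ℝ)..xmax, p x = 1)
    (hm_def : m = ∫ x in (0:ℝ)..xmax, x * p x)
    (S₀ I₀ : ℝ → ℝ)
    (hS₀ : ContDiff ℝ 1 S₀) (hI₀ : ContDiff ℝ 1 I₀)
    (hS₀nonneg : ∀ x ∈ Icc (0:ℝ) xmax, 0 ≤ S₀ x)
    (hI₀nonneg : ∀ x ∈ Icc (0:ℝ) xmax, 0 ≤ I₀ x)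
    (hS₀zero : S₀ 0 = 0) (hI₀zero : I₀ 0 = 0)
    (s₀ i₀ : ℝ)
    (hs₀ : s₀ = ∫ x in (0:ℝ)..xmax, S₀ x * p x)
    (hi₀ : i₀ = ∫ x in (0:ℝ)..xmax, I₀ x * p x)
    (hs₀pos : 0 < s₀) (hi₀pos : 0 < i₀)
    (R : ℝ) (hR : 1 ≤ R) :
    ∃ T > (0:ℝ), ∀ s i : ℝ → ℝ,
      ContinuousOn s (Icc 0 T) → ContinuousOn i (Icc 0 T) →
      (∀ t ∈ Icc (0:ℝ) T, 0 ≤ s t) → (∀ t ∈ Icc (0:ℝ) T, 0 ≤ i t) →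
      s 0 = s₀ → i 0 = i₀ →
      (∀ t ∈ Icc (0:ℝ) T, |s t - s₀| + |i t - i₀| ≤ R) →
      ∀ S I : ℝ → ℝ → ℝ,
        ContDiffOn ℝ 1 (Function.uncurry S) (Icc 0 xmax ×ˢ Icc 0 T) →
        ContDiffOn ℝ 1 (Function.uncurry I) (Icc 0 xmax ×ˢ Icc 0 T) →
        (∀ x ∈ Icc (0:ℝ) xmax, ∀ t ∈ Icc (0:ℝ) T,
          HasDerivAt (S x) (I x t * (μ - β₀ * S x t) - DS * (S x t - x / m * s t)) t) →
        (∀ x ∈ Icc (0:ℝ) xmax, ∀ t ∈ Icc (0:ℝ) T,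
          HasDerivAt (I x) (I x t * (-μ + β₀ * S x t) - DI * (I x t - x / m * i t)) t) →
        (∀ x ∈ Icc (0:ℝ) xmax, S x 0 = S₀ x) →
        (∀ x ∈ Icc (0:ℝ) xmax, I x 0 = I₀ x) →
        (∀ x ∈ Icc (0:ℝ) xmax, ∀ t ∈ Icc (0:ℝ) T, 0 ≤ S x t ∧ 0 ≤ I x t) →
        (∀ t ∈ Icc (0:ℝ) T,
          0 ≤ ∫ x in (0:ℝ)..xmax, S x t * p x ∧
          0 ≤ ∫ x in (0:ℝ)..xmax, I x t * p x) ∧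
        (∫ x in (0:ℝ)..xmax, S x 0 * p x) = s₀ ∧
        (∫ x in (0:ℝ)..xmax, I x 0 * p x) = i₀ ∧
        ∀ t ∈ Icc (0:ℝ) T,
          |(∫ x in (0:ℝ)..xmax, S x t * p x) - s₀| +
            |(∫ x in (0:ℝ)..xmax, I x t * p x) - i₀| ≤ R :=
  phi_maps_E_into_E_general xmax m μ β₀ DS DI p hxmax hDS hDI hp_nonneg hp_int S₀ I₀ hS₀ hI₀ s₀ i₀
    hs₀ hi₀ R hR
end

section
/- Let R ≥ 1, n₀ = s₀ + i₀, d = min(D_I, D_S), D = max(D_I, D_S), N₊(x) = (D/d)(n₀ + R)(x/m) + N(x,0), C(x) = 2β₀N₊(x) + μ + D_I + D and M = max_{x ∈ J} C(x). Let T > 0 and, for j = 1, 2, let (s_j, i_j) be continuous nonnegative functions on [0,T] with s_j(0) = s₀, i_j(0) = i₀ and sup_t(|s_j(t) − s₀| + |i_j(t) − i₀|) ≤ R. Let (Ŝ_j, Î_j) be the solution of system (Ĉ) with data (s_j, i_j) and initial data (S₀, I₀), with Ŝ_j, Î_j ≥ 0 and Ŝ_j + Î_j ≤ N₊ on J ×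 [0,T], and set ŝ_j(t) = ⟨Ŝ_j(·,t)⟩, î_j(t) = ⟨Î_j(·,t)⟩. Then sup_{t ∈ [0,T]}(|ŝ₂(t) − ŝ₁(t)| + |î₂(t) − î₁(t)|) ≤ 8(e^{MT} − 1) · sup_{t ∈ [0,T]}(|s₂(t) − s₁(t)| + |i₂(t) − i₁(t)|). -/
/-!
For a fixed trait `x`, `(Ŝ, Î)` solves an ODE whose vector field is Lipschitz on the box
`|Ŝ|, |Î| ≤ N₊(x)` with constant `μ + 2β₀N₊(x) + D ≤ M`, and the data `(s, i)` enter only through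
the forcing `(x/m)(s, i)`, with weight at most `D ≤ M`. Grönwall's inequality for two solutions
with the same initial values gives `|Ŝ₂ - Ŝ₁|, |Î₂ - Î₁| ≤ (x/m) Δ (e^{MT} - 1)` pointwise, where
`Δ` is the sup distance of the data, and averaging against `p` with `⟨x/m⟩ = 1` bounds each of
`|ŝ₂ - ŝ₁|`, `|î₂ - î₁|` by `Δ (e^{MT} - 1)`. The same Grönwall estimate for two traits `x, y`
shows that the solutions are Lipschitz in `x`, so the averages are genuine integrals.
-/

open Real Set Metric MeasureTheory

theorem gronwallBound_mul (δ K ε r x : ℝ) :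
    gronwallBound (δ * r) K (ε * r) x = gronwallBound δ K ε x * r := by
  unfold gronwallBound
  split_ifs <;> ring

theorem gronwallBound_zero_mul_self (K c x : ℝ) :
    gronwallBound 0 K (K * c) x = c * (exp (K * x) - 1) := by
  unfold gronwallBound
  split_ifs with hK
  · simp [hK]
  · field_simp
    ring

theorem abs_fst_sub_le_dist (z₂ z₁ : ℝ × ℝ) : |z₂.1 - z₁.1| ≤ dist z₂ z₁ := by
  rw [Prod.dist_eq, ← Real.dist_eq]
  exact le_max_left _ _

theorem abs_snd_sub_le_dist (z₂ z₁ : ℝ × ℝ) : |z₂.2 - z₁.2| ≤ dist z₂ z₁ := by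
  rw [Prod.dist_eq, ← Real.dist_eq]
  exact le_max_right _ _

theorem mem_closedBall_zero_of_nonneg_of_add_le {a b N : ℝ} (h : 0 ≤ a ∧ 0 ≤ b ∧ a + b ≤ N) :
    (a, b) ∈ closedBall 0 N := by
  obtain ⟨ha, hb, hN⟩ := h
  rw [mem_closedBall_zero_iff, norm_prod_le_iff, Real.norm_of_nonneg ha, Real.norm_of_nonneg hb]
  constructor <;> linarith

theorem norm_le_norm_add_of_abs_sub_add_abs_sub_le {a b a₀ b₀ R : ℝ}
    (h : |a - a₀| + |b - b₀| ≤ R) : ‖(a, b)‖ ≤ ‖(a₀, b₀)‖ + R := by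
  refine (norm_le_norm_add_norm_sub' _ (a₀, b₀)).trans (add_le_add_right ?_ _)
  rw [Prod.mk_sub_mk, Prod.norm_def, Real.norm_eq_abs, Real.norm_eq_abs]
  exact (max_le_add_of_nonneg (abs_nonneg _) (abs_nonneg _)).trans h

theorem le_ciSup_abs_sub_add_abs_sub {α : Type*} {A : Set α} {a₀ b₀ R : ℝ} {t : α}
    {a₁ b₁ a₂ b₂ : α → ℝ}
    (h₁ : ∀ τ ∈ A, |a₁ τ - a₀| + |b₁ τ - b₀| ≤ R) (h₂ : ∀ τ ∈ A, |a₂ τ - a₀| + |b₂ τ - b₀| ≤ R)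
    (ht : t ∈ A) :
    |a₂ t - a₁ t| + |b₂ t - b₁ t| ≤ ⨆ τ : A, (|a₂ τ - a₁ τ| + |b₂ τ - b₁ τ|) := by
  refine le_ciSup (f := fun τ : A => |a₂ τ - a₁ τ| + |b₂ τ - b₁ τ|) ⟨2 * R, ?_⟩ ⟨t, ht⟩
  rintro _ ⟨τ, rfl⟩
  have ha := dist_triangle_right (a₂ τ) (a₁ τ) a₀
  have hb := dist_triangle_right (b₂ τ) (b₁ τ) b₀
  simp only [Real.dist_eq] at ha hb
  linarith [h₁ τ τ.2, h₂ τ τ.2]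

theorem abs_integral_mul_sub_le {a b m c : ℝ} {p f₁ f₂ : ℝ → ℝ} (hab : a ≤ b)
    (hp : IntervalIntegrable p volume a b) (hp₀ : ∀ x ∈ Icc a b, 0 ≤ p x)
    (hf₁ : ContinuousOn f₁ (Icc a b)) (hf₂ : ContinuousOn f₂ (Icc a b))
    (hm : m = ∫ x in a..b, x * p x) (hm₀ : m ≠ 0) (h : ∀ x ∈ Icc a b, |f₂ x - f₁ x| ≤ x / m * c) :
    |(∫ x in a..b, f₂ x * p x) - ∫ x in a..b, f₁ x * p x| ≤ c := by
  rw [← uIcc_of_le hab] at hf₁ hf₂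
  have hpf₁ := hp.continuousOn_mul hf₁
  have hpf₂ := hp.continuousOn_mul hf₂
  have hxp := hp.continuousOn_mul (g := id) continuousOn_id
  rw [← intervalIntegral.integral_sub hpf₂ hpf₁]
  calc _ ≤ ∫ x in a..b, |f₂ x * p x - f₁ x * p x| :=
        intervalIntegral.abs_integral_le_integral_abs hab
    _ ≤ ∫ x in a..b, c / m * (x * p x) := by
        refine intervalIntegral.integral_mono_on hab (hpf₂.sub hpf₁).abs (hxp.const_mul _)
          fun x hx => ?_
        rw [← sub_mul, abs_mul, abs_of_nonneg (hp₀ x hx)]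
        calc _ ≤ x / m * c * p x := mul_le_mul_of_nonneg_right (h x hx) (hp₀ x hx)
          _ = c / m * (x * p x) := by ring
    _ = c := by rw [intervalIntegral.integral_const_mul, ← hm, div_mul_cancel₀ _ hm₀]

/-- The right-hand side of `(Ĉ)` at a fixed trait `x`, for `z = (Ŝ, Î)` and forcing
`w = (x/m) (s(t), i(t))`. Since `ℝ × ℝ` carries the sup norm, `closedBall 0 B` is the box
`|Ŝ|, |Î| ≤ B`. -/
def hatField (μ β₀ DS DI : ℝ) (w z : ℝ × ℝ) : ℝ × ℝ :=
  (z.2 * (μ - β₀ * z.1) - DS * (z.1 - w.1), z.2 * (-μ + β₀ * z.1) - DI * (z.2 - w.2))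

section HatField

variable {μ β₀ DS DI : ℝ}

theorem abs_incidence_sub_le (hμ : 0 ≤ μ) (hβ₀ : 0 ≤ β₀) {B : ℝ} {z₁ z₂ : ℝ × ℝ}
    (h₁ : z₁ ∈ closedBall 0 B) (h₂ : z₂ ∈ closedBall 0 B) :
    |z₂.2 * (μ - β₀ * z₂.1) - z₁.2 * (μ - β₀ * z₁.1)| ≤ (μ + 2 * β₀ * B) * dist z₂ z₁ := by
  rw [mem_closedBall_zero_iff, norm_prod_le_iff, Real.norm_eq_abs, Real.norm_eq_abs] at h₁ h₂
  have hd₁ := abs_fst_sub_le_dist z₂ z₁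
  have hd₂ := abs_snd_sub_le_dist z₂ z₁
  have hsplit : z₂.2 * (μ - β₀ * z₂.1) - z₁.2 * (μ - β₀ * z₁.1) =
      μ * (z₂.2 - z₁.2) - β₀ * ((z₂.2 - z₁.2) * z₂.1 + z₁.2 * (z₂.1 - z₁.1)) := by ring
  rw [hsplit]
  calc _ ≤ μ * |z₂.2 - z₁.2| + β₀ * (|z₂.2 - z₁.2| * |z₂.1| + |z₁.2| * |z₂.1 - z₁.1|) := by
        refine (abs_sub _ _).trans (add_le_add ?_ ?_)
        · rw [abs_mul, abs_of_nonneg hμ]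
        · rw [abs_mul, abs_of_nonneg hβ₀, ← abs_mul, ← abs_mul]
          exact mul_le_mul_of_nonneg_left (abs_add_le _ _) hβ₀
    _ ≤ μ * dist z₂ z₁ + β₀ * (dist z₂ z₁ * B + B * dist z₂ z₁) := by
        have hB : 0 ≤ B := (abs_nonneg _).trans h₂.1
        gcongr
        · exact h₂.1
        · exact h₁.2
    _ = (μ + 2 * β₀ * B) * dist z₂ z₁ := by ring

theorem lipschitzOnWith_hatField (hμ : 0 ≤ μ) (hβ₀ : 0 ≤ β₀) (hDS : 0 ≤ DS) (hDI : 0 ≤ DI)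
    (B : ℝ) (w : ℝ × ℝ) :
    LipschitzOnWith (μ + 2 * β₀ * B + max DS DI).toNNReal (hatField μ β₀ DS DI w)
      (closedBall 0 B) := by
  refine LipschitzOnWith.of_dist_le' fun z₂ h₂ z₁ h₁ => ?_
  have hg := abs_incidence_sub_le hμ hβ₀ h₁ h₂
  have hd₁ := abs_fst_sub_le_dist z₂ z₁
  have hd₂ := abs_snd_sub_le_dist z₂ z₁
  have hDSd := mul_le_mul_of_nonneg_left hd₁ hDS
  have hDId := mul_le_mul_of_nonneg_left hd₂ hDI
  have hDS_le := mul_le_mul_of_nonneg_right (le_max_left DS DI) (dist_nonneg (x := z₂) (y := z₁))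
  have hDI_le := mul_le_mul_of_nonneg_right (le_max_right DS DI) (dist_nonneg (x := z₂) (y := z₁))
  rw [Prod.dist_eq, Real.dist_eq, Real.dist_eq]
  refine max_le ?_ ?_
  · have : (hatField μ β₀ DS DI w z₂).1 - (hatField μ β₀ DS DI w z₁).1 =
        (z₂.2 * (μ - β₀ * z₂.1) - z₁.2 * (μ - β₀ * z₁.1)) - DS * (z₂.1 - z₁.1) := by
      simp only [hatField]; ring
    rw [this]
    refine (abs_sub _ _).trans ?_
    rw [abs_mul, abs_of_nonneg hDS]
    linarith
  · have : (hatField μ β₀ DS DI w z₂).2 - (hatField μ β₀ DS DI w z₁).2 =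
        -(z₂.2 * (μ - β₀ * z₂.1) - z₁.2 * (μ - β₀ * z₁.1)) - DI * (z₂.2 - z₁.2) := by
      simp only [hatField]; ring
    rw [this]
    refine (abs_sub _ _).trans ?_
    rw [abs_neg, abs_mul, abs_of_nonneg hDI]
    linarith

theorem dist_hatField_le (hDS : 0 ≤ DS) (hDI : 0 ≤ DI) (w₁ w₂ z : ℝ × ℝ) :
    dist (hatField μ β₀ DS DI w₂ z) (hatField μ β₀ DS DI w₁ z) ≤ max DS DI * dist w₂ w₁ := by
  have hD : 0 ≤ max DS DI := le_max_of_le_left hDS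
  simp only [Prod.dist_eq, Real.dist_eq, hatField]
  refine max_le ?_ ?_
  · rw [show ∀ g, g - DS * (z.1 - w₂.1) - (g - DS * (z.1 - w₁.1)) = DS * (w₂.1 - w₁.1) by
      intro; ring, abs_mul, abs_of_nonneg hDS]
    exact mul_le_mul (le_max_left _ _) (le_max_left _ _) (abs_nonneg _) hD
  · rw [show ∀ g, g - DI * (z.2 - w₂.2) - (g - DI * (z.2 - w₁.2)) = DI * (w₂.2 - w₁.2) by
      intro; ring, abs_mul, abs_of_nonneg hDI]
    exact mul_le_mul (le_max_right _ _) (le_max_right _ _) (abs_nonneg _) hD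

theorem dist_le_gronwallBound_of_hatField (hμ : 0 ≤ μ) (hβ₀ : 0 ≤ β₀) (hDS : 0 ≤ DS)
    (hDI : 0 ≤ DI) {T B K δ ε t : ℝ} {z₁ z₂ w₁ w₂ : ℝ → ℝ × ℝ}
    (hz₁ : ∀ τ ∈ Icc 0 T, HasDerivAt z₁ (hatField μ β₀ DS DI (w₁ τ) (z₁ τ)) τ)
    (hz₂ : ∀ τ ∈ Icc 0 T, HasDerivAt z₂ (hatField μ β₀ DS DI (w₂ τ) (z₂ τ)) τ)
    (hB₁ : ∀ τ ∈ Icc 0 T, z₁ τ ∈ closedBall 0 B) (hB₂ : ∀ τ ∈ Icc 0 T, z₂ τ ∈ closedBall 0 B)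
    (hK : μ + 2 * β₀ * B + max DS DI ≤ K)
    (hε : ∀ τ ∈ Icc 0 T, max DS DI * dist (w₂ τ) (w₁ τ) ≤ ε)
    (hδ : dist (z₂ 0) (z₁ 0) ≤ δ) (ht : t ∈ Icc 0 T) :
    dist (z₂ t) (z₁ t) ≤ gronwallBound δ K ε t := by
  have hB : 0 ≤ B := nonempty_closedBall.mp ⟨_, hB₁ t ht⟩
  have hK₀ : 0 ≤ K := le_trans (by positivity) hK
  have hLip : ∀ τ ∈ Ico 0 T, LipschitzOnWith K.toNNReal (hatField μ β₀ DS DI (w₁ τ))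
      (closedBall 0 B) := fun τ _ =>
    (lipschitzOnWith_hatField hμ hβ₀ hDS hDI B (w₁ τ)).weaken (Real.toNNReal_le_toNNReal hK)
  have hcont : ∀ {z : ℝ → ℝ × ℝ} {z' : ℝ → ℝ × ℝ}, (∀ τ ∈ Icc 0 T, HasDerivAt z (z' τ) τ) →
      ContinuousOn z (Icc 0 T) := fun hz τ hτ => (hz τ hτ).continuousAt.continuousWithinAt
  have h := dist_le_of_approx_trajectories_ODE_of_mem hLip (hcont hz₂)
    (fun τ hτ => (hz₂ τ (Ico_subset_Icc_self hτ)).hasDerivWithinAt)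
    (fun τ hτ => (dist_hatField_le hDS hDI _ _ _).trans (hε τ (Ico_subset_Icc_self hτ)))
    (fun τ hτ => hB₂ τ (Ico_subset_Icc_self hτ)) (hcont hz₁)
    (fun τ hτ => (hz₁ τ (Ico_subset_Icc_self hτ)).hasDerivWithinAt)
    (fun τ _ => (dist_self _).le) (fun τ hτ => hB₁ τ (Ico_subset_Icc_self hτ)) hδ t ht
  rwa [Real.coe_toNNReal K hK₀, add_zero, sub_zero] at h

theorem dist_le_mul_exp_sub_one_of_hatField (hμ : 0 ≤ μ) (hβ₀ : 0 ≤ β₀) (hDS : 0 ≤ DS)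
    (hDI : 0 ≤ DI) {T B M c t : ℝ} {z₁ z₂ w₁ w₂ : ℝ → ℝ × ℝ}
    (hz₁ : ∀ τ ∈ Icc 0 T, HasDerivAt z₁ (hatField μ β₀ DS DI (w₁ τ) (z₁ τ)) τ)
    (hz₂ : ∀ τ ∈ Icc 0 T, HasDerivAt z₂ (hatField μ β₀ DS DI (w₂ τ) (z₂ τ)) τ)
    (hB₁ : ∀ τ ∈ Icc 0 T, z₁ τ ∈ closedBall 0 B) (hB₂ : ∀ τ ∈ Icc 0 T, z₂ τ ∈ closedBall 0 B)
    (hM : μ + 2 * β₀ * B + max DS DI ≤ M) (hw : ∀ τ ∈ Icc 0 T, dist (w₂ τ) (w₁ τ) ≤ c)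
    (h₀ : z₂ 0 = z₁ 0) (ht : t ∈ Icc 0 T) :
    dist (z₂ t) (z₁ t) ≤ c * (exp (M * T) - 1) := by
  have hB : 0 ≤ B := nonempty_closedBall.mp ⟨_, hB₁ t ht⟩
  have hM₀ : 0 ≤ M := le_trans (by positivity) hM
  have hc : 0 ≤ c := dist_nonneg.trans (hw t ht)
  have hDM : max DS DI ≤ M := le_trans (by nlinarith) hM
  calc dist (z₂ t) (z₁ t) ≤ gronwallBound 0 M (M * c) t :=
        dist_le_gronwallBound_of_hatField hμ hβ₀ hDS hDI hz₁ hz₂ hB₁ hB₂ hM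
          (fun τ hτ => mul_le_mul hDM (hw τ hτ) dist_nonneg hM₀) (by rw [h₀, dist_self]) ht
    _ = c * (exp (M * t) - 1) := gronwallBound_zero_mul_self M c t
    _ ≤ c * (exp (M * T) - 1) := by gcongr; exact ht.2

theorem lipschitzOnWith_hatSolution (hμ : 0 ≤ μ) (hβ₀ : 0 ≤ β₀) (hDS : 0 ≤ DS) (hDI : 0 ≤ DI)
    {m T B C t : ℝ} {L : NNReal} {X : Set ℝ} {Z : ℝ → ℝ → ℝ × ℝ} {Z₀ w : ℝ → ℝ × ℝ}
    (hm : 0 < m)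
    (hZ : ∀ x ∈ X, ∀ τ ∈ Icc 0 T,
      HasDerivAt (Z x) (hatField μ β₀ DS DI ((x / m) • w τ) (Z x τ)) τ)
    (hB : ∀ x ∈ X, ∀ τ ∈ Icc 0 T, Z x τ ∈ closedBall 0 B) (hw : ∀ τ ∈ Icc 0 T, ‖w τ‖ ≤ C)
    (hZ₀ : ∀ x ∈ X, Z x 0 = Z₀ x) (hL : LipschitzOnWith L Z₀ X) (ht : t ∈ Icc 0 T) :
    LipschitzOnWith (gronwallBound L (μ + 2 * β₀ * B + max DS DI) (max DS DI * C / m) t).toNNReal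
      (fun x => Z x t) X := by
  refine LipschitzOnWith.of_dist_le' fun x hx y hy => ?_
  have hforcing : ∀ τ ∈ Icc 0 T,
      max DS DI * dist ((x / m) • w τ) ((y / m) • w τ) ≤ max DS DI * C / m * dist x y := by
    intro τ hτ
    have hD : 0 ≤ max DS DI := le_max_of_le_left hDS
    rw [dist_eq_norm, ← sub_smul, norm_smul, ← sub_div, Real.norm_eq_abs, abs_div,
      abs_of_pos hm, ← Real.dist_eq]
    calc max DS DI * (dist x y / m * ‖w τ‖) ≤ max DS DI * (dist x y / m * C) := by
          gcongr; exact hw τ hτ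
      _ = max DS DI * C / m * dist x y := by ring
  have hinit : dist (Z x 0) (Z y 0) ≤ L * dist x y := by
    rw [hZ₀ x hx, hZ₀ y hy]
    exact hL.dist_le_mul x hx y hy
  have h := dist_le_gronwallBound_of_hatField hμ hβ₀ hDS hDI (hZ y hy) (hZ x hx) (hB y hy)
    (hB x hx) le_rfl hforcing hinit ht
  rwa [gronwallBound_mul] at h

theorem dist_hatSolution_le (hμ : 0 ≤ μ) (hβ₀ : 0 ≤ β₀) (hDS : 0 ≤ DS) (hDI : 0 ≤ DI)
    {x m T N M Δ t : ℝ} {s₁ i₁ s₂ i₂ S₁ I₁ S₂ I₂ : ℝ → ℝ} (hxm : 0 ≤ x / m)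
    (hS₁ : ∀ τ ∈ Icc 0 T,
      HasDerivAt S₁ (I₁ τ * (μ - β₀ * S₁ τ) - DS * (S₁ τ - x / m * s₁ τ)) τ)
    (hI₁ : ∀ τ ∈ Icc 0 T,
      HasDerivAt I₁ (I₁ τ * (-μ + β₀ * S₁ τ) - DI * (I₁ τ - x / m * i₁ τ)) τ)
    (hS₂ : ∀ τ ∈ Icc 0 T,
      HasDerivAt S₂ (I₂ τ * (μ - β₀ * S₂ τ) - DS * (S₂ τ - x / m * s₂ τ)) τ)
    (hI₂ : ∀ τ ∈ Icc 0 T,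
      HasDerivAt I₂ (I₂ τ * (-μ + β₀ * S₂ τ) - DI * (I₂ τ - x / m * i₂ τ)) τ)
    (h₁ : ∀ τ ∈ Icc 0 T, 0 ≤ S₁ τ ∧ 0 ≤ I₁ τ ∧ S₁ τ + I₁ τ ≤ N)
    (h₂ : ∀ τ ∈ Icc 0 T, 0 ≤ S₂ τ ∧ 0 ≤ I₂ τ ∧ S₂ τ + I₂ τ ≤ N)
    (hM : μ + 2 * β₀ * N + max DS DI ≤ M)
    (hΔ : ∀ τ ∈ Icc 0 T, |s₂ τ - s₁ τ| + |i₂ τ - i₁ τ| ≤ Δ)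
    (hS₀ : S₂ 0 = S₁ 0) (hI₀ : I₂ 0 = I₁ 0) (ht : t ∈ Icc 0 T) :
    dist (S₂ t, I₂ t) (S₁ t, I₁ t) ≤ x / m * (Δ * (exp (M * T) - 1)) := by
  refine (dist_le_mul_exp_sub_one_of_hatField (c := x / m * Δ)
    (w₁ := fun τ => (x / m) • (s₁ τ, i₁ τ)) (w₂ := fun τ => (x / m) • (s₂ τ, i₂ τ))
    hμ hβ₀ hDS hDI (fun τ hτ => (hS₁ τ hτ).prodMk (hI₁ τ hτ))
    (fun τ hτ => (hS₂ τ hτ).prodMk (hI₂ τ hτ))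
    (fun τ hτ => mem_closedBall_zero_of_nonneg_of_add_le (h₁ τ hτ))
    (fun τ hτ => mem_closedBall_zero_of_nonneg_of_add_le (h₂ τ hτ)) hM (fun τ hτ => ?_)
    (by rw [hS₀, hI₀]) ht).trans_eq (by ring)
  rw [dist_smul₀, Real.norm_of_nonneg hxm, Prod.dist_eq, Real.dist_eq, Real.dist_eq]
  exact mul_le_mul_of_nonneg_left
    ((max_le_add_of_nonneg (abs_nonneg _) (abs_nonneg _)).trans (hΔ τ hτ)) hxm

theorem continuousOn_hatSolution (hμ : 0 ≤ μ) (hβ₀ : 0 ≤ β₀) (hDS : 0 ≤ DS) (hDI : 0 ≤ DI)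
    {m T B R s₀ i₀ t : ℝ} {X : Set ℝ} {N s i S₀ I₀ : ℝ → ℝ} {S I : ℝ → ℝ → ℝ}
    (hm : 0 < m) (hX : IsCompact X)
    (hS : ∀ x ∈ X, ∀ τ ∈ Icc 0 T,
      HasDerivAt (S x) (I x τ * (μ - β₀ * S x τ) - DS * (S x τ - x / m * s τ)) τ)
    (hI : ∀ x ∈ X, ∀ τ ∈ Icc 0 T,
      HasDerivAt (I x) (I x τ * (-μ + β₀ * S x τ) - DI * (I x τ - x / m * i τ)) τ)
    (hpos : ∀ x ∈ X, ∀ τ ∈ Icc 0 T, 0 ≤ S x τ ∧ 0 ≤ I x τ ∧ S x τ + I x τ ≤ N x)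
    (hN : ∀ x ∈ X, N x ≤ B) (hE : ∀ τ ∈ Icc 0 T, |s τ - s₀| + |i τ - i₀| ≤ R)
    (hSinit : ∀ x ∈ X, S x 0 = S₀ x) (hIinit : ∀ x ∈ X, I x 0 = I₀ x)
    (hS₀ : ContDiff ℝ 1 S₀) (hI₀ : ContDiff ℝ 1 I₀) (ht : t ∈ Icc 0 T) :
    ContinuousOn (fun x => (S x t, I x t)) X := by
  obtain ⟨L, hL⟩ :=
    (hS₀.prodMk hI₀).locallyLipschitz.locallyLipschitzOn.exists_lipschitzOnWith_of_compact hX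
  refine (lipschitzOnWith_hatSolution (w := fun τ => (s τ, i τ)) hμ hβ₀ hDS hDI hm
    (fun x hx τ hτ => (hS x hx τ hτ).prodMk (hI x hx τ hτ))
    (fun x hx τ hτ => closedBall_subset_closedBall (hN x hx)
      (mem_closedBall_zero_of_nonneg_of_add_le (hpos x hx τ hτ)))
    (fun τ hτ => norm_le_norm_add_of_abs_sub_add_abs_sub_le (hE τ hτ))
    (fun x hx => ?_) hL ht).continuousOn
  rw [hSinit x hx, hIinit x hx]

end HatField

theorem contraction_estimate_general_case_general
    (xmax m μ β₀ DS DI : ℝ) (p : ℝ → ℝ)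
    (hxmax : 0 < xmax) (hm : 0 < m) (hμ : 0 < μ) (hβ₀ : 0 < β₀)
    (hDS : 0 < DS) (hDI : 0 < DI)
    (hp_nonneg : ∀ x ∈ Icc (0:ℝ) xmax, 0 ≤ p x)
    (hp_int : ∫ x in (0:ℝ)..xmax, p x = 1)
    (hm_def : m = ∫ x in (0:ℝ)..xmax, x * p x)
    (S₀ I₀ : ℝ → ℝ)
    (hS₀ : ContDiff ℝ 1 S₀) (hI₀ : ContDiff ℝ 1 I₀)
    (s₀ i₀ : ℝ)
    (R : ℝ)
    (Nplus Cfn : ℝ → ℝ)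
    (hCfn : ∀ x, Cfn x = 2 * β₀ * Nplus x + μ + DI + max DI DS)
    (M : ℝ) (hM : IsGreatest (Cfn '' Icc (0:ℝ) xmax) M)
    (T : ℝ)
    (s₁ i₁ s₂ i₂ : ℝ → ℝ)
    (h₁E : ∀ t ∈ Icc (0:ℝ) T, |s₁ t - s₀| + |i₁ t - i₀| ≤ R)
    (h₂E : ∀ t ∈ Icc (0:ℝ) T, |s₂ t - s₀| + |i₂ t - i₀| ≤ R)
    (S₁ I₁ S₂ I₂ : ℝ → ℝ → ℝ)
    (hS₁eq : ∀ x ∈ Icc (0:ℝ) xmax, ∀ t ∈ Icc (0:ℝ) T,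
      HasDerivAt (S₁ x) (I₁ x t * (μ - β₀ * S₁ x t) - DS * (S₁ x t - x / m * s₁ t)) t)
    (hI₁eq : ∀ x ∈ Icc (0:ℝ) xmax, ∀ t ∈ Icc (0:ℝ) T,
      HasDerivAt (I₁ x) (I₁ x t * (-μ + β₀ * S₁ x t) - DI * (I₁ x t - x / m * i₁ t)) t)
    (hS₂eq : ∀ x ∈ Icc (0:ℝ) xmax, ∀ t ∈ Icc (0:ℝ) T,
      HasDerivAt (S₂ x) (I₂ x t * (μ - β₀ * S₂ x t) - DS * (S₂ x t - x / m * s₂ t)) t)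
    (hI₂eq : ∀ x ∈ Icc (0:ℝ) xmax, ∀ t ∈ Icc (0:ℝ) T,
      HasDerivAt (I₂ x) (I₂ x t * (-μ + β₀ * S₂ x t) - DI * (I₂ x t - x / m * i₂ t)) t)
    (hS₁init : ∀ x ∈ Icc (0:ℝ) xmax, S₁ x 0 = S₀ x)
    (hI₁init : ∀ x ∈ Icc (0:ℝ) xmax, I₁ x 0 = I₀ x)
    (hS₂init : ∀ x ∈ Icc (0:ℝ) xmax, S₂ x 0 = S₀ x)
    (hI₂init : ∀ x ∈ Icc (0:ℝ) xmax, I₂ x 0 = I₀ x)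
    (h₁pos : ∀ x ∈ Icc (0:ℝ) xmax, ∀ t ∈ Icc (0:ℝ) T,
      0 ≤ S₁ x t ∧ 0 ≤ I₁ x t ∧ S₁ x t + I₁ x t ≤ Nplus x)
    (h₂pos : ∀ x ∈ Icc (0:ℝ) xmax, ∀ t ∈ Icc (0:ℝ) T,
      0 ≤ S₂ x t ∧ 0 ≤ I₂ x t ∧ S₂ x t + I₂ x t ≤ Nplus x) :
    ∀ t ∈ Icc (0:ℝ) T,
      |(∫ x in (0:ℝ)..xmax, S₂ x t * p x) - ∫ x in (0:ℝ)..xmax, S₁ x t * p x| +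
        |(∫ x in (0:ℝ)..xmax, I₂ x t * p x) - ∫ x in (0:ℝ)..xmax, I₁ x t * p x| ≤
      8 * (Real.exp (M * T) - 1) *
        ⨆ τ : Icc (0:ℝ) T, (|s₂ τ - s₁ τ| + |i₂ τ - i₁ τ|) := by
  intro t ht
  have hMC : ∀ x ∈ Icc 0 xmax, μ + 2 * β₀ * Nplus x + max DS DI ≤ M := fun x hx => by
    have := hM.2 (mem_image_of_mem Cfn hx)
    rw [hCfn, max_comm] at this
    linarith
  have hNB : ∀ x ∈ Icc 0 xmax, Nplus x ≤ (M - μ - max DS DI) / (2 * β₀) := fun x hx => by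
    rw [le_div_iff₀ (by positivity)]
    linarith [hMC x hx]
  have hpoint : ∀ x ∈ Icc 0 xmax, dist (S₂ x t, I₂ x t) (S₁ x t, I₁ x t) ≤
      x / m * ((⨆ τ : Icc (0:ℝ) T, (|s₂ τ - s₁ τ| + |i₂ τ - i₁ τ|)) * (exp (M * T) - 1)) :=
    fun x hx => dist_hatSolution_le hμ.le hβ₀.le hDS.le hDI.le (div_nonneg hx.1 hm.le)
      (hS₁eq x hx) (hI₁eq x hx) (hS₂eq x hx) (hI₂eq x hx) (h₁pos x hx) (h₂pos x hx) (hMC x hx)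
      (fun τ hτ => le_ciSup_abs_sub_add_abs_sub h₁E h₂E hτ)
      (by rw [hS₁init x hx, hS₂init x hx]) (by rw [hI₁init x hx, hI₂init x hx]) ht
  have hcont₁ := continuousOn_hatSolution hμ.le hβ₀.le hDS.le hDI.le hm isCompact_Icc hS₁eq hI₁eq
    h₁pos hNB h₁E hS₁init hI₁init hS₀ hI₀ ht
  have hcont₂ := continuousOn_hatSolution hμ.le hβ₀.le hDS.le hDI.le hm isCompact_Icc hS₂eq hI₂eq
    h₂pos hNB h₂E hS₂init hI₂init hS₀ hI₀ ht
  have hp : IntervalIntegrable p volume 0 xmax := by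
    by_contra h
    simp [intervalIntegral.integral_undef h] at hp_int
  have hS := abs_integral_mul_sub_le hxmax.le hp hp_nonneg hcont₁.fst hcont₂.fst hm_def hm.ne'
    fun x hx => (abs_fst_sub_le_dist _ _).trans (hpoint x hx)
  have hI := abs_integral_mul_sub_le hxmax.le hp hp_nonneg hcont₁.snd hcont₂.snd hm_def hm.ne'
    fun x hx => (abs_snd_sub_le_dist _ _).trans (hpoint x hx)
  -- each difference is at most `Δ (e^{MT} - 1)`, which is therefore nonnegative
  linarith [abs_nonneg ((∫ x in (0:ℝ)..xmax, S₂ x t * p x) - ∫ x in (0:ℝ)..xmax, S₁ x t * p x)]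

/-- Second part of Proposition 3 (`H_2`): Lipschitz estimate for the map
`(s,i) ↦ (ŝ,î)` in the general case `D_I, D_S > 0`:
`‖(ŝ₂,î₂) - (ŝ₁,î₁)‖ ≤ 8(e^{MT} - 1)‖(s₂,i₂) - (s₁,i₁)‖`, where
`M = max_{x∈J} C(x)`, `C(x) = 2β₀N₊(x) + μ + D_I + D`. -/
theorem contraction_estimate_general_case
    (xmax m μ β₀ DS DI : ℝ) (p : ℝ → ℝ)
    (hxmax : 0 < xmax) (hm : 0 < m) (hμ : 0 < μ) (hβ₀ : 0 < β₀)
    (hDS : 0 < DS) (hDI : 0 < DI)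
    (hp_nonneg : ∀ x ∈ Icc (0:ℝ) xmax, 0 ≤ p x) (hp0 : p 0 = 0)
    (hp_int : ∫ x in (0:ℝ)..xmax, p x = 1)
    (hm_def : m = ∫ x in (0:ℝ)..xmax, x * p x)
    (S₀ I₀ : ℝ → ℝ)
    (hS₀ : ContDiff ℝ 1 S₀) (hI₀ : ContDiff ℝ 1 I₀)
    (hS₀nonneg : ∀ x ∈ Icc (0:ℝ) xmax, 0 ≤ S₀ x)
    (hI₀nonneg : ∀ x ∈ Icc (0:ℝ) xmax, 0 ≤ I₀ x)
    (hS₀zero : S₀ 0 = 0) (hI₀zero : I₀ 0 = 0)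
    (s₀ i₀ : ℝ)
    (hs₀ : s₀ = ∫ x in (0:ℝ)..xmax, S₀ x * p x)
    (hi₀ : i₀ = ∫ x in (0:ℝ)..xmax, I₀ x * p x)
    (hs₀pos : 0 < s₀) (hi₀pos : 0 < i₀)
    (R : ℝ) (hR : 1 ≤ R)
    (n₀ : ℝ) (hn₀ : n₀ = s₀ + i₀)
    (Nplus Cfn : ℝ → ℝ)
    (hNplus : ∀ x, Nplus x =
      max DI DS / min DI DS * (n₀ + R) * (x / m) + (S₀ x + I₀ x))
    (hCfn : ∀ x, Cfn x = 2 * β₀ * Nplus x + μ + DI + max DI DS)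
    (M : ℝ) (hM : IsGreatest (Cfn '' Icc (0:ℝ) xmax) M)
    (T : ℝ) (hT : 0 < T)
    (s₁ i₁ s₂ i₂ : ℝ → ℝ)
    (hs₁cont : ContinuousOn s₁ (Icc 0 T)) (hi₁cont : ContinuousOn i₁ (Icc 0 T))
    (hs₂cont : ContinuousOn s₂ (Icc 0 T)) (hi₂cont : ContinuousOn i₂ (Icc 0 T))
    (hs₁nonneg : ∀ t ∈ Icc (0:ℝ) T, 0 ≤ s₁ t) (hi₁nonneg : ∀ t ∈ Icc (0:ℝ) T, 0 ≤ i₁ t)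
    (hs₂nonneg : ∀ t ∈ Icc (0:ℝ) T, 0 ≤ s₂ t) (hi₂nonneg : ∀ t ∈ Icc (0:ℝ) T, 0 ≤ i₂ t)
    (hs₁0 : s₁ 0 = s₀) (hi₁0 : i₁ 0 = i₀) (hs₂0 : s₂ 0 = s₀) (hi₂0 : i₂ 0 = i₀)
    (h₁E : ∀ t ∈ Icc (0:ℝ) T, |s₁ t - s₀| + |i₁ t - i₀| ≤ R)
    (h₂E : ∀ t ∈ Icc (0:ℝ) T, |s₂ t - s₀| + |i₂ t - i₀| ≤ R)
    (S₁ I₁ S₂ I₂ : ℝ → ℝ → ℝ)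
    (hS₁eq : ∀ x ∈ Icc (0:ℝ) xmax, ∀ t ∈ Icc (0:ℝ) T,
      HasDerivAt (S₁ x) (I₁ x t * (μ - β₀ * S₁ x t) - DS * (S₁ x t - x / m * s₁ t)) t)
    (hI₁eq : ∀ x ∈ Icc (0:ℝ) xmax, ∀ t ∈ Icc (0:ℝ) T,
      HasDerivAt (I₁ x) (I₁ x t * (-μ + β₀ * S₁ x t) - DI * (I₁ x t - x / m * i₁ t)) t)
    (hS₂eq : ∀ x ∈ Icc (0:ℝ) xmax, ∀ t ∈ Icc (0:ℝ) T,
      HasDerivAt (S₂ x) (I₂ x t * (μ - β₀ * S₂ x t) - DS * (S₂ x t - x / m * s₂ t)) t)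
    (hI₂eq : ∀ x ∈ Icc (0:ℝ) xmax, ∀ t ∈ Icc (0:ℝ) T,
      HasDerivAt (I₂ x) (I₂ x t * (-μ + β₀ * S₂ x t) - DI * (I₂ x t - x / m * i₂ t)) t)
    (hS₁init : ∀ x ∈ Icc (0:ℝ) xmax, S₁ x 0 = S₀ x)
    (hI₁init : ∀ x ∈ Icc (0:ℝ) xmax, I₁ x 0 = I₀ x)
    (hS₂init : ∀ x ∈ Icc (0:ℝ) xmax, S₂ x 0 = S₀ x)
    (hI₂init : ∀ x ∈ Icc (0:ℝ) xmax, I₂ x 0 = I₀ x)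
    (h₁pos : ∀ x ∈ Icc (0:ℝ) xmax, ∀ t ∈ Icc (0:ℝ) T,
      0 ≤ S₁ x t ∧ 0 ≤ I₁ x t ∧ S₁ x t + I₁ x t ≤ Nplus x)
    (h₂pos : ∀ x ∈ Icc (0:ℝ) xmax, ∀ t ∈ Icc (0:ℝ) T,
      0 ≤ S₂ x t ∧ 0 ≤ I₂ x t ∧ S₂ x t + I₂ x t ≤ Nplus x) :
    ∀ t ∈ Icc (0:ℝ) T,
      |(∫ x in (0:ℝ)..xmax, S₂ x t * p x) - ∫ x in (0:ℝ)..xmax, S₁ x t * p x| +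
        |(∫ x in (0:ℝ)..xmax, I₂ x t * p x) - ∫ x in (0:ℝ)..xmax, I₁ x t * p x| ≤
      8 * (Real.exp (M * T) - 1) *
        ⨆ τ : Icc (0:ℝ) T, (|s₂ τ - s₁ τ| + |i₂ τ - i₁ τ|) :=
  contraction_estimate_general_case_general xmax m μ β₀ DS DI p hxmax hm hμ hβ₀ hDS hDI hp_nonneg
    hp_int hm_def S₀ I₀ hS₀ hI₀ s₀ i₀ R Nplus Cfn hCfn M hM T s₁ i₁ s₂ i₂ h₁E h₂E S₁ I₁ S₂ I₂ hS₁eq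
    hI₁eq hS₂eq hI₂eq hS₁init hI₁init hS₂init hI₂init h₁pos h₂pos
end

section
/- In the setting where, for j = 1, 2, (Ŝ_j, Î_j) solve system (Ĉ) with data (s_j, i_j) and the same initial data (S₀, I₀), setting N̂_j = Ŝ_j + Î_j, n_j(t) = s_j(t) + i_j(t), y = Î₂ − Î₁, z = N̂₂ − N̂₁ and D = max(D_I, D_S), the function z satisfies, for all (x,t) ∈ J × [0,T], |∂z/∂t(x,t)| ≤ D(|y(x,t)| + |z(x,t)|) + D(x/m)(|i₂(t) − i₁(t)| + |n₂(t) − n₁(t)|). -/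
open Real Set

/-- Differential inequality on `z = N̂₂ - N̂₁` (second step of the contraction proof
in the general case): `|∂z/∂t| ≤ D(|y| + |z|) + D(x/m)(|i₂ - i₁| + |n₂ - n₁|)`, with
`y = Î₂ - Î₁`, `n_j = s_j + i_j` and `D = max(D_I, D_S)`. -/
theorem derivative_bound_z
    (xmax m μ β₀ DS DI : ℝ)
    (hxmax : 0 < xmax) (hm : 0 < m) (hμ : 0 < μ) (hβ₀ : 0 < β₀)
    (hDS : 0 < DS) (hDI : 0 < DI)
    (T : ℝ) (hT : 0 < T)
    (S₀ I₀ : ℝ → ℝ)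
    (s₁ i₁ s₂ i₂ : ℝ → ℝ)
    (hs₁cont : ContinuousOn s₁ (Icc 0 T)) (hi₁cont : ContinuousOn i₁ (Icc 0 T))
    (hs₂cont : ContinuousOn s₂ (Icc 0 T)) (hi₂cont : ContinuousOn i₂ (Icc 0 T))
    (hs₁nonneg : ∀ t ∈ Icc (0:ℝ) T, 0 ≤ s₁ t) (hi₁nonneg : ∀ t ∈ Icc (0:ℝ) T, 0 ≤ i₁ t)
    (hs₂nonneg : ∀ t ∈ Icc (0:ℝ) T, 0 ≤ s₂ t) (hi₂nonneg : ∀ t ∈ Icc (0:ℝ) T, 0 ≤ i₂ t)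
    (S₁ I₁ S₂ I₂ : ℝ → ℝ → ℝ)
    (hS₁eq : ∀ x ∈ Icc (0:ℝ) xmax, ∀ t ∈ Icc (0:ℝ) T,
      HasDerivAt (S₁ x) (I₁ x t * (μ - β₀ * S₁ x t) - DS * (S₁ x t - x / m * s₁ t)) t)
    (hI₁eq : ∀ x ∈ Icc (0:ℝ) xmax, ∀ t ∈ Icc (0:ℝ) T,
      HasDerivAt (I₁ x) (I₁ x t * (-μ + β₀ * S₁ x t) - DI * (I₁ x t - x / m * i₁ t)) t)
    (hS₂eq : ∀ x ∈ Icc (0:ℝ) xmax, ∀ t ∈ Icc (0:ℝ) T,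
      HasDerivAt (S₂ x) (I₂ x t * (μ - β₀ * S₂ x t) - DS * (S₂ x t - x / m * s₂ t)) t)
    (hI₂eq : ∀ x ∈ Icc (0:ℝ) xmax, ∀ t ∈ Icc (0:ℝ) T,
      HasDerivAt (I₂ x) (I₂ x t * (-μ + β₀ * S₂ x t) - DI * (I₂ x t - x / m * i₂ t)) t)
    (hS₁init : ∀ x ∈ Icc (0:ℝ) xmax, S₁ x 0 = S₀ x)
    (hI₁init : ∀ x ∈ Icc (0:ℝ) xmax, I₁ x 0 = I₀ x)
    (hS₂init : ∀ x ∈ Icc (0:ℝ) xmax, S₂ x 0 = S₀ x)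
    (hI₂init : ∀ x ∈ Icc (0:ℝ) xmax, I₂ x 0 = I₀ x)
 :
    ∀ x ∈ Icc (0:ℝ) xmax, ∀ t ∈ Icc (0:ℝ) T,
      |deriv (fun τ => (S₂ x τ + I₂ x τ) - (S₁ x τ + I₁ x τ)) t| ≤
        max DI DS * (|I₂ x t - I₁ x t| + |(S₂ x t + I₂ x t) - (S₁ x t + I₁ x t)|) +
          max DI DS * (x / m) *
            (|i₂ t - i₁ t| + |(s₂ t + i₂ t) - (s₁ t + i₁ t)|) := by
  intro x hx t ht
  have hD1 : DS ≤ max DI DS := le_max_right _ _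
  have hD0 : DI ≤ max DI DS := le_max_left _ _
  have hD2 : |DI - DS| ≤ max DI DS := abs_le.mpr ⟨by linarith, by linarith⟩
  have hxm : 0 ≤ x / m := div_nonneg hx.1 hm.le
  have hd : HasDerivAt (fun τ => (S₂ x τ + I₂ x τ) - (S₁ x τ + I₁ x τ))
      ((I₂ x t * (μ - β₀ * S₂ x t) - DS * (S₂ x t - x / m * s₂ t) +
        (I₂ x t * (-μ + β₀ * S₂ x t) - DI * (I₂ x t - x / m * i₂ t))) -
       (I₁ x t * (μ - β₀ * S₁ x t) - DS * (S₁ x t - x / m * s₁ t) +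
        (I₁ x t * (-μ + β₀ * S₁ x t) - DI * (I₁ x t - x / m * i₁ t)))) t :=
    (((hS₂eq x hx t ht).add (hI₂eq x hx t ht)).sub
      ((hS₁eq x hx t ht).add (hI₁eq x hx t ht)))
  rw [hd.deriv]
  set z := (S₂ x t + I₂ x t) - (S₁ x t + I₁ x t) with hz
  set y := I₂ x t - I₁ x t with hy
  set Δn := (s₂ t + i₂ t) - (s₁ t + i₁ t) with hn
  set Δi := i₂ t - i₁ t with hi
  have key : (I₂ x t * (μ - β₀ * S₂ x t) - DS * (S₂ x t - x / m * s₂ t) +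
        (I₂ x t * (-μ + β₀ * S₂ x t) - DI * (I₂ x t - x / m * i₂ t))) -
       (I₁ x t * (μ - β₀ * S₁ x t) - DS * (S₁ x t - x / m * s₁ t) +
        (I₁ x t * (-μ + β₀ * S₁ x t) - DI * (I₁ x t - x / m * i₁ t)))
      = -(DS * z + (DI - DS) * y) + (x / m) * (DS * Δn + (DI - DS) * Δi) := by
    rw [hz, hy, hn, hi]; ring
  rw [key]
  have h1 : |DS * z + (DI - DS) * y| ≤ max DI DS * (|y| + |z|) := by
    calc |DS * z + (DI - DS) * y| ≤ |DS * z| + |(DI - DS) * y| := abs_add_le _ _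
    _ = DS * |z| + |DI - DS| * |y| := by rw [abs_mul, abs_mul, abs_of_pos hDS]
    _ ≤ max DI DS * (|y| + |z|) := by nlinarith [abs_nonneg y, abs_nonneg z]
  have h2 : |DS * Δn + (DI - DS) * Δi| ≤ max DI DS * (|Δi| + |Δn|) := by
    calc |DS * Δn + (DI - DS) * Δi| ≤ |DS * Δn| + |(DI - DS) * Δi| := abs_add_le _ _
    _ = DS * |Δn| + |DI - DS| * |Δi| := by rw [abs_mul, abs_mul, abs_of_pos hDS]
    _ ≤ max DI DS * (|Δi| + |Δn|) := by nlinarith [abs_nonneg Δi, abs_nonneg Δn]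
  calc |-(DS * z + (DI - DS) * y) + (x / m) * (DS * Δn + (DI - DS) * Δi)|
      ≤ |-(DS * z + (DI - DS) * y)| + |(x / m) * (DS * Δn + (DI - DS) * Δi)| := abs_add_le _ _
    _ = |DS * z + (DI - DS) * y| + (x / m) * |DS * Δn + (DI - DS) * Δi| := by
        rw [abs_neg, abs_mul, abs_of_nonneg hxm]
    _ ≤ max DI DS * (|y| + |z|) + (x / m) * (max DI DS * (|Δi| + |Δn|)) :=
        add_le_add h1 (mul_le_mul_of_nonneg_left h2 hxm)
    _ = max DI DS * (|y| + |z|) + max DI DS * (x / m) * (|Δi| + |Δn|) := by ring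
end

section
/- For any diffusion coefficients D_I, D_S > 0, there exists T > 0 such that system (C) admits a unique solution on J × [0,T]: a unique pair of C¹ functions S, I : J × [0,T] → ℝ satisfying ∂S/∂t = I(μ − β₀S) − D_S(S − (x/m)s(t)) and ∂I/∂t = I(−μ + β₀S) − D_I(I − (x/m)i(t)) on J × [0,T], where s(t) = ⟨S(·,t)⟩ and i(t) = ⟨I(·,t)⟩, with S(x,0) = S₀(x) and I(x,0) = I₀(x). -/
open Real Set

/-- `(S, I)` is a solution of the nonlocal system `(C)` on `J × [0,T]`:
a pair of `C¹` functions satisfying the two evolution equations (with the nonlocal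
averages `s(t) = ⟨S(·,t)⟩`, `i(t) = ⟨I(·,t)⟩`) and the initial conditions. -/
def IsSolutionC (xmax m μ β₀ DS DI T : ℝ) (p S₀ I₀ : ℝ → ℝ)
    (S I : ℝ → ℝ → ℝ) : Prop :=
  ContDiffOn ℝ 1 (Function.uncurry S) (Icc 0 xmax ×ˢ Icc 0 T) ∧
  ContDiffOn ℝ 1 (Function.uncurry I) (Icc 0 xmax ×ˢ Icc 0 T) ∧
  (∀ x ∈ Icc (0:ℝ) xmax, ∀ t ∈ Icc (0:ℝ) T,
    HasDerivAt (S x)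
      (I x t * (μ - β₀ * S x t) -
        DS * (S x t - x / m * ∫ y in (0:ℝ)..xmax, S y t * p y)) t) ∧
  (∀ x ∈ Icc (0:ℝ) xmax, ∀ t ∈ Icc (0:ℝ) T,
    HasDerivAt (I x)
      (I x t * (-μ + β₀ * S x t) -
        DI * (I x t - x / m * ∫ y in (0:ℝ)..xmax, I y t * p y)) t) ∧
  (∀ x ∈ Icc (0:ℝ) xmax, S x 0 = S₀ x) ∧
  (∀ x ∈ Icc (0:ℝ) xmax, I x 0 = I₀ x)

/-!
Write `(C)` as an ODE `u' = F u` for the pair of profiles `u t = (S(·,t), I(·,t))` in the Banach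
algebra `ℝ →ᵇ ℝ`. The field `F` is quadratic, hence Lipschitz on balls, and Grönwall's inequality
gives uniqueness among all solutions of `(C)`.

The flow of `F` does not by itself produce profiles that are `C¹` in `x`, so existence comes from
the system differentiated in `x`: its unknowns are jets `(S(0,t), ∂ₓS(·,t))`, and its right-hand
side is `C¹`, so Picard–Lindelöf applies. Integrating a jet back to a function intertwines the
two fields (by linearity and the Leibniz rule), so the jet solution yields a solution of `(C)`;
it is jointly `C¹` because the value `a + ∫₀ˣ P` of a jet `(a, P)` is `C¹` in `(x, (a, P))`.
-/

open Filter Topology MeasureTheory BoundedContinuousFunction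
open scoped NNReal

namespace NonlocalSIR

noncomputable section

section Extension

variable {a b : ℝ} (hab : a ≤ b)

def extendIcc (f : ℝ → ℝ) (hf : ContinuousOn f (Icc a b)) : ℝ →ᵇ ℝ :=
  ofNormedAddCommGroup (fun x => f (projIcc a b hab x))
    (hf.comp_continuous (continuous_subtype_val.comp continuous_projIcc)
      fun x => (projIcc a b hab x).2)
    (isCompact_Icc.exists_bound_of_continuousOn hf).choose
    fun x => (isCompact_Icc.exists_bound_of_continuousOn hf).choose_spec _ (projIcc a b hab x).2

lemma extendIcc_apply (f : ℝ → ℝ) (hf : ContinuousOn f (Icc a b)) (x : ℝ) :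
    extendIcc hab f hf x = f (projIcc a b hab x) := rfl

lemma extendIcc_apply_of_mem {f : ℝ → ℝ} (hf : ContinuousOn f (Icc a b)) {x : ℝ}
    (hx : x ∈ Icc a b) : extendIcc hab f hf x = f x := by
  rw [extendIcc_apply, projIcc_of_mem hab hx]

end Extension

lemma hasDerivAt_apply {γ : ℝ → ℝ →ᵇ ℝ} {γ' : ℝ →ᵇ ℝ} {t : ℝ} (hγ : HasDerivAt γ γ' t)
    (x : ℝ) : HasDerivAt (fun t => γ t x) (γ' x) t := by
  have := (evalCLM ℝ x).hasFDerivAt.comp_hasDerivAt t hγ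
  exact this

lemma contDiffOn_one_of_hasDerivAt {E : Type*} [NormedAddCommGroup E] [NormedSpace ℝ E]
    {f f' : ℝ → E} {s : Set ℝ} (hs : IsOpen s) (hf : ∀ t ∈ s, HasDerivAt f (f' t) t)
    (hf' : ContinuousOn f' s) : ContDiffOn ℝ 1 f s := by
  rw [show (1 : WithTop ℕ∞) = 0 + 1 from (zero_add 1).symm,
    contDiffOn_succ_iff_deriv_of_isOpen hs, contDiffOn_zero]
  exact ⟨fun t ht => (hf t ht).differentiableAt.differentiableWithinAt, by simp,
    hf'.congr fun t ht => (hf t ht).deriv⟩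

lemma lipschitzOnWith_mul_closedBall {E : Type*} [SeminormedRing E] (R : ℝ≥0) :
    LipschitzOnWith (2 * R) (fun u : E × E => u.1 * u.2) (Metric.closedBall 0 R) := by
  refine LipschitzOnWith.of_dist_le_mul fun u hu v hv => ?_
  rw [mem_closedBall_zero_iff] at hu hv
  have h₁ : ‖u.1 - v.1‖ ≤ dist u v := by rw [dist_eq_norm]; exact norm_fst_le (u - v)
  have h₂ : ‖u.2 - v.2‖ ≤ dist u v := by rw [dist_eq_norm]; exact norm_snd_le (u - v)
  have hu₂ : ‖u.2‖ ≤ R := (norm_snd_le u).trans hu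
  have hv₁ : ‖v.1‖ ≤ R := (norm_fst_le v).trans hv
  calc dist (u.1 * u.2) (v.1 * v.2) = ‖(u.1 - v.1) * u.2 + v.1 * (u.2 - v.2)‖ := by
        rw [dist_eq_norm]; noncomm_ring
    _ ≤ ‖u.1 - v.1‖ * ‖u.2‖ + ‖v.1‖ * ‖u.2 - v.2‖ :=
        (norm_add_le _ _).trans (add_le_add (norm_mul_le _ _) (norm_mul_le _ _))
    _ ≤ dist u v * R + R * dist u v := by gcongr
    _ = ↑(2 * R) * dist u v := by push_cast; ring

section SliceCurve

variable {a b c d : ℝ} (hab : a ≤ b) (hcd : c ≤ d) {f : ℝ → ℝ → ℝ}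

/-- The profiles `f(·, t)`, extended by constants outside `[a, b] × [c, d]`. -/
def sliceCurve (f : ℝ → ℝ → ℝ) (hf : ContinuousOn (Function.uncurry f) (Icc a b ×ˢ Icc c d))
    (t : ℝ) : ℝ →ᵇ ℝ :=
  extendIcc hab (fun x => f x (projIcc c d hcd t))
    (hf.comp (continuous_id.prodMk continuous_const).continuousOn
      fun _ hx => ⟨hx, (projIcc c d hcd t).2⟩)

variable (hf : ContinuousOn (Function.uncurry f) (Icc a b ×ˢ Icc c d))

lemma sliceCurve_apply (t x : ℝ) :
    sliceCurve hab hcd f hf t x = f (projIcc a b hab x) (projIcc c d hcd t) := rfl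

lemma sliceCurve_apply_of_mem {t x : ℝ} (ht : t ∈ Icc c d) (hx : x ∈ Icc a b) :
    sliceCurve hab hcd f hf t x = f x t := by
  rw [sliceCurve_apply, projIcc_of_mem hab hx, projIcc_of_mem hcd ht]

lemma continuousOn_sliceCurve : ContinuousOn (sliceCurve hab hcd f hf) (Icc c d) := by
  have huc := Metric.uniformContinuousOn_iff.1
    ((isCompact_Icc.prod isCompact_Icc).uniformContinuousOn_of_continuous hf)
  refine fun t ht => Metric.continuousWithinAt_iff.2 fun ε hε => ?_
  obtain ⟨δ, hδ, hδf⟩ := huc (ε / 2) (half_pos hε)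
  refine ⟨δ, hδ, fun {s} hs hst => ?_⟩
  refine lt_of_le_of_lt ((dist_le (half_pos hε).le).2 fun x => ?_) (half_lt_self hε)
  have hx := (projIcc a b hab x).2
  rw [sliceCurve_apply, sliceCurve_apply, projIcc_of_mem hcd hs, projIcc_of_mem hcd ht]
  refine (hδf (_, s) ⟨hx, hs⟩ (_, t) ⟨hx, ht⟩ ?_).le
  simpa [Prod.dist_eq, hδ] using hst

/-- At each `x` the difference quotient of the slice curve is an average of `g (x, ·)` over
`[t, s]`, so uniform continuity of `g` makes it converge uniformly in `x`. -/
lemma hasDerivWithinAt_sliceCurve {g : ℝ → ℝ → ℝ}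
    (hg : ContinuousOn (Function.uncurry g) (Icc a b ×ˢ Icc c d))
    (hfg : ∀ x ∈ Icc a b, ∀ t ∈ Icc c d, HasDerivAt (f x) (g x t) t) {t : ℝ}
    (ht : t ∈ Icc c d) :
    HasDerivWithinAt (sliceCurve hab hcd f hf) (sliceCurve hab hcd g hg t) (Icc c d) t := by
  have huc := Metric.uniformContinuousOn_iff.1
    ((isCompact_Icc.prod isCompact_Icc).uniformContinuousOn_of_continuous hg)
  rw [hasDerivWithinAt_iff_isLittleO, Asymptotics.isLittleO_iff]
  intro ε hε
  obtain ⟨δ, hδ, hδg⟩ := huc ε hε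
  filter_upwards [self_mem_nhdsWithin, mem_nhdsWithin_of_mem_nhds (Metric.ball_mem_nhds t hδ)]
    with s hs hsδ
  refine (norm_le (by positivity)).2 fun x => ?_
  have hx := (projIcc a b hab x).2
  set y : ℝ := (projIcc a b hab x : ℝ)
  have hsub : uIcc t s ⊆ Icc c d := ordConnected_Icc.uIcc_subset ht hs
  have hint : IntervalIntegrable (g y) volume t s :=
    ((hg.comp (continuous_const.prodMk continuous_id).continuousOn fun _ hτ => ⟨hx, hτ⟩).mono
      hsub).intervalIntegrable
  have hFTC : f y s - f y t = ∫ τ in t..s, g y τ :=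
    (intervalIntegral.integral_eq_sub_of_hasDerivAt (fun τ hτ => hfg y hx τ (hsub hτ))
      hint).symm
  have hdiff : sliceCurve hab hcd f hf s x - sliceCurve hab hcd f hf t x
      - (s - t) • sliceCurve hab hcd g hg t x = ∫ τ in t..s, (g y τ - g y t) := by
    rw [sliceCurve_apply, sliceCurve_apply, sliceCurve_apply, projIcc_of_mem hcd hs,
      projIcc_of_mem hcd ht, intervalIntegral.integral_sub hint intervalIntegrable_const,
      ← hFTC, intervalIntegral.integral_const]
  simp only [coe_sub, coe_smul, Pi.sub_apply] at hdiff ⊢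
  rw [hdiff, Real.norm_eq_abs (s - t)]
  refine intervalIntegral.norm_integral_le_of_norm_le_const fun τ hτ => ?_
  rw [← dist_eq_norm]
  refine (hδg (y, τ) ⟨hx, hsub (uIoc_subset_uIcc hτ)⟩ (y, t) ⟨hx, ht⟩ ?_).le
  rw [Prod.dist_eq, dist_self, max_eq_right dist_nonneg, Real.dist_eq]
  exact (abs_sub_left_of_mem_uIcc (uIoc_subset_uIcc hτ)).trans_lt (Real.dist_eq s t ▸ hsδ)

end SliceCurve

section Field

variable (μ β₀ DS DI : ℝ) {E E' : Type*}

/-- The right-hand side of `(C)` over an abstract space of profiles: `mul` is the product, `φ`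
the average `⟨·⟩` and `ℓ` the profile `x ↦ x / m`. -/
def sirField [AddCommGroup E] [Module ℝ E] (mul : E → E → E) (φ : E → ℝ) (ℓ : E)
    (u : E × E) : E × E :=
  (μ • u.2 - β₀ • mul u.1 u.2 - DS • (u.1 - φ u.1 • ℓ),
   -(μ • u.2 - β₀ • mul u.1 u.2) - DI • (u.2 - φ u.2 • ℓ))

lemma map_sirField [AddCommGroup E] [Module ℝ E] [AddCommGroup E'] [Module ℝ E']
    (T : E →ₗ[ℝ] E') {mul : E → E → E} {mul' : E' → E' → E'} {φ : E → ℝ} {φ' : E' → ℝ}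
    (ℓ : E) (hmul : ∀ v w, T (mul v w) = mul' (T v) (T w)) (hφ : ∀ v, φ' (T v) = φ v)
    (u : E × E) :
    Prod.map T T (sirField μ β₀ DS DI mul φ ℓ u)
      = sirField μ β₀ DS DI mul' φ' (T ℓ) (Prod.map T T u) := by
  simp [sirField, hmul, hφ]

lemma contDiff_sirField [NormedAddCommGroup E] [NormedSpace ℝ E] {mul : E → E → E}
    (hmul : ContDiff ℝ 1 fun u : E × E => mul u.1 u.2) (φ : E →L[ℝ] ℝ) (ℓ : E) :
    ContDiff ℝ 1 (sirField μ β₀ DS DI mul φ ℓ) := by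
  unfold sirField
  fun_prop

lemma exists_lipschitzOnWith_sirField [SeminormedRing E] [NormedSpace ℝ E] (φ : E →L[ℝ] ℝ)
    (ℓ : E) (R : ℝ≥0) :
    ∃ K, LipschitzOnWith K (sirField μ β₀ DS DI (· * ·) φ ℓ) (Metric.closedBall 0 R) := by
  have hdiff (D : ℝ) : LipschitzWith _ fun w : E => D • (w - φ w • ℓ) :=
    (D • (ContinuousLinearMap.id ℝ E - φ.smulRight ℓ)).lipschitz
  have hreact : LipschitzOnWith _ (fun u : E × E => μ • u.2 - β₀ • (u.1 * u.2))
      (Metric.closedBall 0 R) :=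
    ((lipschitzWith_smul μ).comp LipschitzWith.prod_snd).lipschitzOnWith.sub
      ((lipschitzWith_smul β₀).comp_lipschitzOnWith (lipschitzOnWith_mul_closedBall R))
  exact ⟨_, (hreact.sub ((hdiff DS).comp LipschitzWith.prod_fst).lipschitzOnWith).prodMk
    (hreact.neg.sub ((hdiff DI).comp LipschitzWith.prod_snd).lipschitzOnWith)⟩

end Field

section Jet

/-- A jet `(a, P)` stands for the function `x ↦ a + ∫₀ˣ P`, with value `a` at `0` and
derivative `P`. -/
abbrev Jet : Type := ℝ × (ℝ →ᵇ ℝ)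

def jetEval (x : ℝ) : Jet →L[ℝ] ℝ :=
  LinearMap.mkContinuous
    { toFun := fun v => v.1 + ∫ y in (0:ℝ)..x, v.2 y
      map_add' := fun v w => by
        simp only [Prod.fst_add, Prod.snd_add, coe_add, Pi.add_apply]
        rw [intervalIntegral.integral_add (v.2.continuous.intervalIntegrable _ _)
          (w.2.continuous.intervalIntegrable _ _)]
        ring
      map_smul' := fun c v => by simp [intervalIntegral.integral_const_mul, mul_add] }
    (1 + |x|)
    fun v => by
      calc ‖v.1 + ∫ y in (0:ℝ)..x, v.2 y‖ ≤ ‖v‖ + ‖v‖ * |x - 0| :=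
            (norm_add_le _ _).trans (add_le_add (norm_fst_le v)
              (intervalIntegral.norm_integral_le_of_norm_le_const fun y _ =>
                (v.2.norm_coe_le_norm y).trans (norm_snd_le v)))
        _ = (1 + |x|) * ‖v‖ := by rw [sub_zero]; ring

lemma jetEval_apply (x : ℝ) (v : Jet) : jetEval x v = v.1 + ∫ y in (0:ℝ)..x, v.2 y := rfl

lemma jetEval_zero (v : Jet) : jetEval 0 v = v.1 := by simp [jetEval_apply]

lemma hasDerivAt_jetEval (v : Jet) (x : ℝ) : HasDerivAt (fun y => jetEval y v) (v.2 x) x :=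
  (v.2.continuous.integral_hasStrictDerivAt 0 x).hasDerivAt.const_add v.1

lemma lipschitzWith_jetEval : LipschitzWith 1 jetEval := by
  refine LipschitzWith.of_dist_le_mul fun x y => ?_
  rw [NNReal.coe_one, one_mul, dist_eq_norm]
  refine ContinuousLinearMap.opNorm_le_bound _ dist_nonneg fun v => ?_
  have hint := intervalIntegral.integral_interval_sub_left
    (v.2.continuous.intervalIntegrable (μ := volume) 0 x) (v.2.continuous.intervalIntegrable 0 y)
  calc ‖(jetEval x - jetEval y) v‖ = ‖∫ z in y..x, v.2 z‖ := by
        rw [_root_.sub_apply, jetEval_apply, jetEval_apply, ← hint]; ring_nf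
    _ ≤ ‖v‖ * |x - y| := intervalIntegral.norm_integral_le_of_norm_le_const fun z _ =>
        (v.2.norm_coe_le_norm z).trans (norm_snd_le v)
    _ = dist x y * ‖v‖ := by rw [Real.dist_eq]; ring

/-- Both partial derivatives, `v.2 x` in `x` and `jetEval x` in `v`, are jointly continuous. -/
lemma contDiff_jetEval : ContDiff ℝ 1 fun q : ℝ × Jet => jetEval q.1 q.2 := by
  set f₁ : ℝ → Jet → ℝ →L[ℝ] ℝ := fun x v => ContinuousLinearMap.toSpanSingleton ℝ (v.2 x)
  set f₂ : ℝ → Jet → Jet →L[ℝ] ℝ := fun x _ => jetEval x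
  have hf₁ : Continuous ↿f₁ :=
    (ContinuousLinearMap.toSpanSingletonCLE (𝕜 := ℝ) (E := ℝ)).continuous.comp
      (continuous_eval.comp ((continuous_snd.comp continuous_snd).prodMk continuous_fst))
  have hf₂ : Continuous ↿f₂ := lipschitzWith_jetEval.continuous.comp continuous_fst
  rw [contDiff_one_iff_hasFDerivAt]
  refine ⟨fun q => (↿f₁ q).coprod (↿f₂ q),
    (ContinuousLinearMap.coprodEquivL (S := ℝ)).continuous.comp (hf₁.prodMk hf₂), fun q => ?_⟩
  exact (hasStrictFDerivAt_uncurry_coprod (f := fun x v => jetEval x v)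
    (Eventually.of_forall fun q => (hasDerivAt_jetEval q.2 q.1).hasFDerivAt)
    (Eventually.of_forall fun q => (jetEval q.1).hasFDerivAt)
    hf₁.continuousAt hf₂.continuousAt).hasFDerivAt

variable {xmax : ℝ} (h : 0 ≤ xmax)

/-- The function of a jet on `[0, xmax]`, extended by constants outside. -/
def ofJet : Jet →L[ℝ] ℝ →ᵇ ℝ :=
  LinearMap.mkContinuous
    { toFun := fun v => extendIcc h (fun x => jetEval x v)
        (lipschitzWith_jetEval.continuous.clm_apply continuous_const).continuousOn
      map_add' := fun v w => by ext x; simp [extendIcc_apply]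
      map_smul' := fun c v => by ext x; simp [extendIcc_apply] }
    (1 + xmax)
    fun v => by
      refine (norm_le (by positivity)).2 fun x => ?_
      obtain ⟨hy₀, hy⟩ := (projIcc 0 xmax h x).2
      have hnorm : ‖jetEval (projIcc 0 xmax h x)‖ ≤ 1 + xmax :=
        (LinearMap.mkContinuous_norm_le' _ _).trans
          (max_le (by rw [abs_of_nonneg hy₀]; linarith) (by positivity))
      exact ((jetEval _).le_opNorm v).trans (by gcongr)

lemma ofJet_apply (v : Jet) (x : ℝ) : ofJet h v x = jetEval (projIcc 0 xmax h x) v := rfl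

lemma ofJet_apply_of_mem (v : Jet) {x : ℝ} (hx : x ∈ Icc 0 xmax) : ofJet h v x = jetEval x v :=
  extendIcc_apply_of_mem h _ hx

lemma ofJet_apply_div (m x : ℝ) : ofJet h (0, m⁻¹ • 1) x = projIcc 0 xmax h x / m := by
  simp [ofJet_apply, jetEval_apply, div_eq_mul_inv]

lemma contDiffOn_ofJet_comp {α : ℝ → Jet} {s : Set ℝ} (hα : ContDiffOn ℝ 1 α s) :
    ContDiffOn ℝ 1 (fun q : ℝ × ℝ => ofJet h (α q.2) q.1) (Icc 0 xmax ×ˢ s) :=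
  (contDiff_jetEval.comp_contDiffOn (contDiffOn_fst.prodMk (hα.comp contDiffOn_snd
    fun _ hq => hq.2))).congr fun _ hq => ofJet_apply_of_mem h _ hq.1

/-- Leibniz rule: `(S I)' = S ∂ₓI + I ∂ₓS`. -/
def jetMul (v w : Jet) : Jet := (v.1 * w.1, ofJet h v * w.2 + ofJet h w * v.2)

lemma contDiff_jetMul : ContDiff ℝ 1 fun u : Jet × Jet => jetMul h u.1 u.2 := by
  unfold jetMul
  fun_prop

lemma ofJet_jetMul (v w : Jet) : ofJet h (jetMul h v w) = ofJet h v * ofJet h w := by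
  ext x
  rw [coe_mul, Pi.mul_apply, ofJet_apply, ofJet_apply, ofJet_apply]
  obtain ⟨y, hy⟩ := projIcc 0 xmax h x
  have hcont : Continuous fun z => v.2 z * jetEval z w + jetEval z v * w.2 z := by
    have := lipschitzWith_jetEval.continuous
    fun_prop
  have hFTC := intervalIntegral.integral_eq_sub_of_hasDerivAt
    (fun z _ => (hasDerivAt_jetEval v z).mul (hasDerivAt_jetEval w z))
    (hcont.intervalIntegrable 0 y)
  have hcongr : EqOn (jetMul h v w).2 (fun z => v.2 z * jetEval z w + jetEval z v * w.2 z)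
      (uIcc 0 y) := by
    intro z hz
    rw [uIcc_of_le hy.1] at hz
    have hz' : z ∈ Icc 0 xmax := ⟨hz.1, hz.2.trans hy.2⟩
    simp only [jetMul, coe_add, coe_mul, Pi.add_apply, Pi.mul_apply, ofJet_apply_of_mem h _ hz']
    ring
  rw [jetEval_apply, intervalIntegral.integral_congr hcongr, hFTC]
  simp only [Pi.mul_apply, jetEval_zero, jetMul]
  ring

def toJet (f : ℝ → ℝ) (hf : ContDiff ℝ 1 f) : Jet :=
  (f 0, extendIcc h (deriv f) (hf.continuous_deriv le_rfl).continuousOn)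

lemma ofJet_toJet {f : ℝ → ℝ} (hf : ContDiff ℝ 1 f) {x : ℝ} (hx : x ∈ Icc 0 xmax) :
    ofJet h (toJet h f hf) x = f x := by
  have hf' := (hf.continuous_deriv le_rfl)
  have hcongr : EqOn (toJet h f hf).2 (deriv f) (uIcc 0 x) := by
    intro y hy
    rw [uIcc_of_le hx.1] at hy
    exact extendIcc_apply_of_mem h hf'.continuousOn ⟨hy.1, hy.2.trans hx.2⟩
  rw [ofJet_apply_of_mem h _ hx, jetEval_apply, intervalIntegral.integral_congr hcongr,
    intervalIntegral.integral_deriv_eq_sub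
      (fun y _ => (hf.differentiable one_ne_zero).differentiableAt) (hf'.intervalIntegrable 0 x)]
  simp [toJet]

end Jet

section Model

variable {xmax : ℝ} (h : 0 ≤ xmax) {p : ℝ → ℝ} (hp : IntervalIntegrable p volume 0 xmax)

def average : (ℝ →ᵇ ℝ) →L[ℝ] ℝ :=
  LinearMap.mkContinuous
    { toFun := fun f => ∫ y in (0:ℝ)..xmax, f y * p y
      map_add' := fun f g => by
        simp only [coe_add, Pi.add_apply, add_mul]
        exact intervalIntegral.integral_add (hp.continuousOn_mul f.continuous.continuousOn)
          (hp.continuousOn_mul g.continuous.continuousOn)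
      map_smul' := fun c f => by
        simp only [coe_smul, smul_eq_mul, RingHom.id_apply, mul_assoc]
        exact intervalIntegral.integral_const_mul c _ }
    (∫ y in (0:ℝ)..xmax, |p y|)
    fun f => by
      calc ‖∫ y in (0:ℝ)..xmax, f y * p y‖ ≤ ∫ y in (0:ℝ)..xmax, ‖f‖ * |p y| := by
            refine (intervalIntegral.norm_integral_le_integral_norm h).trans
              (intervalIntegral.integral_mono_on h
                (hp.continuousOn_mul f.continuous.continuousOn).norm (hp.abs.const_mul _)
                fun y _ => ?_)
            rw [norm_mul, Real.norm_eq_abs]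
            exact mul_le_mul_of_nonneg_right (f.norm_coe_le_norm y) (abs_nonneg _)
        _ = (∫ y in (0:ℝ)..xmax, |p y|) * ‖f‖ := by
            rw [intervalIntegral.integral_const_mul, mul_comm]

lemma average_apply (f : ℝ →ᵇ ℝ) : average h hp f = ∫ y in (0:ℝ)..xmax, f y * p y := rfl

variable (m μ β₀ DS DI : ℝ)

/-- System `(C)` for the profiles `(S(·,t), I(·,t))`. -/
def modelField : (ℝ →ᵇ ℝ) × (ℝ →ᵇ ℝ) → (ℝ →ᵇ ℝ) × (ℝ →ᵇ ℝ) :=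
  sirField μ β₀ DS DI (· * ·) (average h hp) (ofJet h (0, m⁻¹ • 1))

/-- System `(C)` for the jets `((S(0,t), ∂ₓS(·,t)), (I(0,t), ∂ₓI(·,t)))`. -/
def jetField : Jet × Jet → Jet × Jet :=
  sirField μ β₀ DS DI (jetMul h) (average h hp ∘L ofJet h) (0, m⁻¹ • 1)

lemma contDiff_jetField : ContDiff ℝ 1 (jetField h hp m μ β₀ DS DI) := by
  unfold jetField
  exact contDiff_sirField μ β₀ DS DI (contDiff_jetMul h) (average h hp ∘L ofJet h) (0, m⁻¹ • 1)

lemma map_ofJet_jetField (u : Jet × Jet) :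
    Prod.map (ofJet h) (ofJet h) (jetField h hp m μ β₀ DS DI u)
      = modelField h hp m μ β₀ DS DI (Prod.map (ofJet h) (ofJet h) u) :=
  map_sirField μ β₀ DS DI (ofJet h : Jet →ₗ[ℝ] ℝ →ᵇ ℝ) (mul' := (· * ·))
    (φ' := average h hp) (0, m⁻¹ • 1) (ofJet_jetMul h) (fun _ => rfl) u

lemma modelField_fst_apply (u : (ℝ →ᵇ ℝ) × (ℝ →ᵇ ℝ)) (x : ℝ) :
    (modelField h hp m μ β₀ DS DI u).1 x = u.2 x * (μ - β₀ * u.1 x)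
      - DS * (u.1 x - projIcc 0 xmax h x / m * average h hp u.1) := by
  simp only [modelField, sirField, coe_sub, coe_smul, coe_mul, Pi.sub_apply, Pi.mul_apply,
    smul_eq_mul, ofJet_apply_div]
  ring

lemma modelField_snd_apply (u : (ℝ →ᵇ ℝ) × (ℝ →ᵇ ℝ)) (x : ℝ) :
    (modelField h hp m μ β₀ DS DI u).2 x = u.2 x * (-μ + β₀ * u.1 x)
      - DI * (u.2 x - projIcc 0 xmax h x / m * average h hp u.2) := by
  simp only [modelField, sirField, coe_sub, coe_neg, coe_smul, coe_mul, Pi.sub_apply,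
    Pi.neg_apply, Pi.mul_apply, smul_eq_mul, ofJet_apply_div]
  ring

lemma exists_lipschitzOnWith_modelField (R : ℝ≥0) :
    ∃ K, LipschitzOnWith K (modelField h hp m μ β₀ DS DI) (Metric.closedBall 0 R) :=
  exists_lipschitzOnWith_sirField μ β₀ DS DI _ _ R

end Model

section Existence

variable {xmax : ℝ} (h : 0 ≤ xmax) {p : ℝ → ℝ} (hp : IntervalIntegrable p volume 0 xmax)
  {m μ β₀ DS DI T : ℝ} {S₀ I₀ : ℝ → ℝ}

lemma isSolutionC_of_hasDerivAt {β : ℝ → (ℝ →ᵇ ℝ) × (ℝ →ᵇ ℝ)}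
    (hβ : ∀ t ∈ Icc 0 T, HasDerivAt β (modelField h hp m μ β₀ DS DI (β t)) t)
    (hS : ContDiffOn ℝ 1 (fun q : ℝ × ℝ => (β q.2).1 q.1) (Icc 0 xmax ×ˢ Icc 0 T))
    (hI : ContDiffOn ℝ 1 (fun q : ℝ × ℝ => (β q.2).2 q.1) (Icc 0 xmax ×ˢ Icc 0 T))
    (hS₀ : ∀ x ∈ Icc 0 xmax, (β 0).1 x = S₀ x) (hI₀ : ∀ x ∈ Icc 0 xmax, (β 0).2 x = I₀ x) :
    IsSolutionC xmax m μ β₀ DS DI T p S₀ I₀ (fun x t => (β t).1 x) (fun x t => (β t).2 x) := by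
  refine ⟨hS, hI, fun x hx t ht => ?_, fun x hx t ht => ?_, hS₀, hI₀⟩
  · have hfst := (ContinuousLinearMap.fst ℝ (ℝ →ᵇ ℝ) (ℝ →ᵇ ℝ)).hasFDerivAt.comp_hasDerivAt t
      (hβ t ht)
    have hderiv : HasDerivAt (fun t => (β t).1 x) ((modelField h hp m μ β₀ DS DI (β t)).1 x) t :=
      hasDerivAt_apply hfst x
    rwa [modelField_fst_apply, projIcc_of_mem h hx] at hderiv
  · have hsnd := (ContinuousLinearMap.snd ℝ (ℝ →ᵇ ℝ) (ℝ →ᵇ ℝ)).hasFDerivAt.comp_hasDerivAt t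
      (hβ t ht)
    have hderiv : HasDerivAt (fun t => (β t).2 x) ((modelField h hp m μ β₀ DS DI (β t)).2 x) t :=
      hasDerivAt_apply hsnd x
    rwa [modelField_snd_apply, projIcc_of_mem h hx] at hderiv

include h hp in
theorem exists_isSolutionC (hS₀ : ContDiff ℝ 1 S₀) (hI₀ : ContDiff ℝ 1 I₀) :
    ∃ T > (0:ℝ), ∃ S I : ℝ → ℝ → ℝ, IsSolutionC xmax m μ β₀ DS DI T p S₀ I₀ S I := by
  have hG := contDiff_jetField h hp m μ β₀ DS DI
  obtain ⟨α, hα₀, ε, hε, hα⟩ :=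
    hG.contDiffAt.exists_forall_mem_closedBall_exists_eq_forall_mem_Ioo_hasDerivAt₀
      (x₀ := (toJet h S₀ hS₀, toJet h I₀ hI₀)) 0
  have hsub : Icc 0 (ε / 2) ⊆ Ioo (0 - ε) (0 + ε) := fun t ht =>
    ⟨by linarith [ht.1], by linarith [ht.2]⟩
  have hα_smooth : ContDiffOn ℝ 1 α (Ioo (0 - ε) (0 + ε)) :=
    contDiffOn_one_of_hasDerivAt isOpen_Ioo hα (hG.continuous.comp_continuousOn
      fun t ht => (hα t ht).continuousAt.continuousWithinAt)
  refine ⟨ε / 2, by positivity, _, _, isSolutionC_of_hasDerivAt h hp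
    (β := fun t => Prod.map (ofJet h) (ofJet h) (α t)) (fun t ht => ?_)
    (contDiffOn_ofJet_comp h ((contDiff_fst.comp_contDiffOn hα_smooth).mono hsub))
    (contDiffOn_ofJet_comp h ((contDiff_snd.comp_contDiffOn hα_smooth).mono hsub))
    (fun x hx => by simp [hα₀, ofJet_toJet h hS₀ hx])
    (fun x hx => by simp [hα₀, ofJet_toJet h hI₀ hx])⟩
  rw [← map_ofJet_jetField]
  exact ((ofJet h).prodMap (ofJet h)).hasFDerivAt.comp_hasDerivAt t (hα t (hsub ht))

end Existence

section Uniqueness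

variable {xmax : ℝ} (h : 0 ≤ xmax) {p : ℝ → ℝ} (hp : IntervalIntegrable p volume 0 xmax)
  {m μ β₀ DS DI T : ℝ} {S₀ I₀ : ℝ → ℝ} {S I : ℝ → ℝ → ℝ}

lemma average_sliceCurve (hT : 0 ≤ T)
    (hS : ContinuousOn (Function.uncurry S) (Icc 0 xmax ×ˢ Icc 0 T)) {t : ℝ} (ht : t ∈ Icc 0 T) :
    average h hp (sliceCurve h hT S hS t) = ∫ y in (0:ℝ)..xmax, S y t * p y := by
  refine intervalIntegral.integral_congr fun y hy => ?_
  rw [uIcc_of_le h] at hy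
  simp only [sliceCurve_apply_of_mem h hT hS ht hy]

lemma hasDerivWithinAt_profiles
    (hsol : IsSolutionC xmax m μ β₀ DS DI T p S₀ I₀ S I) (hT : 0 ≤ T) {t : ℝ} (ht : t ∈ Icc 0 T) :
    HasDerivWithinAt
      (fun t =>
        (sliceCurve h hT S hsol.1.continuousOn t, sliceCurve h hT I hsol.2.1.continuousOn t))
      (modelField h hp m μ β₀ DS DI
        (sliceCurve h hT S hsol.1.continuousOn t, sliceCurve h hT I hsol.2.1.continuousOn t))
      (Icc 0 T) t := by
  obtain ⟨hS, hI, hSt, hIt, -, -⟩ := hsol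
  replace hS := hS.continuousOn
  replace hI := hI.continuousOn
  have hs := ((average h hp).continuous.comp_continuousOn (continuousOn_sliceCurve h hT hS)).comp
    continuousOn_snd fun (q : ℝ × ℝ) (hq : q ∈ Icc 0 xmax ×ˢ Icc 0 T) => hq.2
  have hi := ((average h hp).continuous.comp_continuousOn (continuousOn_sliceCurve h hT hI)).comp
    continuousOn_snd fun (q : ℝ × ℝ) (hq : q ∈ Icc 0 xmax ×ˢ Icc 0 T) => hq.2
  set gS : ℝ → ℝ → ℝ := fun x t =>
    I x t * (μ - β₀ * S x t) - DS * (S x t - x / m * average h hp (sliceCurve h hT S hS t))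
  set gI : ℝ → ℝ → ℝ := fun x t =>
    I x t * (-μ + β₀ * S x t) - DI * (I x t - x / m * average h hp (sliceCurve h hT I hI t))
  have hgS : ContinuousOn (Function.uncurry gS) (Icc 0 xmax ×ˢ Icc 0 T) :=
    (hI.mul (continuousOn_const.sub (continuousOn_const.mul hS))).sub
      (continuousOn_const.mul (hS.sub ((continuousOn_fst.div_const m).mul hs)))
  have hgI : ContinuousOn (Function.uncurry gI) (Icc 0 xmax ×ˢ Icc 0 T) :=
    (hI.mul (continuousOn_const.add (continuousOn_const.mul hS))).sub
      (continuousOn_const.mul (hI.sub ((continuousOn_fst.div_const m).mul hi)))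
  have hSg (x) (hx : x ∈ Icc 0 xmax) (τ) (hτ : τ ∈ Icc 0 T) : HasDerivAt (S x) (gS x τ) τ := by
    simpa only [gS, average_sliceCurve h hp hT hS hτ] using hSt x hx τ hτ
  have hIg (x) (hx : x ∈ Icc 0 xmax) (τ) (hτ : τ ∈ Icc 0 T) : HasDerivAt (I x) (gI x τ) τ := by
    simpa only [gI, average_sliceCurve h hp hT hI hτ] using hIt x hx τ hτ
  refine ((hasDerivWithinAt_sliceCurve h hT hS hgS hSg ht).prodMk
    (hasDerivWithinAt_sliceCurve h hT hI hgI hIg ht)).congr_deriv ?_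
  ext x
  · simp [sliceCurve_apply, modelField_fst_apply, gS, projIcc_of_mem hT ht]
  · simp [sliceCurve_apply, modelField_snd_apply, gI, projIcc_of_mem hT ht]

include h hp in
theorem eq_of_isSolutionC {S' I' : ℝ → ℝ → ℝ}
    (hsol : IsSolutionC xmax m μ β₀ DS DI T p S₀ I₀ S I)
    (hsol' : IsSolutionC xmax m μ β₀ DS DI T p S₀ I₀ S' I') {x t : ℝ} (hx : x ∈ Icc 0 xmax)
    (ht : t ∈ Icc 0 T) : S' x t = S x t ∧ I' x t = I x t := by
  have hT : 0 ≤ T := ht.1.trans ht.2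
  set β := fun t =>
    (sliceCurve h hT S hsol.1.continuousOn t, sliceCurve h hT I hsol.2.1.continuousOn t)
  set β' := fun t =>
    (sliceCurve h hT S' hsol'.1.continuousOn t, sliceCurve h hT I' hsol'.2.1.continuousOn t)
  have hβ := fun t (ht : t ∈ Icc 0 T) => hasDerivWithinAt_profiles h hp hsol hT ht
  have hβ' := fun t (ht : t ∈ Icc 0 T) => hasDerivWithinAt_profiles h hp hsol' hT ht
  have hcont : ContinuousOn β (Icc 0 T) := fun t ht => (hβ t ht).continuousWithinAt
  have hcont' : ContinuousOn β' (Icc 0 T) := fun t ht => (hβ' t ht).continuousWithinAt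
  obtain ⟨R, hR⟩ := ((isCompact_Icc.image_of_continuousOn hcont).union
    (isCompact_Icc.image_of_continuousOn hcont')).isBounded.subset_closedBall 0
  obtain ⟨K, hK⟩ := exists_lipschitzOnWith_modelField h hp m μ β₀ DS DI R.toNNReal
  have hball : Metric.closedBall (0 : (ℝ →ᵇ ℝ) × (ℝ →ᵇ ℝ)) R ⊆ Metric.closedBall 0 R.toNNReal :=
    Metric.closedBall_subset_closedBall (Real.le_coe_toNNReal R)
  have hright (t) (ht : t ∈ Ico 0 T) : Icc 0 T ∈ 𝓝[≥] t :=
    mem_of_superset (Icc_mem_nhdsGE ht.2) (Icc_subset_Icc_left ht.1)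
  have h₀ : β' 0 = β 0 := by
    have h0T : (0:ℝ) ∈ Icc 0 T := ⟨le_rfl, hT⟩
    refine Prod.ext (ext fun y => ?_) (ext fun y => ?_) <;>
      simp only [β, β', sliceCurve_apply, projIcc_of_mem hT h0T]
    all_goals have hy := (projIcc 0 xmax h y).2
    · rw [hsol.2.2.2.2.1 _ hy, hsol'.2.2.2.2.1 _ hy]
    · rw [hsol.2.2.2.2.2 _ hy, hsol'.2.2.2.2.2 _ hy]
  have heq := ODE_solution_unique_of_mem_Icc_right (fun _ _ => hK) hcont'
    (fun t ht => (hβ' t (Ico_subset_Icc_self ht)).mono_of_mem_nhdsWithin (hright t ht))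
    (fun t ht => hball (hR (Or.inr (mem_image_of_mem _ (Ico_subset_Icc_self ht))))) hcont
    (fun t ht => (hβ t (Ico_subset_Icc_self ht)).mono_of_mem_nhdsWithin (hright t ht))
    (fun t ht => hball (hR (Or.inl (mem_image_of_mem _ (Ico_subset_Icc_self ht))))) h₀ ht
  have hS := congrArg (fun u => u.1 x) heq
  have hI := congrArg (fun u => u.2 x) heq
  simp only [β, β', sliceCurve_apply_of_mem h hT _ ht hx] at hS hI
  exact ⟨hS, hI⟩

end Uniqueness

end

end NonlocalSIR

theorem local_existence_uniqueness_general
    (xmax m μ β₀ DS DI : ℝ) (p : ℝ → ℝ)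
    (hxmax : 0 < xmax)
    (hp_int : ∫ x in (0:ℝ)..xmax, p x = 1)
    (S₀ I₀ : ℝ → ℝ)
    (hS₀ : ContDiff ℝ 1 S₀) (hI₀ : ContDiff ℝ 1 I₀) :
    ∃ T > (0:ℝ), ∃ S I : ℝ → ℝ → ℝ,
      IsSolutionC xmax m μ β₀ DS DI T p S₀ I₀ S I ∧
      ∀ S' I' : ℝ → ℝ → ℝ, IsSolutionC xmax m μ β₀ DS DI T p S₀ I₀ S' I' →
        ∀ x ∈ Icc (0:ℝ) xmax, ∀ t ∈ Icc (0:ℝ) T, S' x t = S x t ∧ I' x t = I x t := by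
  have hp := intervalIntegral.intervalIntegrable_of_integral_ne_zero (hp_int ▸ one_ne_zero)
  obtain ⟨T, hT, S, I, hsol⟩ := NonlocalSIR.exists_isSolutionC hxmax.le hp hS₀ hI₀
  exact ⟨T, hT, S, I, hsol, fun S' I' hsol' x hx t ht =>
    NonlocalSIR.eq_of_isSolutionC hxmax.le hp hsol hsol' hx ht⟩

/-- Local existence and uniqueness for system `(C)` for arbitrary diffusion
coefficients `D_I, D_S > 0`: there exists `T > 0` such that `(C)` admits a
solution on `J × [0,T]`, unique on `J × [0,T]`. -/
theorem local_existence_uniqueness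
    (xmax m μ β₀ DS DI : ℝ) (p : ℝ → ℝ)
    (hxmax : 0 < xmax) (hm : 0 < m) (hμ : 0 < μ) (hβ₀ : 0 < β₀)
    (hDS : 0 < DS) (hDI : 0 < DI)
    (hp_nonneg : ∀ x ∈ Icc (0:ℝ) xmax, 0 ≤ p x) (hp0 : p 0 = 0)
    (hp_int : ∫ x in (0:ℝ)..xmax, p x = 1)
    (hm_def : m = ∫ x in (0:ℝ)..xmax, x * p x)
    (S₀ I₀ : ℝ → ℝ)
    (hS₀ : ContDiff ℝ 1 S₀) (hI₀ : ContDiff ℝ 1 I₀)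
    (hS₀nonneg : ∀ x ∈ Icc (0:ℝ) xmax, 0 ≤ S₀ x)
    (hI₀nonneg : ∀ x ∈ Icc (0:ℝ) xmax, 0 ≤ I₀ x)
    (hS₀zero : S₀ 0 = 0) (hI₀zero : I₀ 0 = 0)
    (hs₀pos : 0 < ∫ x in (0:ℝ)..xmax, S₀ x * p x)
    (hi₀pos : 0 < ∫ x in (0:ℝ)..xmax, I₀ x * p x) :
    ∃ T > (0:ℝ), ∃ S I : ℝ → ℝ → ℝ,
      IsSolutionC xmax m μ β₀ DS DI T p S₀ I₀ S I ∧
      ∀ S' I' : ℝ → ℝ → ℝ, IsSolutionC xmax m μ β₀ DS DI T p S₀ I₀ S' I' →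
        ∀ x ∈ Icc (0:ℝ) xmax, ∀ t ∈ Icc (0:ℝ) T, S' x t = S x t ∧ I' x t = I x t :=
  local_existence_uniqueness_general xmax m μ β₀ DS DI p hxmax hp_int S₀ I₀ hS₀ hI₀
end
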